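/- arXiv:2111.03210 — 10 statements merged into one kernel-verified Lean document; each statement's English description precedes it below -/
import Mathlib

section
/- Let F = GF(q) be a finite field, let L be a positive integer, and let C be a linear [n,k] MDS code over F with k < n. Write n - k = (L+1)u + r where u is a nonnegative integer and r ∈ {1, 2, ..., L+1}, and suppose that L ≤ binom(k-1+u+r, k-1). If C is (τ,L)-list decodable for a nonnegative integer τ, then τ ≤ L(n-k)/(L+1). -/
set_option linter.unusedSectionVars false


/-- The minimum Hamming distance of a linear code `C`, i.e. the minimum
Hamming weight of a nonzero codeword of `C`. -/
noncomputable def minHammingDist {F : Type*} [Field F] [DecidableEq F]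
    {ι : Type*} [Fintype ι] (C : Submodule F (ι → F)) : ℕ :=
  sInf {w : ℕ | ∃ c ∈ C, c ≠ 0 ∧ hammingNorm c = w}

/-- A linear code of dimension `k` in `F^ι` is MDS if its minimum Hamming
distance equals `n - k + 1`, where `n = |ι|`. -/
noncomputable def IsMDSCode {F : Type*} [Field F] [DecidableEq F]
    {ι : Type*} [Fintype ι] (k : ℕ) (C : Submodule F (ι → F)) : Prop :=
  minHammingDist C = Fintype.card ι - k + 1

/-- A code `C ⊆ F^ι` is `(τ, L)`-list decodable if every Hamming ball of
radius `τ` contains at most `L` codewords. -/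
def ListDecodable {F : Type*} [Field F] [DecidableEq F]
    {ι : Type*} [Fintype ι] (C : Set (ι → F)) (τ L : ℕ) : Prop :=
  ∀ y : ι → F, ({c | c ∈ C ∧ hammingDist y c ≤ τ}).ncard ≤ L

section Aux

variable {F : Type*} [Field F] [Fintype F] [DecidableEq F] {n k : ℕ}

lemma aux_weight (C : Submodule F (Fin n → F)) (hMDS : IsMDSCode k C)
    {c : Fin n → F} (hc : c ∈ C) (hne : c ≠ 0) : n - k + 1 ≤ hammingNorm c := by
  have h : minHammingDist C ≤ hammingNorm c := Nat.sInf_le ⟨c, hc, hne, rfl⟩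
  rw [IsMDSCode, Fintype.card_fin] at hMDS
  omega

lemma aux_agree (C : Submodule F (Fin n → F)) (hMDS : IsMDSCode k C)
    {c c' : Fin n → F} (hc : c ∈ C) (hc' : c' ∈ C)
    {T : Finset (Fin n)} (hT : k ≤ T.card) (hag : ∀ j ∈ T, c j = c' j) : c = c' := by
  by_contra hne
  have h1 := aux_weight C hMDS (sub_mem hc hc') (sub_ne_zero.mpr hne)
  have hsub : (Finset.univ.filter fun j => (c - c') j ≠ 0) ⊆ Finset.univ \ T := by
    intro j hj
    simp only [Finset.mem_filter, Finset.mem_univ, true_and] at hj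
    simp only [Finset.mem_sdiff, Finset.mem_univ, true_and]
    intro hjT
    exact hj (by simp [Pi.sub_apply, sub_eq_zero, hag j hjT])
  have h2 : hammingNorm (c - c') ≤ n - T.card := by
    have := Finset.card_le_card hsub
    rwa [Finset.card_univ_diff, Fintype.card_fin] at this
  have hTn : T.card ≤ n := by
    simpa [Fintype.card_fin] using Finset.card_le_univ T
  omega

lemma aux_interp (C : Submodule F (Fin n → F)) (hk : Module.finrank F C = k)
    (hMDS : IsMDSCode k C) {T : Finset (Fin n)} (hT : T.card = k) (v : Fin n → F) :
    ∃ c ∈ C, ∀ j ∈ T, c j = v j := by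
  classical
  letI : Fintype C := Fintype.ofFinite _
  let φ : C → (↥T → F) := fun c j => (c : Fin n → F) j
  have hinj : Function.Injective φ := by
    intro a b hab
    apply Subtype.ext
    refine aux_agree C hMDS a.2 b.2 (T := T) (by omega) ?_
    intro j hj
    exact congrFun hab ⟨j, hj⟩
  have hcard : Fintype.card C = Fintype.card (↥T → F) := by
    rw [Module.card_eq_pow_finrank (K := F) (V := C), hk, Fintype.card_fun, Fintype.card_coe, hT]
  have hbij : Function.Bijective φ :=
    (Fintype.bijective_iff_injective_and_card φ).mpr ⟨hinj, hcard⟩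
  obtain ⟨c, hc⟩ := hbij.2 (fun j => v j)
  exact ⟨c, c.2, fun j hj => congrFun hc ⟨j, hj⟩⟩

/-- distance bound from an agreement set -/
lemma aux_dist (y c : Fin n → F) (A : Finset (Fin n)) (hA : ∀ j ∈ A, y j = c j) :
    hammingDist y c ≤ n - A.card := by
  have hsub : (Finset.univ.filter fun j => y j ≠ c j) ⊆ Finset.univ \ A := by
    intro j hj
    simp only [Finset.mem_filter, Finset.mem_univ, true_and] at hj
    simp only [Finset.mem_sdiff, Finset.mem_univ, true_and]
    exact fun hjA => hj (hA j hjA)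
  have := Finset.card_le_card hsub
  rwa [Finset.card_univ_diff, Fintype.card_fin] at this

end Aux

/-- Theorem `SingletonImproved`: let `C` be a linear `[n,k]`
MDS code with `k < n`; write `n - k = (L+1)u + r` with `r ∈ [1, L+1]` and
suppose `L ≤ C(k-1+u+r, k-1)`.  If `C` is `(τ,L)`-list decodable then
`τ ≤ L(n-k)/(L+1)`. -/
theorem stmt1 {F : Type*} [Field F] [Fintype F] [DecidableEq F]
    {n k L u r τ : ℕ} (C : Submodule F (Fin n → F))
    (hk : Module.finrank F C = k) (hkn : k < n)
    (hMDS : IsMDSCode k C)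
    (hL : 1 ≤ L)
    (hr1 : 1 ≤ r) (hr2 : r ≤ L + 1)
    (hur : n - k = (L + 1) * u + r)
    (hLbin : L ≤ (k - 1 + u + r).choose (k - 1))
    (hdec : ListDecodable (C : Set (Fin n → F)) τ L) :
    (τ : ℚ) ≤ ((L : ℚ) * ((n - k : ℕ) : ℚ)) / ((L : ℚ) + 1) := by
  classical
  by_contra hgoal
  push_neg at hgoal
  -- τ * (L+1) > L * (n-k) over ℕ
  have hpos : (0:ℚ) < (L:ℚ) + 1 := by positivity
  rw [div_lt_iff₀ hpos] at hgoal
  have hNat : L * (n - k) < τ * (L + 1) := by exact_mod_cast hgoal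
  have hexp : (L + 1) * u = L * u + u := by ring
  -- k ≥ 1
  have hk1 : 1 ≤ k := by
    by_contra hk0
    have hkz : k = 0 := by omega
    have hCbot : C = ⊥ := by
      rw [← Submodule.finrank_eq_zero (R := F) (M := Fin n → F) (S := C), hk, hkz]
    have hempty : {w : ℕ | ∃ c ∈ C, c ≠ 0 ∧ hammingNorm c = w} = ∅ := by
      ext w
      simp only [Set.mem_setOf_eq, Set.mem_empty_iff_false, iff_false, not_exists]
      rintro c ⟨hc, hne, _⟩
      rw [hCbot, Submodule.mem_bot] at hc
      exact hne hc
    rw [IsMDSCode, minHammingDist, hempty, Nat.sInf_empty, Fintype.card_fin] at hMDS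
    omega
  -- basic numerology
  have hkle : k ≤ n := hkn.le
  have hn : n = k + (L * u + u) + r := by omega
  -- τ ≥ L*u + r
  have hτ : L * u + r ≤ τ := by
    by_contra hcon
    push_neg at hcon
    have h2 : (τ + 1) * (L + 1) ≤ (L * u + r) * (L + 1) :=
      Nat.mul_le_mul_right (L + 1) (by omega)
    have h3 : L * (n - k) = L * ((L+1) * u) + L * r := by rw [hur]; ring
    nlinarith [h2, hNat, h3, hr2]
  set m0 := k - 1 + u + r with hm0
  have hnm : n = m0 + L * u + 1 := by omega
  -- the pinned coordinate
  have hplt : m0 + L * u < n := by omega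
  set p : Fin n := ⟨m0 + L * u, hplt⟩ with hp
  -- the window M
  set M : Finset (Fin n) :=
    (Finset.range m0).attachFin (fun m hm => by rw [Finset.mem_range] at hm; omega) with hM
  have hMcard : M.card = m0 := by
    rw [hM, Finset.card_attachFin, Finset.card_range]
  have hMmem : ∀ j : Fin n, j ∈ M ↔ (j : ℕ) < m0 := by
    intro j
    rw [hM, Finset.mem_attachFin, Finset.mem_range]
  -- choose L distinct (k-1)-subsets of M
  have hLle : L ≤ (M.powersetCard (k-1)).card := by
    rw [Finset.card_powersetCard, hMcard]
    exact hLbin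
  obtain ⟨e⟩ : Nonempty (Fin L ↪ ↥(M.powersetCard (k-1))) :=
    Function.Embedding.nonempty_of_card_le
      (by rw [Fintype.card_fin, Fintype.card_coe]; exact hLle)
  have hZ : ∀ i : Fin L, (e i : Finset (Fin n)) ⊆ M ∧ (e i : Finset (Fin n)).card = k - 1 := by
    intro i
    have := (e i).2
    rwa [Finset.mem_powersetCard] at this
  have hpM : p ∉ M := by
    rw [hMmem]
    simp only [hp]
    omega
  -- the codewords
  have hcw : ∀ i : Fin L, ∃ c ∈ C,
      c p = 1 ∧ ∀ z ∈ (e i : Finset (Fin n)), c z = 0 := by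
    intro i
    have hpZ : p ∉ (e i : Finset (Fin n)) := fun hmem => hpM ((hZ i).1 hmem)
    have hTcard : (insert p (e i : Finset (Fin n))).card = k := by
      rw [Finset.card_insert_of_notMem hpZ, (hZ i).2]
      omega
    obtain ⟨c, hcC, hcv⟩ := aux_interp C hk hMDS hTcard
      (fun j => if j = p then 1 else 0)
    refine ⟨c, hcC, ?_, ?_⟩
    · have := hcv p (Finset.mem_insert_self _ _)
      simpa using this
    · intro z hz
      have hzp : z ≠ p := fun h => hpZ (h ▸ hz)
      have := hcv z (Finset.mem_insert_of_mem hz)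
      simpa [hzp] using this
  choose cw hcwC hcwp hcwZ using hcw
  -- the center y
  have hblk : ∀ j : Fin n, ¬ (j : ℕ) < m0 → (j : ℕ) < m0 + L * u →
      ((j : ℕ) - m0) / u < L := by
    intro j h1 h2
    rcases Nat.eq_zero_or_pos u with h0 | h0
    · rw [h0, Nat.mul_zero] at h2; omega
    · exact Nat.div_lt_of_lt_mul (by rw [Nat.mul_comm]; omega)
  set y : Fin n → F := fun j =>
    if h1 : (j : ℕ) < m0 then 0
    else if h2 : (j : ℕ) < m0 + L * u then cw ⟨((j : ℕ) - m0) / u, hblk j h1 h2⟩ j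
    else 1
    with hy
  -- y at p is 1
  have hyp : y p = 1 := by
    rw [hy]
    simp only [hp]
    rw [dif_neg (by omega), dif_neg (by omega)]
  -- y on M is 0
  have hyM : ∀ j ∈ M, y j = 0 := by
    intro j hj
    rw [hMmem] at hj
    rw [hy]
    simp only
    rw [dif_pos hj]
  -- blocks
  have hUlt : ∀ (i : Fin L), ∀ x ∈ Finset.Ico (m0 + i.val * u) (m0 + (i.val + 1) * u), x < n := by
    intro i x hx
    rw [Finset.mem_Ico] at hx
    have : (i.val + 1) * u ≤ L * u := Nat.mul_le_mul_right u i.is_lt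
    omega
  set U : Fin L → Finset (Fin n) := fun i =>
    (Finset.Ico (m0 + i.val * u) (m0 + (i.val + 1) * u)).attachFin (hUlt i) with hU
  have hUcard : ∀ i, (U i).card = u := by
    intro i
    rw [hU]
    simp only
    rw [Finset.card_attachFin, Nat.card_Ico]
    have : (i.val + 1) * u = i.val * u + u := by ring
    omega
  have hUmem : ∀ (i : Fin L) (j : Fin n),
      j ∈ U i ↔ m0 + i.val * u ≤ (j : ℕ) ∧ (j : ℕ) < m0 + (i.val + 1) * u := by
    intro i j
    rw [hU]
    simp only
    rw [Finset.mem_attachFin, Finset.mem_Ico]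
  -- y on U i agrees with cw i
  have hyU : ∀ (i : Fin L), ∀ j ∈ U i, y j = cw i j := by
    intro i j hj
    rw [hUmem] at hj
    have hij : (i.val + 1) * u = i.val * u + u := by ring
    have h1 : ¬ (j : ℕ) < m0 := by omega
    have h2 : (j : ℕ) < m0 + L * u := by
      have : (i.val + 1) * u ≤ L * u := Nat.mul_le_mul_right u i.is_lt
      omega
    rw [hy]
    simp only
    rw [dif_neg h1, dif_pos h2]
    have hdiv : ((j : ℕ) - m0) / u = i.val := by
      apply Nat.div_eq_of_lt_le
      · omega
      · have : Nat.succ i.val * u = i.val * u + u := by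
          rw [Nat.succ_eq_add_one]; ring
        omega
    congr 1
    exact Fin.ext hdiv
  -- p is in no block and not in M-window pieces
  have hpU : ∀ i : Fin L, p ∉ U i := by
    intro i hmem
    rw [hUmem] at hmem
    have : (i.val + 1) * u ≤ L * u := Nat.mul_le_mul_right u i.is_lt
    simp only [hp] at hmem
    omega
  have hdisjZU : ∀ i : Fin L, Disjoint (e i : Finset (Fin n)) (U i) := by
    intro i
    rw [Finset.disjoint_left]
    intro a haZ haU
    have h1 : (a : ℕ) < m0 := (hMmem a).mp ((hZ i).1 haZ)
    rw [hUmem] at haU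
    omega
  -- agreement sets
  have hAcard : ∀ i : Fin L,
      (insert p ((e i : Finset (Fin n)) ∪ U i)).card = k + u := by
    intro i
    have hpnot : p ∉ (e i : Finset (Fin n)) ∪ U i := by
      rw [Finset.mem_union]
      rintro (h | h)
      · exact hpM ((hZ i).1 h)
      · exact hpU i h
    rw [Finset.card_insert_of_notMem hpnot,
      Finset.card_union_of_disjoint (hdisjZU i), (hZ i).2, hUcard]
    omega
  have hAagree : ∀ i : Fin L, ∀ j ∈ insert p ((e i : Finset (Fin n)) ∪ U i),
      y j = cw i j := by
    intro i j hj
    rcases Finset.mem_insert.mp hj with h | h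
    · rw [h, hyp, hcwp]
    · rcases Finset.mem_union.mp h with h' | h'
      · rw [hyM j ((hZ i).1 h'), hcwZ i j h']
      · exact hyU i j h'
  -- distance bounds
  have hdisti : ∀ i : Fin L, hammingDist y (cw i) ≤ τ := by
    intro i
    have := aux_dist y (cw i) _ (hAagree i)
    rw [hAcard i] at this
    omega
  have hdist0 : hammingDist y (0 : Fin n → F) ≤ τ := by
    have hag : ∀ j ∈ M, y j = (0 : Fin n → F) j := by
      intro j hj; rw [hyM j hj]; rfl
    have := aux_dist y 0 M hag
    rw [hMcard] at this
    omega
  -- distinctness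
  have hcw0 : ∀ i : Fin L, cw i ≠ 0 := by
    intro i h
    have h1 := hcwp i
    rw [h] at h1
    simp only [Pi.zero_apply] at h1
    exact zero_ne_one h1
  have hzeros : ∀ i : Fin L,
      (e i : Finset (Fin n)) = Finset.univ.filter (fun j => cw i j = 0) := by
    intro i
    apply Finset.eq_of_subset_of_card_le
    · intro z hz
      simp only [Finset.mem_filter, Finset.mem_univ, true_and]
      exact hcwZ i z hz
    · have hw := aux_weight C hMDS (hcwC i) (hcw0 i)
      have hsplit := Finset.card_filter_add_card_filter_not
        (s := (Finset.univ : Finset (Fin n))) (p := fun j => cw i j = 0)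
      have hnorm : hammingNorm (cw i)
          = (Finset.univ.filter (fun j => ¬ cw i j = 0)).card := by
        simp only [hammingNorm, ne_eq]
      rw [Finset.card_univ, Fintype.card_fin] at hsplit
      rw [(hZ i).2]
      omega
  have hcwinj : Function.Injective cw := by
    intro a b hab
    apply e.injective
    apply Subtype.ext
    rw [hzeros a, hzeros b, hab]
  -- the list
  set S : Finset (Fin n → F) := insert 0 (Finset.image cw Finset.univ) with hS
  have h0S : (0 : Fin n → F) ∉ Finset.image cw Finset.univ := by
    rw [Finset.mem_image]
    rintro ⟨i, -, h⟩
    exact hcw0 i h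
  have hScard : S.card = L + 1 := by
    rw [hS, Finset.card_insert_of_notMem h0S,
      Finset.card_image_of_injective _ hcwinj, Finset.card_univ, Fintype.card_fin]
  have hsubset : (S : Set (Fin n → F)) ⊆ {c | c ∈ (C : Set (Fin n → F)) ∧ hammingDist y c ≤ τ} := by
    intro c hc
    simp only [hS, Finset.coe_insert, Set.mem_insert_iff, Finset.coe_image,
      Set.mem_image, Finset.mem_coe, Finset.mem_univ] at hc
    rcases hc with h | ⟨i, -, h⟩
    · subst h
      exact ⟨C.zero_mem, hdist0⟩
    · subst h
      exact ⟨hcwC i, hdisti i⟩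
  have hfin : ({c | c ∈ (C : Set (Fin n → F)) ∧ hammingDist y c ≤ τ}).Finite :=
    Set.toFinite _
  have hfinal : L + 1 ≤ L := by
    calc L + 1 = S.card := hScard.symm
    _ = (S : Set (Fin n → F)).ncard := (Set.ncard_coe_finset S).symm
    _ ≤ ({c | c ∈ (C : Set (Fin n → F)) ∧ hammingDist y c ≤ τ}).ncard :=
        Set.ncard_le_ncard hsubset hfin
    _ ≤ L := hdec y
  omega
end

section
/- Let F = GF(q) be a finite field, let L be a positive integer, and let C be a linear [n,k] MDS code over F with k < n that is (τ,L)-list decodable for a nonnegative integer τ. Then τ ≤ L(n-k)/(L+1) in any one of the following cases: (a) k ≥ L; (b) k ≥ 2 and n ≥ (L+1)h + k, where h is the smallest nonnegative integer satisfying binom(k+h, k-1) ≥ L; (c) k ≥ 2 and n - k is congruent to 0, L-1, or L modulo L+1; (d) n - k - 1 ≤ L ≤ binom(n-1, k-1). -/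
open Finset

set_option linter.unusedSectionVars false
set_option maxHeartbeats 1600000

section Stmt2Aux
variable {F : Type*} [Field F] [Fintype F] [DecidableEq F] {n k L τ : ℕ}
variable {C : Submodule F (Fin n → F)}

/-- two codewords agreeing on ≥ k coordinates are equal -/
lemma uniq (hmin : ∀ c ∈ C, c ≠ 0 → n - k + 1 ≤ hammingNorm c)
    {c c' : Fin n → F} (hc : c ∈ C) (hc' : c' ∈ C)
    (S : Finset (Fin n)) (hS : k ≤ S.card) (hagree : ∀ j ∈ S, c j = c' j) : c = c' := by
  by_contra hne
  have hsub : c - c' ∈ C := sub_mem hc hc'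
  have h0 : c - c' ≠ 0 := sub_ne_zero.mpr hne
  have hlb := hmin _ hsub h0
  have hub : hammingNorm (c - c') ≤ n - S.card := by
    have hsubset : ({i | (c - c') i ≠ 0} : Finset (Fin n)) ⊆ Finset.univ \ S := by
      intro j hj
      rw [Finset.mem_filter] at hj
      simp only [Finset.mem_sdiff, Finset.mem_univ, true_and]
      intro hjS
      exact hj.2 (by show c j - c' j = 0; rw [sub_eq_zero]; exact hagree j hjS)
    have h2 := Finset.card_le_card hsubset
    rwa [Finset.card_sdiff_of_subset (Finset.subset_univ S), Finset.card_univ, Fintype.card_fin] at h2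
  have hSn : S.card ≤ n := by
    simpa using Finset.card_le_card (Finset.subset_univ S)
  omega

/-- MDS interpolation: prescribe values on any `k` coordinates -/
lemma exist (hmin : ∀ c ∈ C, c ≠ 0 → n - k + 1 ≤ hammingNorm c)
    (hk : Module.finrank F C = k)
    (S : Finset (Fin n)) (hS : S.card = k) (v : Fin n → F) :
    ∃ c, c ∈ C ∧ ∀ j ∈ S, c j = v j := by
  classical
  let Φ : C →ₗ[F] ({x // x ∈ S} → F) :=
    (LinearMap.funLeft F F (fun j : {x // x ∈ S} => (j : Fin n))).comp C.subtype
  have hinj : Function.Injective Φ := by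
    intro a b hab
    have : (a : Fin n → F) = b := by
      refine uniq hmin a.2 b.2 S (le_of_eq hS.symm) ?_
      intro j hj
      exact congrFun hab ⟨j, hj⟩
    exact Subtype.ext this
  have hrk : Module.finrank F C = Module.finrank F ({x // x ∈ S} → F) := by
    rw [hk, Module.finrank_pi, Fintype.card_coe, hS]
  have hsurj := (LinearMap.injective_iff_surjective_of_finrank_eq_finrank hrk).mp hinj
  obtain ⟨c, hc⟩ := hsurj (fun j => v j)
  refine ⟨(c : Fin n → F), c.2, fun j hj => ?_⟩
  exact congrFun hc ⟨j, hj⟩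


/-- allocation of a pairwise disjoint family of fresh sets -/
lemma alloc (m r : ℕ) (avoid : Finset (Fin n)) (h : avoid.card + m * r ≤ n) :
    ∃ P : Fin m → Finset (Fin n), (∀ i, (P i).card = r) ∧ (∀ i, Disjoint (P i) avoid) ∧
      ∀ i j, i ≠ j → Disjoint (P i) (P j) := by
  induction m generalizing avoid with
  | zero => exact ⟨fun i => i.elim0, fun i => i.elim0, fun i => i.elim0, fun i => i.elim0⟩
  | succ m ih =>
    have hr : r ≤ (Finset.univ \ avoid).card := by
      rw [Finset.card_sdiff_of_subset (Finset.subset_univ _), Finset.card_univ, Fintype.card_fin]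
      have : avoid.card ≤ n := by simpa using Finset.card_le_card (Finset.subset_univ avoid)
      have : m * r + r = (m+1) * r := by ring
      omega
    obtain ⟨P0, hP0sub, hP0card⟩ := Finset.exists_subset_card_eq hr
    have hcard2 : (avoid ∪ P0).card + m * r ≤ n := by
      have := Finset.card_union_le avoid P0
      have : (m+1) * r = m * r + r := by ring
      omega
    obtain ⟨P, hc, hd, hpd⟩ := ih (avoid ∪ P0) hcard2
    refine ⟨Fin.cons P0 P, ?_, ?_, ?_⟩
    · intro i
      refine Fin.cases ?_ ?_ i
      · simpa using hP0card
      · intro j; simpa using hc j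
    · intro i
      refine Fin.cases ?_ ?_ i
      · simp only [Fin.cons_zero]
        exact Finset.disjoint_left.mpr fun a ha hav =>
          (Finset.mem_sdiff.mp (hP0sub ha)).2 hav
      · intro j
        simp only [Fin.cons_succ]
        exact (hd j).mono_right (Finset.subset_union_left)
    · intro i j hij
      rcases Fin.eq_zero_or_eq_succ i with rfl | ⟨i', rfl⟩ <;>
        rcases Fin.eq_zero_or_eq_succ j with rfl | ⟨j', rfl⟩
      · exact absurd rfl hij
      · simp only [Fin.cons_zero, Fin.cons_succ]
        exact ((hd j').mono_right (Finset.subset_union_right)).symm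
      · simp only [Fin.cons_zero, Fin.cons_succ]
        exact (hd i').mono_right (Finset.subset_union_right)
      · simp only [Fin.cons_succ]
        exact hpd i' j' (by simpa [Fin.succ_inj] using hij)

/-- if agreement on a big set, hammingDist is small -/
lemma dist_le {y c : Fin n → F} (A : Finset (Fin n)) (hA : ∀ j ∈ A, y j = c j)
    (hcard : n - τ ≤ A.card) : hammingDist y c ≤ τ := by
  have hsubset : ({i | y i ≠ c i} : Finset (Fin n)) ⊆ Finset.univ \ A := by
    intro j hj
    rw [Finset.mem_filter] at hj
    simp only [Finset.mem_sdiff, Finset.mem_univ, true_and]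
    exact fun hjA => hj.2 (hA j hjA)
  have h2 := Finset.card_le_card hsubset
  rw [Finset.card_sdiff_of_subset (Finset.subset_univ A), Finset.card_univ, Fintype.card_fin] at h2
  have hAn : A.card ≤ n := by simpa using Finset.card_le_card (Finset.subset_univ A)
  have : hammingDist y c = ({i | y i ≠ c i} : Finset (Fin n)).card := rfl
  omega

/-- the final contradiction -/
lemma refute (hdec : ∀ y : Fin n → F, ({c | c ∈ (C : Set (Fin n → F)) ∧ hammingDist y c ≤ τ}).ncard ≤ L)
    (y : Fin n → F) (CW : Finset (Fin n → F))
    (h1 : ∀ c ∈ CW, c ∈ C) (h2 : ∀ c ∈ CW, hammingDist y c ≤ τ)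
    (h3 : L + 1 ≤ CW.card) : False := by
  have hsub : (CW : Set (Fin n → F)) ⊆ {c | c ∈ (C : Set (Fin n → F)) ∧ hammingDist y c ≤ τ} := by
    intro c hc
    exact ⟨h1 c (by exact_mod_cast hc), h2 c (by exact_mod_cast hc)⟩
  have := Set.ncard_le_ncard hsub (Set.toFinite _)
  rw [Set.ncard_coe_finset] at this
  have := hdec y
  omega


/-- the zero set of a nonzero codeword vanishing on `k-1` coordinates is exactly those -/
lemma zeros_eq (hmin : ∀ c ∈ C, c ≠ 0 → n - k + 1 ≤ hammingNorm c) (hkn : k < n)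
    {c : Fin n → F} (hc : c ∈ C) (h0 : c ≠ 0)
    (S : Finset (Fin n)) (hS : S.card + 1 = k) (hzero : ∀ j ∈ S, c j = 0) :
    ∀ j, c j = 0 ↔ j ∈ S := by
  classical
  set Z := ({i | c i = 0} : Finset (Fin n)) with hZ
  have hSZ : S ⊆ Z := by
    intro j hj
    simp only [hZ, Finset.mem_filter, Finset.mem_univ, true_and]
    exact hzero j hj
  have hsum : hammingNorm c + Z.card = n := by
    have h1 := Finset.card_filter_add_card_filter_not
      (s := (Finset.univ : Finset (Fin n))) (p := fun i => c i ≠ 0)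
    rw [Finset.card_univ, Fintype.card_fin] at h1
    have he : (Finset.univ.filter (fun i => ¬ c i ≠ 0)) = Z := by
      ext j; simp [hZ]
    rw [he] at h1
    have h2 : hammingNorm c = ({i | c i ≠ 0} : Finset (Fin n)).card := rfl
    omega
  have hlb := hmin c hc h0
  have hZS : Z.card ≤ S.card := by omega
  have : Z = S := (Finset.eq_of_subset_of_card_le hSZ hZS).symm
  intro j
  rw [← this]
  simp [hZ]

/-- a `q`-element family of codewords all vanishing on `B`, `|B| = k-1` -/
lemma family (hmin : ∀ c ∈ C, c ≠ 0 → n - k + 1 ≤ hammingNorm c)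
    (hk : Module.finrank F C = k) (hkn : k < n)
    (B : Finset (Fin n)) (hB : B.card + 1 = k) :
    ∃ (j0 : Fin n) (f : F → Fin n → F), j0 ∉ B ∧ Function.Injective f ∧
      ∀ t, f t ∈ C ∧ (∀ j ∈ B, f t j = 0) ∧ f t j0 = t := by
  classical
  have hBn : B.card < n := by omega
  have hne : (Finset.univ \ B).Nonempty := by
    rw [← Finset.card_pos, Finset.card_sdiff_of_subset (Finset.subset_univ _), Finset.card_univ,
      Fintype.card_fin]
    omega
  obtain ⟨j0, hj0⟩ := hne
  have hj0B : j0 ∉ B := (Finset.mem_sdiff.mp hj0).2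
  have hScard : (insert j0 B).card = k := by
    rw [Finset.card_insert_of_notMem hj0B]; omega
  choose c hcC hcagree using fun t =>
    exist hmin hk (insert j0 B) hScard (Function.update (0 : Fin n → F) j0 t)
  have hval : ∀ t, c t j0 = t := by
    intro t
    have := hcagree t j0 (Finset.mem_insert_self _ _)
    rwa [Function.update_self] at this
  refine ⟨j0, c, hj0B, ?_, ?_⟩
  · intro t t' h
    have := hval t
    rw [h, hval t'] at this
    exact this.symm
  · intro t
    refine ⟨hcC t, ?_, hval t⟩
    intro j hj
    have hjj0 : j ≠ j0 := fun h => hj0B (h ▸ hj)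
    have := hcagree t j (Finset.mem_insert_of_mem hj)
    rwa [Function.update_of_ne hjj0, Pi.zero_apply] at this

/-- choose a family member avoiding a small bad set -/
lemma exists_avoid (f : F → Fin n → F) (hf : Function.Injective f)
    (bad : Finset (Fin n → F)) (h : bad.card < Fintype.card F) : ∃ t, f t ∉ bad := by
  by_contra h'
  push_neg at h'
  have := Finset.card_le_card_of_injOn (s := Finset.univ) (t := bad) f
    (fun t _ => h' t) hf.injOn
  rw [Finset.card_univ] at this
  omega

/-- an MDS code with `2 ≤ k < n` needs a big field: `q ≥ n - k + 1` -/
lemma card_F_lb (hmin : ∀ c ∈ C, c ≠ 0 → n - k + 1 ≤ hammingNorm c)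
    (hk : Module.finrank F C = k) (hkn : k < n) (hk2 : 2 ≤ k) :
    n - k + 1 ≤ Fintype.card F := by
  classical
  obtain ⟨D, -, hDcard⟩ := Finset.exists_subset_card_eq
    (s := (Finset.univ : Finset (Fin n))) (n := k - 2) (by simp; omega)
  have hne : (Finset.univ \ D).Nonempty := by
    rw [← Finset.card_pos, Finset.card_sdiff_of_subset (Finset.subset_univ _), Finset.card_univ,
      Fintype.card_fin]
    omega
  obtain ⟨js, hjs⟩ := hne
  have hjsD : js ∉ D := (Finset.mem_sdiff.mp hjs).2
  set E := Finset.univ \ insert js D with hE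
  have hEcard : E.card = n - k + 1 := by
    rw [hE, Finset.card_sdiff_of_subset (Finset.subset_univ _), Finset.card_univ, Fintype.card_fin,
      Finset.card_insert_of_notMem hjsD, hDcard]
    omega
  have hmemE : ∀ e ∈ E, e ∉ D ∧ e ≠ js := by
    intro e he
    rw [hE, Finset.mem_sdiff, Finset.mem_insert] at he
    exact ⟨fun h => he.2 (Or.inr h), fun h => he.2 (Or.inl h)⟩
  have hScard : ∀ e ∈ E, (insert js (insert e D)).card = k := by
    intro e he
    obtain ⟨heD, hejs⟩ := hmemE e he
    rw [Finset.card_insert_of_notMem, Finset.card_insert_of_notMem heD, hDcard]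
    · omega
    · rw [Finset.mem_insert]
      push_neg
      exact ⟨fun h => hejs h.symm, hjsD⟩
  have hchoice : ∀ e ∈ E, ∃ c, c ∈ C ∧ ∀ j ∈ insert js (insert e D), c j =
      Function.update (0 : Fin n → F) js 1 j := by
    intro e he
    exact exist hmin hk _ (hScard e he) _
  choose! c hcC hcagree using hchoice
  have hcjs : ∀ e ∈ E, c e js = 1 := by
    intro e he
    have := hcagree e he js (Finset.mem_insert_self _ _)
    rwa [Function.update_self] at this
  have hcD : ∀ e ∈ E, ∀ j ∈ D, c e j = 0 := by
    intro e he j hj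
    have hjjs : j ≠ js := fun h => hjsD (h ▸ hj)
    have := hcagree e he j (Finset.mem_insert_of_mem (Finset.mem_insert_of_mem hj))
    rwa [Function.update_of_ne hjjs, Pi.zero_apply] at this
  have hce : ∀ e ∈ E, c e e = 0 := by
    intro e he
    obtain ⟨-, hejs⟩ := hmemE e he
    have := hcagree e he e (Finset.mem_insert_of_mem (Finset.mem_insert_self _ _))
    rwa [Function.update_of_ne hejs, Pi.zero_apply] at this
  -- now the injection E → F via value at a fixed w ∈ E
  have hEne : E.Nonempty := by rw [← Finset.card_pos, hEcard]; omega
  obtain ⟨w, hw⟩ := hEne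
  have hinj : Set.InjOn (fun e => c e w) E := by
    intro e he e' he' heq
    by_contra hne
    have hee' : c e ≠ c e' := by
      intro hcc
      -- c e vanishes on insert e (insert e' D), which has card k
      have hcard : (insert e (insert e' D)).card = k := by
        rw [Finset.card_insert_of_notMem, Finset.card_insert_of_notMem (hmemE e' he').1,
          hDcard]
        · omega
        · rw [Finset.mem_insert]
          push_neg
          exact ⟨hne, (hmemE e he).1⟩
      have hzero : ∀ j ∈ insert e (insert e' D), c e j = (0 : Fin n → F) j := by
        intro j hj
        rw [Finset.mem_insert, Finset.mem_insert] at hj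
        rcases hj with h | h | hj
        · rw [h]; simpa using hce e he
        · rw [h, hcc]; simpa using hce e' he'
        · simpa using hcD e he j hj
      have := uniq hmin (hcC e he) (Submodule.zero_mem C) _ (le_of_eq hcard.symm) hzero
      have h1 := hcjs e he
      rw [this] at h1
      simp at h1
    -- difference vanishes exactly on insert js D, and w is outside
    set d := c e - c e' with hd
    have hdC : d ∈ C := sub_mem (hcC e he) (hcC e' he')
    have hd0 : d ≠ 0 := sub_ne_zero.mpr hee'
    have hdcard : (insert js D).card + 1 = k := by
      rw [Finset.card_insert_of_notMem hjsD, hDcard]; omega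
    have hdzero : ∀ j ∈ insert js D, d j = 0 := by
      intro j hj
      rw [Finset.mem_insert] at hj
      rcases hj with rfl | hj
      · simp [hd, hcjs e he, hcjs e' he']
      · simp [hd, hcD e he j hj, hcD e' he' j hj]
    have hzeq := zeros_eq hmin hkn hdC hd0 _ hdcard hdzero
    have hwmem : w ∉ insert js D := by
      rw [hE, Finset.mem_sdiff] at hw
      exact hw.2
    have : d w ≠ 0 := fun h => hwmem ((hzeq w).mp h)
    apply this
    simp [hd, heq]
  have := Finset.card_le_card_of_injOn (s := E) (t := Finset.univ) (fun e => c e w)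
    (fun e _ => Finset.mem_univ _) hinj
  rw [Finset.card_univ] at this
  omega


lemma choose_unique {m : ℕ} (P : Fin m → Finset (Fin n))
    (hpd : ∀ i j, i ≠ j → Disjoint (P i) (P j))
    {j : Fin n} {i : Fin m} (hj : j ∈ P i) (h : ∃ i', j ∈ P i') : h.choose = i := by
  by_contra hne
  exact Finset.disjoint_left.mp (hpd _ i hne) h.choose_spec hj

/-- The "window" construction. -/
lemma window_con (hmin : ∀ c ∈ C, c ≠ 0 → n - k + 1 ≤ hammingNorm c)
    (hk : Module.finrank F C = k) (hkn : k < n)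
    (hdec : ∀ y : Fin n → F, ({c | c ∈ (C : Set (Fin n → F)) ∧ hammingDist y c ≤ τ}).ncard ≤ L)
    (h a : ℕ) (hk1 : 1 ≤ k) (hak : k ≤ a)
    (hLch : L ≤ (k + h).choose (k - 1))
    (hbudget : (k + h) + 1 + L * (a - k) ≤ n)
    (hA0 : 1 + L * (a - k) ≤ τ)
    (hdist : n - τ ≤ a) : False := by
  classical
  -- the window W
  obtain ⟨W, -, hWcard⟩ := Finset.exists_subset_card_eq
    (s := (Finset.univ : Finset (Fin n))) (n := k + h)
    (by rw [Finset.card_univ, Fintype.card_fin]; omega)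
  -- the special coordinate z
  have hzne : (Finset.univ \ W).Nonempty := by
    rw [← Finset.card_pos, Finset.card_sdiff_of_subset (Finset.subset_univ _), Finset.card_univ,
      Fintype.card_fin, hWcard]
    omega
  obtain ⟨z, hz⟩ := hzne
  have hzW : z ∉ W := (Finset.mem_sdiff.mp hz).2
  -- private sets
  have hzWcard : (insert z W).card = k + h + 1 := by
    rw [Finset.card_insert_of_notMem hzW, hWcard]
  obtain ⟨P, hPcard, hPavoid, hPdisj⟩ := alloc L (a - k) (insert z W)
    (by rw [hzWcard]; omega)
  have hPz : ∀ i, z ∉ P i := fun i hzi =>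
    Finset.disjoint_left.mp (hPavoid i) hzi (Finset.mem_insert_self _ _)
  have hPW : ∀ i, ∀ j ∈ P i, j ∉ W := fun i j hj hjW =>
    Finset.disjoint_left.mp (hPavoid i) hj (Finset.mem_insert_of_mem hjW)
  -- the subsets S i of the window
  have hcardS : Fintype.card (Fin L) ≤ (Finset.powersetCard (k - 1) W).card := by
    rw [Fintype.card_fin, Finset.card_powersetCard, hWcard]
    exact hLch
  obtain ⟨Semb, hSemb⟩ := Function.Embedding.exists_of_card_le_finset hcardS
  set S : Fin L → Finset (Fin n) := fun i => Semb i with hSdef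
  have hSmem : ∀ i, S i ⊆ W ∧ (S i).card = k - 1 := by
    intro i
    have : Semb i ∈ Finset.powersetCard (k - 1) W := hSemb ⟨i, rfl⟩
    exact Finset.mem_powersetCard.mp this
  have hzS : ∀ i, z ∉ S i := fun i hzi => hzW ((hSmem i).1 hzi)
  have hSins : ∀ i, (insert z (S i)).card = k := by
    intro i
    rw [Finset.card_insert_of_notMem (hzS i), (hSmem i).2]
    omega
  -- the codewords
  choose c hcC hcagree using fun i =>
    exist hmin hk (insert z (S i)) (hSins i) (Function.update (0 : Fin n → F) z 1)
  have hcz : ∀ i, c i z = 1 := by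
    intro i
    have := hcagree i z (Finset.mem_insert_self _ _)
    rwa [Function.update_self] at this
  have hcS : ∀ i, ∀ j ∈ S i, c i j = 0 := by
    intro i j hj
    have hjz : j ≠ z := fun hh => hzS i (hh ▸ hj)
    have := hcagree i j (Finset.mem_insert_of_mem hj)
    rwa [Function.update_of_ne hjz, Pi.zero_apply] at this
  have hc0 : ∀ i, c i ≠ 0 := by
    intro i hh
    have := hcz i
    rw [hh] at this
    simp at this
  have hzeros : ∀ i, ∀ j, c i j = 0 ↔ j ∈ S i := by
    intro i
    exact zeros_eq hmin hkn (hcC i) (hc0 i) (S i) (by rw [(hSmem i).2]; omega) (hcS i)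
  have hcinj : Function.Injective c := by
    intro i i' hcc
    have hSS : S i = S i' := by
      ext j
      rw [← hzeros i j, ← hzeros i' j, hcc]
    exact Semb.injective hSS
  -- the center
  set y : Fin n → F := fun j =>
    if j = z then 1 else if hj : ∃ i, j ∈ P i then c hj.choose j else 0 with hy
  -- distances
  have hyz : y z = 1 := by rw [hy]; simp
  have hyP : ∀ i, ∀ j ∈ P i, y j = c i j := by
    intro i j hj
    have hjz : j ≠ z := fun hh => hPz i (hh ▸ hj)
    have hex : ∃ i', j ∈ P i' := ⟨i, hj⟩
    rw [hy]
    simp only [hjz, if_false, dif_pos hex]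
    rw [choose_unique P hPdisj hj hex]
  have hy0 : ∀ j, j ≠ z → (¬ ∃ i, j ∈ P i) → y j = 0 := by
    intro j hjz hjP
    rw [hy]
    simp only [hjz, if_false, dif_neg hjP]
  have hdistc : ∀ i, hammingDist y (c i) ≤ τ := by
    intro i
    apply dist_le (τ := τ) (insert z (S i ∪ P i))
    · intro j hj
      rw [Finset.mem_insert, Finset.mem_union] at hj
      rcases hj with rfl | hj | hj
      · rw [hyz, hcz]
      · have hjz : j ≠ z := fun hh => hzS i (hh ▸ hj)
        have hjP : ¬ ∃ i', j ∈ P i' := by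
          rintro ⟨i', hji'⟩
          exact hPW i' j hji' ((hSmem i).1 hj)
        rw [hy0 j hjz hjP, hcS i j hj]
      · exact hyP i j hj
    · have hdisjSP : Disjoint (S i) (P i) := by
        rw [Finset.disjoint_left]
        intro j hj hjP
        exact hPW i j hjP ((hSmem i).1 hj)
      have hzSP : z ∉ S i ∪ P i := by
        rw [Finset.mem_union]
        rintro (hh | hh)
        exacts [hzS i hh, hPz i hh]
      rw [Finset.card_insert_of_notMem hzSP, Finset.card_union_of_disjoint hdisjSP,
        (hSmem i).2, hPcard i]
      omega
  have hdist0 : hammingDist y (0 : Fin n → F) ≤ τ := by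
    set BU := Finset.univ.biUnion P with hBU
    apply dist_le (τ := τ) (Finset.univ \ insert z BU)
    · intro j hj
      rw [Finset.mem_sdiff, Finset.mem_insert] at hj
      push_neg at hj
      obtain ⟨-, hjz, hjBU⟩ := hj
      have : ¬ ∃ i, j ∈ P i := by
        rintro ⟨i, hji⟩
        exact hjBU (Finset.mem_biUnion.mpr ⟨i, Finset.mem_univ i, hji⟩)
      rw [hy0 j hjz this]
      simp
    · have hBUcard : BU.card = L * (a - k) := by
        rw [hBU, Finset.card_biUnion (fun i _ j _ hij => hPdisj i j hij)]
        simp [hPcard, Finset.sum_const, Finset.card_univ, Nat.mul_comm]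
      have hzBU : z ∉ BU := by
        rw [hBU, Finset.mem_biUnion]
        rintro ⟨i, -, hzi⟩
        exact hPz i hzi
      rw [Finset.card_sdiff_of_subset (Finset.subset_univ _), Finset.card_univ, Fintype.card_fin,
        Finset.card_insert_of_notMem hzBU, hBUcard]
      omega
  -- the codeword list
  set CW : Finset (Fin n → F) := insert 0 (Finset.univ.image c) with hCW
  have hC1 : ∀ x ∈ CW, x ∈ C := by
    intro x hx
    rw [hCW, Finset.mem_insert] at hx
    rcases hx with rfl | hx
    · exact Submodule.zero_mem C
    · obtain ⟨i, -, rfl⟩ := Finset.mem_image.mp hx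
      exact hcC i
  have hC2 : ∀ x ∈ CW, hammingDist y x ≤ τ := by
    intro x hx
    rw [hCW, Finset.mem_insert] at hx
    rcases hx with rfl | hx
    · exact hdist0
    · obtain ⟨i, -, rfl⟩ := Finset.mem_image.mp hx
      exact hdistc i
  have hC3 : L + 1 ≤ CW.card := by
    rw [hCW, Finset.card_insert_of_notMem, Finset.card_image_of_injective _ hcinj,
      Finset.card_univ, Fintype.card_fin]
    rw [Finset.mem_image]
    rintro ⟨i, -, hi⟩
    exact hc0 i hi
  exact refute hdec y CW hC1 hC2 hC3


/-- The sunflower construction. -/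
lemma sunflower_con (hmin : ∀ c ∈ C, c ≠ 0 → n - k + 1 ≤ hammingNorm c)
    (hk : Module.finrank F C = k) (hkn : k < n)
    (hdec : ∀ y : Fin n → F, ({c | c ∈ (C : Set (Fin n → F)) ∧ hammingDist y c ≤ τ}).ncard ≤ L)
    (a : ℕ) (hk1 : 1 ≤ k) (hka : k ≤ a)
    (hq : L + 1 ≤ Fintype.card F)
    (hbudget : (k - 1) + (L + 1) * (a - k + 1) ≤ n)
    (hdist : n - τ ≤ a) : False := by
  classical
  obtain ⟨B, -, hBcard⟩ := Finset.exists_subset_card_eq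
    (s := (Finset.univ : Finset (Fin n))) (n := k - 1)
    (by rw [Finset.card_univ, Fintype.card_fin]; omega)
  obtain ⟨P, hPcard, hPavoid, hPdisj⟩ := alloc (L + 1) (a - k + 1) B (by omega)
  obtain ⟨j0, f, hj0B, hfinj, hf⟩ := family hmin hk hkn B (by omega)
  obtain ⟨emb⟩ : Nonempty (Fin (L + 1) ↪ F) :=
    Function.Embedding.nonempty_of_card_le (by simpa using hq)
  set p : Fin (L + 1) → Fin n → F := fun i => f (emb i) with hp
  have hpinj : Function.Injective p := fun i i' hii =>
    emb.injective (hfinj hii)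
  have hpC : ∀ i, p i ∈ C := fun i => (hf (emb i)).1
  have hpB : ∀ i, ∀ j ∈ B, p i j = 0 := fun i => (hf (emb i)).2.1
  set y : Fin n → F := fun j =>
    if j ∈ B then 0 else if hj : ∃ i, j ∈ P i then p hj.choose j else 0 with hy
  have hdistp : ∀ i, hammingDist y (p i) ≤ τ := by
    intro i
    apply dist_le (τ := τ) (B ∪ P i)
    · intro j hj
      rw [Finset.mem_union] at hj
      rcases hj with hj | hj
      · rw [hy]
        simp only [hj, if_true]
        exact (hpB i j hj).symm
      · have hjB : j ∉ B := fun hh => Finset.disjoint_left.mp (hPavoid i) hj hh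
        have hex : ∃ i', j ∈ P i' := ⟨i, hj⟩
        rw [hy]
        simp only [hjB, if_false, dif_pos hex]
        rw [choose_unique P hPdisj hj hex]
    · rw [Finset.card_union_of_disjoint (Finset.disjoint_left.mpr
        (fun j hj hjP => Finset.disjoint_left.mp (hPavoid i) hjP hj)), hBcard, hPcard i]
      omega
  have hC3 : L + 1 ≤ (Finset.univ.image p).card := by
    rw [Finset.card_image_of_injective _ hpinj, Finset.card_univ, Fintype.card_fin]
  refine refute hdec y (Finset.univ.image p) ?_ ?_ hC3
  · intro x hx
    obtain ⟨i, -, rfl⟩ := Finset.mem_image.mp hx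
    exact hpC i
  · intro x hx
    obtain ⟨i, -, rfl⟩ := Finset.mem_image.mp hx
    exact hdistp i

/-- The flower-with-cap construction. -/
lemma flowercap_con (hmin : ∀ c ∈ C, c ≠ 0 → n - k + 1 ≤ hammingNorm c)
    (hk : Module.finrank F C = k) (hkn : k < n)
    (hdec : ∀ y : Fin n → F, ({c | c ∈ (C : Set (Fin n → F)) ∧ hammingDist y c ≤ τ}).ncard ≤ L)
    (a : ℕ) (hk2 : 2 ≤ k) (hka : k ≤ a) (hL2 : 2 ≤ L)
    (hq : L + 1 ≤ Fintype.card F)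
    (hbudget : (k - 1) + 2 + 3 * (a - k) + (L - 2) * (a - k + 1) ≤ n)
    (hdist : n - τ ≤ a) : False := by
  classical
  obtain ⟨L2, rfl⟩ : ∃ L2, L = L2 + 2 := ⟨L - 2, by omega⟩
  rw [Nat.add_sub_cancel] at hbudget
  -- core B
  obtain ⟨B, -, hBcard⟩ := Finset.exists_subset_card_eq
    (s := (Finset.univ : Finset (Fin n))) (n := k - 1)
    (by rw [Finset.card_univ, Fintype.card_fin]; omega)
  -- fresh coordinates w ≠ w'
  obtain ⟨WW, hWWsub, hWWcard⟩ := Finset.exists_subset_card_eq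
    (s := Finset.univ \ B) (n := 2)
    (by
      rw [Finset.card_sdiff_of_subset (Finset.subset_univ _), Finset.card_univ, Fintype.card_fin, hBcard]
      omega)
  obtain ⟨w, w', hww', hWW⟩ := Finset.card_eq_two.mp hWWcard
  have hwB : w ∉ B := by
    have : w ∈ Finset.univ \ B := hWWsub (by rw [hWW]; simp)
    exact (Finset.mem_sdiff.mp this).2
  have hw'B : w' ∉ B := by
    have : w' ∈ Finset.univ \ B := hWWsub (by rw [hWW]; simp)
    exact (Finset.mem_sdiff.mp this).2
  -- private sets
  set avoid2 : Finset (Fin n) := insert w (insert w' B) with havoid2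
  have havoid2card : avoid2.card = k + 1 := by
    rw [havoid2, Finset.card_insert_of_notMem, Finset.card_insert_of_notMem hw'B, hBcard]
    · omega
    · rw [Finset.mem_insert]
      push_neg
      exact ⟨hww', hwB⟩
  obtain ⟨P3, hP3card, hP3avoid, hP3disj⟩ := alloc 3 (a - k) avoid2 (by omega)
  set avoid3 : Finset (Fin n) := avoid2 ∪ P3 0 ∪ P3 1 ∪ P3 2 with havoid3
  have havoid3card : avoid3.card ≤ k + 1 + 3 * (a - k) := by
    calc avoid3.card ≤ (avoid2 ∪ P3 0 ∪ P3 1).card + (P3 2).card := Finset.card_union_le _ _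
      _ ≤ (avoid2 ∪ P3 0).card + (P3 1).card + (P3 2).card := by
          have := Finset.card_union_le (avoid2 ∪ P3 0) (P3 1)
          omega
      _ ≤ avoid2.card + (P3 0).card + (P3 1).card + (P3 2).card := by
          have := Finset.card_union_le avoid2 (P3 0)
          omega
      _ ≤ k + 1 + 3 * (a - k) := by
          rw [havoid2card, hP3card, hP3card, hP3card]
          omega
  obtain ⟨Q, hQcard, hQavoid, hQdisj⟩ := alloc L2 (a - k + 1) avoid3 (by omega)
  -- the petals
  obtain ⟨j0, f, hj0B, hfinj, hf⟩ := family hmin hk hkn B (by omega)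
  obtain ⟨emb⟩ : Nonempty (Fin (L2 + 2) ↪ F) :=
    Function.Embedding.nonempty_of_card_le (by simp; omega)
  set p : Fin (L2 + 2) → Fin n → F := fun i => f (emb i) with hp
  have hpinj : Function.Injective p := fun i i' hii => emb.injective (hfinj hii)
  have hpC : ∀ i, p i ∈ C := fun i => (hf (emb i)).1
  have hpB : ∀ i, ∀ j ∈ B, p i j = 0 := fun i => (hf (emb i)).2.1
  -- the cap
  obtain ⟨B', hB'sub, hB'card⟩ := Finset.exists_subset_card_eq (s := B) (n := k - 2)
    (by omega)
  have hwB' : w ∉ B' := fun hh => hwB (hB'sub hh)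
  have hw'B' : w' ∉ B' := fun hh => hw'B (hB'sub hh)
  have hS0card : (insert w (insert w' B')).card = k := by
    rw [Finset.card_insert_of_notMem, Finset.card_insert_of_notMem hw'B', hB'card]
    · omega
    · rw [Finset.mem_insert]
      push_neg
      exact ⟨hww', hwB'⟩
  obtain ⟨c0, hc0C, hc0agree⟩ := exist hmin hk (insert w (insert w' B')) hS0card
    (fun j => if j = w then p 0 w else if j = w' then p 1 w' else 0)
  have hc0w : c0 w = p 0 w := by
    have h := hc0agree w (Finset.mem_insert_self _ _)
    simpa using h
  have hc0w' : c0 w' = p 1 w' := by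
    have h := hc0agree w' (Finset.mem_insert_of_mem (Finset.mem_insert_self _ _))
    simpa [Ne.symm hww'] using h
  have hc0B' : ∀ j ∈ B', c0 j = 0 := by
    intro j hj
    have hjw : j ≠ w := fun hh => hwB' (hh ▸ hj)
    have hjw' : j ≠ w' := fun hh => hw'B' (hh ▸ hj)
    have h := hc0agree j (Finset.mem_insert_of_mem (Finset.mem_insert_of_mem hj))
    simpa [hjw, hjw'] using h
  -- distinctness of the cap
  have hc0p : ∀ i, c0 ≠ p i := by
    intro i hcc
    by_cases hi0 : i = 0
    · subst hi0
      have hagree : ∀ j ∈ insert w' B, p 0 j = p 1 j := by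
        intro j hj
        rw [Finset.mem_insert] at hj
        rcases hj with rfl | hj
        · rw [← hcc, hc0w']
        · rw [hpB 0 j hj, hpB 1 j hj]
      have := uniq hmin (hpC 0) (hpC 1) (insert w' B)
        (by rw [Finset.card_insert_of_notMem hw'B, hBcard]; omega) hagree
      exact absurd (hpinj this) (by simp [Fin.ext_iff])
    · have hagree : ∀ j ∈ insert w B, p i j = p 0 j := by
        intro j hj
        rw [Finset.mem_insert] at hj
        rcases hj with rfl | hj
        · rw [← hcc, hc0w]
        · rw [hpB i j hj, hpB 0 j hj]
      have := uniq hmin (hpC i) (hpC 0) (insert w B)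
        (by rw [Finset.card_insert_of_notMem hwB, hBcard]; omega) hagree
      exact hi0 (hpinj this)
  -- the center
  set y : Fin n → F := fun j =>
    if j ∈ B then 0
    else if j = w then p 0 w
    else if j = w' then p 1 w'
    else if j ∈ P3 0 then c0 j
    else if j ∈ P3 1 then p 0 j
    else if j ∈ P3 2 then p 1 j
    else if hj : ∃ i, j ∈ Q i then p ⟨hj.choose.val + 2, by have := hj.choose.isLt; omega⟩ j
    else 0 with hy
  -- helper facts for y on the various regions
  have hyB : ∀ j ∈ B, y j = 0 := by
    intro j hj
    simp [hy, hj]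
  have hyw : y w = p 0 w := by
    simp [hy, hwB]
  have hyw' : y w' = p 1 w' := by
    simp [hy, hw'B, Ne.symm hww']
  have hmemP3 : ∀ (t : Fin 3), ∀ j ∈ P3 t, j ∉ B ∧ j ≠ w ∧ j ≠ w' := by
    intro t j hj
    have h1 : j ∉ avoid2 := fun hh => Finset.disjoint_left.mp (hP3avoid t) hj hh
    rw [havoid2, Finset.mem_insert, Finset.mem_insert] at h1
    push_neg at h1
    exact ⟨h1.2.2, h1.1, h1.2.1⟩
  have hyP30 : ∀ j ∈ P3 0, y j = c0 j := by
    intro j hj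
    obtain ⟨h1, h2, h3⟩ := hmemP3 0 j hj
    simp [hy, h1, h2, h3, hj]
  have hyP31 : ∀ j ∈ P3 1, y j = p 0 j := by
    intro j hj
    obtain ⟨h1, h2, h3⟩ := hmemP3 1 j hj
    have hj0 : j ∉ P3 0 := fun hh => Finset.disjoint_left.mp (hP3disj 1 0 (by decide)) hj hh
    simp [hy, h1, h2, h3, hj0, hj]
  have hyP32 : ∀ j ∈ P3 2, y j = p 1 j := by
    intro j hj
    obtain ⟨h1, h2, h3⟩ := hmemP3 2 j hj
    have hj0 : j ∉ P3 0 := fun hh => Finset.disjoint_left.mp (hP3disj 2 0 (by decide)) hj hh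
    have hj1 : j ∉ P3 1 := fun hh => Finset.disjoint_left.mp (hP3disj 2 1 (by decide)) hj hh
    simp [hy, h1, h2, h3, hj0, hj1, hj]
  have hyQ : ∀ (t : Fin L2), ∀ j ∈ Q t,
      y j = p ⟨t.val + 2, by have := t.isLt; omega⟩ j := by
    intro t j hj
    have h1 : j ∉ avoid3 := fun hh => Finset.disjoint_left.mp (hQavoid t) hj hh
    rw [havoid3] at h1
    simp only [Finset.mem_union, not_or] at h1
    obtain ⟨⟨⟨ha2, hp0⟩, hp1⟩, hp2⟩ := h1
    rw [havoid2, Finset.mem_insert, Finset.mem_insert] at ha2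
    push_neg at ha2
    have hex : ∃ i, j ∈ Q i := ⟨t, hj⟩
    have hch : hex.choose = t := choose_unique Q hQdisj hj hex
    simp only [hy, ha2.2.2, if_false, ha2.1, ha2.2.1, hp0, hp1, hp2, dif_pos hex]
    congr 1
    exact Fin.ext (by show hex.choose.val + 2 = t.val + 2; rw [hch])
  -- distances
  have hdcap : hammingDist y c0 ≤ τ := by
    apply dist_le (τ := τ) (insert w (insert w' (B' ∪ P3 0)))
    · intro j hj
      rw [Finset.mem_insert, Finset.mem_insert, Finset.mem_union] at hj
      rcases hj with rfl | rfl | hj | hj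
      · rw [hyw, hc0w]
      · rw [hyw', hc0w']
      · rw [hyB j (hB'sub hj), hc0B' j hj]
      · exact hyP30 j hj
    · have hd1 : Disjoint B' (P3 0) := Finset.disjoint_left.mpr
        (fun j hj hjP => (hmemP3 0 j hjP).1 (hB'sub hj))
      have hw'mem : w' ∉ B' ∪ P3 0 := by
        rw [Finset.mem_union]
        rintro (hh | hh)
        exacts [hw'B' hh, (hmemP3 0 w' hh).2.2 rfl]
      have hwmem : w ∉ insert w' (B' ∪ P3 0) := by
        rw [Finset.mem_insert, Finset.mem_union]
        rintro (hh | hh | hh)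
        exacts [hww' hh, hwB' hh, (hmemP3 0 w hh).2.1 rfl]
      rw [Finset.card_insert_of_notMem hwmem, Finset.card_insert_of_notMem hw'mem,
        Finset.card_union_of_disjoint hd1, hB'card, hP3card]
      omega
  have hdp : ∀ i, hammingDist y (p i) ≤ τ := by
    intro i
    by_cases hi0 : i = 0
    · subst hi0
      apply dist_le (τ := τ) (insert w (B ∪ P3 1))
      · intro j hj
        rw [Finset.mem_insert, Finset.mem_union] at hj
        rcases hj with rfl | hj | hj
        · exact hyw
        · rw [hyB j hj, hpB 0 j hj]
        · exact hyP31 j hj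
      · have hd1 : Disjoint B (P3 1) := Finset.disjoint_left.mpr
          (fun j hj hjP => (hmemP3 1 j hjP).1 hj)
        have hwmem : w ∉ B ∪ P3 1 := by
          rw [Finset.mem_union]
          rintro (hh | hh)
          exacts [hwB hh, (hmemP3 1 w hh).2.1 rfl]
        rw [Finset.card_insert_of_notMem hwmem, Finset.card_union_of_disjoint hd1,
          hBcard, hP3card]
        omega
    · by_cases hi1 : i = 1
      · subst hi1
        apply dist_le (τ := τ) (insert w' (B ∪ P3 2))
        · intro j hj
          rw [Finset.mem_insert, Finset.mem_union] at hj
          rcases hj with rfl | hj | hj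
          · exact hyw'
          · rw [hyB j hj, hpB 1 j hj]
          · exact hyP32 j hj
        · have hd1 : Disjoint B (P3 2) := Finset.disjoint_left.mpr
            (fun j hj hjP => (hmemP3 2 j hjP).1 hj)
          have hw'mem : w' ∉ B ∪ P3 2 := by
            rw [Finset.mem_union]
            rintro (hh | hh)
            exacts [hw'B hh, (hmemP3 2 w' hh).2.2 rfl]
          rw [Finset.card_insert_of_notMem hw'mem, Finset.card_union_of_disjoint hd1,
            hBcard, hP3card]
          omega
      · -- i ≥ 2
        have hiL : i.val < L2 + 2 := i.isLt
        have hival : 2 ≤ i.val := by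
          have hv0' : i.val ≠ 0 := fun hh => hi0 (Fin.ext (by rw [hh, Fin.val_zero]))
          have hv1' : i.val ≠ 1 := fun hh => hi1 (Fin.ext (by rw [hh, Fin.val_one]))
          omega
        have htlt : i.val - 2 < L2 := by omega
        apply dist_le (τ := τ) (B ∪ Q ⟨i.val - 2, htlt⟩)
        · intro j hj
          rw [Finset.mem_union] at hj
          rcases hj with hj | hj
          · rw [hyB j hj, hpB i j hj]
          · calc y j = p ⟨(⟨i.val - 2, htlt⟩ : Fin L2).val + 2, by omega⟩ j :=
                hyQ ⟨i.val - 2, htlt⟩ j hj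
              _ = p i j := by
                congr 1
                exact Fin.ext (show i.val - 2 + 2 = i.val by omega)
        · have hd1 : Disjoint B (Q ⟨i.val - 2, htlt⟩) := by
            refine Finset.disjoint_left.mpr (fun j hj hjQ => ?_)
            have : j ∉ avoid3 := fun hh =>
              Finset.disjoint_left.mp (hQavoid ⟨i.val - 2, htlt⟩) hjQ hh
            rw [havoid3] at this
            simp only [Finset.mem_union, not_or] at this
            have h2 := this.1.1.1
            rw [havoid2] at h2
            exact h2 (Finset.mem_insert_of_mem (Finset.mem_insert_of_mem hj))
          rw [Finset.card_union_of_disjoint hd1, hBcard, hQcard]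
          omega
  -- assemble
  set CW : Finset (Fin n → F) := insert c0 (Finset.univ.image p) with hCW
  have hC3 : L2 + 2 + 1 ≤ CW.card := by
    rw [hCW, Finset.card_insert_of_notMem, Finset.card_image_of_injective _ hpinj,
      Finset.card_univ, Fintype.card_fin]
    rw [Finset.mem_image]
    rintro ⟨i, -, hi⟩
    exact hc0p i hi.symm
  refine refute hdec y CW ?_ ?_ hC3
  · intro x hx
    rw [hCW, Finset.mem_insert] at hx
    rcases hx with rfl | hx
    · exact hc0C
    · obtain ⟨i, -, rfl⟩ := Finset.mem_image.mp hx
      exact hpC i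
  · intro x hx
    rw [hCW, Finset.mem_insert] at hx
    rcases hx with rfl | hx
    · exact hdcap
    · obtain ⟨i, -, rfl⟩ := Finset.mem_image.mp hx
      exact hdp i



/-- wrapper: sunflower with arithmetic in terms of `τ'` -/
lemma sunflower_case (hmin : ∀ c ∈ C, c ≠ 0 → n - k + 1 ≤ hammingNorm c)
    (hk : Module.finrank F C = k) (hkn : k < n)
    (hdec : ∀ y : Fin n → F, ({c | c ∈ (C : Set (Fin n → F)) ∧ hammingDist y c ≤ τ}).ncard ≤ L)
    (hk1 : 1 ≤ k) (hq : L + 1 ≤ Fintype.card F) (τ' : ℕ)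
    (hτ'le : τ' ≤ τ) (hτ'nk : τ' + 1 ≤ n - k)
    (hsL : L * (n - k) + L ≤ (L + 1) * τ') : False := by
  apply sunflower_con hmin hk hkn hdec (n - τ') hk1 (by omega) hq ?_ (by omega)
  have hesum : n - k = τ' + (n - k - τ') := by omega
  have hLsplit : L * (n - k) = L * τ' + L * (n - k - τ') := by
    conv_lhs => rw [hesum]
    rw [Nat.mul_add]
  have hLp1 : (L + 1) * τ' = L * τ' + τ' := by rw [Nat.succ_mul]
  have h1 : n - τ' - k + 1 = (n - k - τ') + 1 := by omega
  rw [h1]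
  have h2 : (L + 1) * ((n - k - τ') + 1) = (L + 1) * (n - k - τ') + (L + 1) := by
    rw [Nat.mul_add, Nat.mul_one]
  have h3 : (L + 1) * (n - k - τ') = L * (n - k - τ') + (n - k - τ') := by rw [Nat.succ_mul]
  omega

/-- wrapper: window with arithmetic in terms of `τ'` -/
lemma window_case (hmin : ∀ c ∈ C, c ≠ 0 → n - k + 1 ≤ hammingNorm c)
    (hk : Module.finrank F C = k) (hkn : k < n)
    (hdec : ∀ y : Fin n → F, ({c | c ∈ (C : Set (Fin n → F)) ∧ hammingDist y c ≤ τ}).ncard ≤ L)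
    (h : ℕ) (hk1 : 1 ≤ k) (τ' : ℕ)
    (hτ'le : τ' ≤ τ) (hτ'nk : τ' + 1 ≤ n - k)
    (hLch : L ≤ (k + h).choose (k - 1))
    (hA0key : 1 + L * (n - k - τ') ≤ τ')
    (hhe : h ≤ n - k - τ') : False := by
  have h1 : n - τ' - k = n - k - τ' := by omega
  apply window_con hmin hk hkn hdec h (n - τ') hk1 (by omega) hLch ?_ ?_ (by omega)
  · rw [h1]; omega
  · rw [h1]; omega

/-- wrapper: flower-with-cap with arithmetic in terms of `τ'` -/
lemma flowercap_case (hmin : ∀ c ∈ C, c ≠ 0 → n - k + 1 ≤ hammingNorm c)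
    (hk : Module.finrank F C = k) (hkn : k < n)
    (hdec : ∀ y : Fin n → F, ({c | c ∈ (C : Set (Fin n → F)) ∧ hammingDist y c ≤ τ}).ncard ≤ L)
    (hk2 : 2 ≤ k) (hL2 : 2 ≤ L) (hq : L + 1 ≤ Fintype.card F) (τ' : ℕ)
    (hτ'le : τ' ≤ τ) (hτ'nk : τ' + 1 ≤ n - k)
    (hsLm : L * (n - k) + L ≤ (L + 1) * τ' + 1) : False := by
  apply flowercap_con hmin hk hkn hdec (n - τ') hk2 (by omega) hL2 hq ?_ (by omega)
  have hesum : n - k = τ' + (n - k - τ') := by omega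
  have hLsplit : L * (n - k) = L * τ' + L * (n - k - τ') := by
    conv_lhs => rw [hesum]
    rw [Nat.mul_add]
  have hLp1 : (L + 1) * τ' = L * τ' + τ' := by rw [Nat.succ_mul]
  have h1 : n - τ' - k = n - k - τ' := by omega
  rw [h1]
  have h2 : (L - 2) * ((n - k - τ') + 1) = (L - 2) * (n - k - τ') + (L - 2) := by
    rw [Nat.mul_add, Nat.mul_one]
  have h3 : L * (n - k - τ') = (L - 2) * (n - k - τ') + 2 * (n - k - τ') := by
    rw [← Nat.add_mul]
    congr 1
    omega
  omega

end Stmt2Aux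

/-- Corollary `SingletonImproved`: a linear `[n,k]` MDS code
with `k < n` that is `(τ,L)`-list decodable satisfies `τ ≤ L(n-k)/(L+1)` in any
of the cases: (a) `k ≥ L`; (b) `k ≥ 2` and `n ≥ (L+1)h + k` where `h` is the
smallest nonnegative integer with `C(k+h, k-1) ≥ L`; (c) `k ≥ 2` and
`n - k ≡ 0, L-1, or L (mod L+1)`; (d) `n-k-1 ≤ L ≤ C(n-1, k-1)`. -/
theorem stmt2 {F : Type*} [Field F] [Fintype F] [DecidableEq F]
    {n k L τ : ℕ} (C : Submodule F (Fin n → F))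
    (hk : Module.finrank F C = k) (hkn : k < n)
    (hMDS : IsMDSCode k C)
    (hL : 1 ≤ L)
    (hdec : ListDecodable (C : Set (Fin n → F)) τ L)
    (hcase :
      (L ≤ k) ∨
      (2 ≤ k ∧ ∃ h : ℕ, L ≤ (k + h).choose (k - 1) ∧
        (∀ h' < h, (k + h').choose (k - 1) < L) ∧ (L + 1) * h + k ≤ n) ∨
      (2 ≤ k ∧ ((n - k) % (L + 1) = 0 ∨ (n - k) % (L + 1) = L - 1 ∨
        (n - k) % (L + 1) = L)) ∨
      (n - k - 1 ≤ L ∧ L ≤ (n - 1).choose (k - 1))) :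
    (τ : ℚ) ≤ ((L : ℚ) * ((n - k : ℕ) : ℚ)) / ((L : ℚ) + 1) := by
  classical
  by_contra hcon
  push_neg at hcon
  rw [div_lt_iff₀ (by positivity : (0:ℚ) < (L:ℚ) + 1)] at hcon
  have hτℕ : L * (n - k) + 1 ≤ (L + 1) * τ := by
    have h1 : (L * (n - k) : ℕ) < τ * (L + 1) := by exact_mod_cast hcon
    have h2 : τ * (L + 1) = (L + 1) * τ := Nat.mul_comm _ _
    omega
  have hdec' : ∀ y : Fin n → F,
      ({c | c ∈ (C : Set (Fin n → F)) ∧ hammingDist y c ≤ τ}).ncard ≤ L := hdec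
  have hMDSn : minHammingDist C = n - k + 1 := by
    have h := hMDS
    rwa [IsMDSCode, Fintype.card_fin] at h
  have hk1 : 1 ≤ k := by
    by_contra hh
    push_neg at hh
    have hk0 : k = 0 := by omega
    have hC : C = ⊥ := by
      apply Submodule.finrank_eq_zero.mp
      rw [hk, hk0]
    have hempty : {w : ℕ | ∃ c ∈ C, c ≠ 0 ∧ hammingNorm c = w} = ∅ := by
      ext w
      simp only [Set.mem_setOf_eq, Set.mem_empty_iff_false, iff_false, not_exists]
      rintro c ⟨hc, hc0, -⟩
      rw [hC, Submodule.mem_bot] at hc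
      exact hc0 hc
    rw [minHammingDist, hempty, Nat.sInf_empty] at hMDSn
    omega
  have hmin : ∀ c ∈ C, c ≠ 0 → n - k + 1 ≤ hammingNorm c := by
    intro c hc h0
    have h := Nat.sInf_le (s := {w : ℕ | ∃ c ∈ C, c ≠ 0 ∧ hammingNorm c = w}) ⟨c, hc, h0, rfl⟩
    have h2 : minHammingDist C = sInf {w : ℕ | ∃ c ∈ C, c ≠ 0 ∧ hammingNorm c = w} := rfl
    omega
  have hτ1 : 1 ≤ τ := by
    rcases Nat.eq_zero_or_pos τ with h | h
    · rw [h, Nat.mul_zero] at hτℕ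
      omega
    · exact h
  have hkchoose : k.choose (k - 1) = k := by
    have h1 := Nat.choose_symm (n := k) (k := k - 1) (by omega)
    rw [Nat.sub_sub_self (by omega : 1 ≤ k), Nat.choose_one_right] at h1
    omega
  by_cases hτnk : n - k ≤ τ
  · -- large radius: window with h := n - 1 - k, a := k
    have hLD : L ≤ (n - 1).choose (k - 1) := by
      rcases hcase with ha | ⟨hk2, h, hLh, -, hnh⟩ | ⟨hk2, hres⟩ | ⟨-, hd2⟩
      · calc L ≤ k := ha
          _ = k.choose (k - 1) := hkchoose.symm
          _ ≤ (n - 1).choose (k - 1) := Nat.choose_le_choose _ (by omega)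
      · refine le_trans hLh (Nat.choose_le_choose _ ?_)
        rcases Nat.eq_zero_or_pos h with rfl | hh
        · omega
        · have hLh1 : 1 * 1 ≤ L * h := Nat.mul_le_mul hL hh
          have h2 : (L + 1) * h = L * h + h := by rw [Nat.succ_mul]
          omega
      · have hLnk : L ≤ n - k + 1 := by
          by_contra hh
          push_neg at hh
          have hr : (n - k) % (L + 1) = n - k := Nat.mod_eq_of_lt (by omega)
          omega
        refine le_trans hLnk ?_
        have h1 : (k - 1) + (n - k) = n - 1 := by omega
        have h2 : (n - 1).choose (k - 1) = ((k - 1) + (n - k)).choose (n - k) := by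
          rw [← h1]
          exact Nat.choose_symm_add
        have h3 : ((n - k) + 1).choose (n - k) = n - k + 1 := by
          rw [Nat.choose_symm_add, Nat.choose_one_right]
        have h6 : ((n - k) + 1).choose (n - k) ≤ ((k - 1) + (n - k)).choose (n - k) :=
          Nat.choose_le_choose _ (by omega)
        omega
      · exact hd2
    refine window_con hmin hk hkn hdec' (n - 1 - k) k hk1 le_rfl ?_ ?_ ?_ (by omega)
    · have he : k + (n - 1 - k) = n - 1 := by omega
      rw [he]
      exact hLD
    · rw [Nat.sub_self, Nat.mul_zero]
      omega
    · rw [Nat.sub_self, Nat.mul_zero]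
      omega
  · -- small radius
    push_neg at hτnk
    set τ' := L * (n - k) / (L + 1) + 1 with hτ'def
    have hdm := Nat.div_add_mod (L * (n - k)) (L + 1)
    have hmlt : L * (n - k) % (L + 1) < L + 1 := Nat.mod_lt _ (by omega)
    have hτ'mul : (L + 1) * τ' = (L + 1) * (L * (n - k) / (L + 1)) + (L + 1) := by
      rw [hτ'def, Nat.mul_add, Nat.mul_one]
    have hτ'le : τ' ≤ τ := by
      have h1 : (L + 1) * (L * (n - k) / (L + 1)) < (L + 1) * τ := by omega
      have h2 := Nat.lt_of_mul_lt_mul_left h1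
      omega
    have hs1 : L * (n - k) + 1 ≤ (L + 1) * τ' := by omega
    have hmL : L + 2 ≤ n - k := by
      have h1 : τ ≤ n - k - 1 := by omega
      have h2 := Nat.mul_le_mul_left (L + 1) h1
      have h3 : (L + 1) * (n - k) = (L + 1) * (n - k - 1) + (L + 1) := by
        have hx : n - k = (n - k - 1) + 1 := by omega
        conv_lhs => rw [hx]
        rw [Nat.mul_add, Nat.mul_one]
      have h4 : (L + 1) * (n - k) = L * (n - k) + (n - k) := by rw [Nat.succ_mul]
      omega
    have hτ'nk : τ' + 1 ≤ n - k := by omega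
    have hesum : n - k = τ' + (n - k - τ') := by omega
    have hLsplit : L * (n - k) = L * τ' + L * (n - k - τ') := by
      conv_lhs => rw [hesum]
      rw [Nat.mul_add]
    have hLp1 : (L + 1) * τ' = L * τ' + τ' := by rw [Nat.succ_mul]
    have hA0key : 1 + L * (n - k - τ') ≤ τ' := by omega
    rcases hcase with ha | ⟨hk2, h, hLh, -, hnh⟩ | ⟨hk2, hres⟩ | ⟨hd1, -⟩
    · -- case (a): window with h = 0
      refine window_case hmin hk hkn hdec' 0 hk1 τ' hτ'le hτ'nk ?_ hA0key (by omega)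
      rw [Nat.add_zero, hkchoose]
      exact ha
    · -- case (b)
      have hq : L + 1 ≤ Fintype.card F := by
        have := card_F_lb hmin hk hkn hk2
        omega
      by_cases hm1 : (L + 1) * h + 1 ≤ n - k
      · -- window with this h
        refine window_case hmin hk hkn hdec' h hk1 τ' hτ'le hτ'nk hLh hA0key ?_
        -- h ≤ n - k - τ'
        have hsucc : (L + 1) * h = L * h + h := by rw [Nat.succ_mul]
        have hhnk : h ≤ n - k := by omega
        have hDsum : n - k = (n - k - h) + h := by omega
        have hsplit1 : (L + 1) * (n - k) = (L + 1) * (n - k - h) + (L + 1) * h := by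
          conv_lhs => rw [hDsum]
          rw [Nat.mul_add]
        have hsplit2 : (L + 1) * (n - k) = L * (n - k) + (n - k) := by rw [Nat.succ_mul]
        have hlt : (L + 1) * τ' < (L + 1) * ((n - k - h) + 1) := by
          have hx : (L + 1) * ((n - k - h) + 1) = (L + 1) * (n - k - h) + (L + 1) := by
            rw [Nat.mul_add, Nat.mul_one]
          omega
        have hτ'D := Nat.lt_of_mul_lt_mul_left hlt
        omega
      · -- n - k = (L+1) * h : sunflower
        have hsucc : (L + 1) * h = L * h + h := by rw [Nat.succ_mul]
        have hnk_eq : n - k = (L + 1) * h := by omega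
        have hQ : L * (n - k) = (L + 1) * (L * h) := by
          rw [hnk_eq]
          ring
        have hQdiv : L * (n - k) / (L + 1) = L * h := by
          rw [hQ]
          exact Nat.mul_div_cancel_left _ (by omega)
        have hτ'val : τ' = L * h + 1 := by rw [hτ'def, hQdiv]
        have hsL : L * (n - k) + L ≤ (L + 1) * τ' := by
          have hx : (L + 1) * (L * h + 1) = (L + 1) * (L * h) + (L + 1) := by
            rw [Nat.mul_add, Nat.mul_one]
          rw [hτ'val, hQ]
          omega
        exact sunflower_case hmin hk hkn hdec' hk1 hq τ' hτ'le hτ'nk hsL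
    · -- case (c)
      have hq : L + 1 ≤ Fintype.card F := by
        have := card_F_lb hmin hk hkn hk2
        omega
      by_cases hL1 : L = 1
      · refine sunflower_case hmin hk hkn hdec' hk1 hq τ' hτ'le hτ'nk ?_
        rw [hL1] at hs1 ⊢
        omega
      · have hL2 : 2 ≤ L := by omega
        have hmodL : L % (L + 1) = L := Nat.mod_eq_of_lt (by omega)
        rcases hres with hr | hr | hr
        · -- residue 0
          have hR : L * (n - k) % (L + 1) = 0 := by
            rw [Nat.mul_mod, hr, Nat.mul_zero, Nat.zero_mod]
          exact sunflower_case hmin hk hkn hdec' hk1 hq τ' hτ'le hτ'nk (by omega)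
        · -- residue L - 1 : flower with cap
          have hR : L * (n - k) % (L + 1) = 2 := by
            rw [Nat.mul_mod, hr, hmodL]
            obtain ⟨L2, rfl⟩ : ∃ L2, L = L2 + 2 := ⟨L - 2, by omega⟩
            have hx : (L2 + 2) * (L2 + 2 - 1) = (L2 + 2 + 1) * L2 + 2 := by
              have hy : L2 + 2 - 1 = L2 + 1 := by omega
              rw [hy]
              ring
            rw [hx, Nat.mul_add_mod]
            exact Nat.mod_eq_of_lt (by omega)
          exact flowercap_case hmin hk hkn hdec' hk2 hL2 hq τ' hτ'le hτ'nk (by omega)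
        · -- residue L
          have hR : L * (n - k) % (L + 1) = 1 := by
            rw [Nat.mul_mod, hr, hmodL]
            have hx : L * L = (L + 1) * (L - 1) + 1 := by
              obtain ⟨L1, rfl⟩ : ∃ L1, L = L1 + 1 := ⟨L - 1, by omega⟩
              have hy : L1 + 1 - 1 = L1 := by omega
              rw [hy]
              ring
            rw [hx, Nat.mul_add_mod]
            exact Nat.mod_eq_of_lt (by omega)
          exact sunflower_case hmin hk hkn hdec' hk1 hq τ' hτ'le hτ'nk (by omega)
    · -- case (d): impossible here
      omega
end

section
/- Let F = GF(q) be a finite field, let C be a linear [n,k] MDS code over F with k < n, and let L be a positive integer with L < binom(n,k). If q ≥ binom(n, k+1), then C is not (n-k, L)-list decodable. -/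
open Finset

/-! Auxiliary lemmas -/

private lemma aux_dist_le {F : Type*} [DecidableEq F] {n : ℕ} (S : Finset (Fin n))
    (y c : Fin n → F) (h : ∀ i ∈ S, y i = c i) : hammingDist y c ≤ n - S.card := by
  classical
  have hsub : ({i | y i ≠ c i} : Finset (Fin n)) ⊆ Sᶜ := by
    intro i hi
    simp only [mem_filter, mem_univ, true_and] at hi
    exact mem_compl.2 fun hiS => hi (h i hiS)
  calc hammingDist y c ≤ Sᶜ.card := card_le_card hsub
    _ = n - S.card := by rw [card_compl, Fintype.card_fin]

private lemma aux_card {F : Type*} [Field F] [Fintype F] [DecidableEq F] {n k : ℕ}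
    (C : Submodule F (Fin n → F)) (hk : Module.finrank F C = k) :
    Nat.card C = Fintype.card F ^ k := by
  classical
  letI : Fintype C := Fintype.ofFinite C
  rw [Nat.card_eq_fintype_card (α := C), Module.card_eq_pow_finrank (K := F) (V := C), hk]

/-- Two codewords of an MDS code agreeing on at least `k` coordinates are equal. -/
private lemma aux_eq_of_agree {F : Type*} [Field F] [Fintype F] [DecidableEq F] {n k : ℕ}
    (C : Submodule F (Fin n → F)) (hkn : k < n) (hMDS : IsMDSCode k C)
    (S : Finset (Fin n)) (hS : k ≤ S.card)
    {c c' : Fin n → F} (hc : c ∈ C) (hc' : c' ∈ C) (h : ∀ i ∈ S, c i = c' i) : c = c' := by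
  by_contra hne
  have hmem : c - c' ∈ C := sub_mem hc hc'
  have hne0 : c - c' ≠ 0 := sub_ne_zero.2 hne
  have hlow : n - k + 1 ≤ hammingNorm (c - c') := by
    have h1 : minHammingDist C ≤ hammingNorm (c - c') :=
      Nat.sInf_le ⟨c - c', hmem, hne0, rfl⟩
    have h2 : minHammingDist C = n - k + 1 := by
      have := hMDS
      rwa [IsMDSCode, Fintype.card_fin] at this
    omega
  have hup : hammingNorm (c - c') ≤ n - k := by
    rw [sub_eq_neg_add, ← hammingDist_eq_hammingNorm, hammingDist_comm]
    calc hammingDist c c' ≤ n - S.card := aux_dist_le S c c' h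
      _ ≤ n - k := Nat.sub_le_sub_left hS n
  omega

/-- For any `k`-set `S` and target `v`, some codeword of the MDS code agrees with `v` on `S`. -/
private lemma aux_surj {F : Type*} [Field F] [Fintype F] [DecidableEq F] {n k : ℕ}
    (C : Submodule F (Fin n → F)) (hk : Module.finrank F C = k) (hkn : k < n)
    (hMDS : IsMDSCode k C) (S : Finset (Fin n)) (hS : S.card = k)
    (v : Fin n → F) : ∃ c ∈ C, ∀ i ∈ S, c i = v i := by
  classical
  letI : Fintype C := Fintype.ofFinite C
  let φ : C → (S → F) := fun c => fun i => (c : Fin n → F) i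
  have hφinj : Function.Injective φ := by
    intro c c' hcc
    ext j
    have heq : (c : Fin n → F) = (c' : Fin n → F) :=
      aux_eq_of_agree C hkn hMDS S hS.ge c.2 c'.2 (fun i hi => by
        simpa [φ] using congrFun hcc ⟨i, hi⟩)
    exact congrFun heq j
  have hcard : Fintype.card C = Fintype.card (S → F) := by
    rw [← Nat.card_eq_fintype_card (α := C), aux_card C hk]
    simp [Fintype.card_coe, hS]
  have hsurj : Function.Surjective φ :=
    ((Fintype.bijective_iff_injective_and_card φ).2 ⟨hφinj, hcard⟩).2
  obtain ⟨c, hc⟩ := hsurj (fun i => v i)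
  exact ⟨c, c.2, fun i hi => by simpa [φ] using congrFun hc ⟨i, hi⟩⟩

private lemma aux_bad_card {F : Type*} [Field F] [Fintype F] [DecidableEq F] {n k : ℕ}
    (C : Submodule F (Fin n → F)) (hcard : Nat.card C = Fintype.card F ^ k)
    (T : Finset (Fin n)) (hT : T.card = k + 1) (hkn : k < n)
    (Bad : Finset (Fin n → F)) (hBad : ∀ y, y ∈ Bad ↔ ∃ c ∈ C, ∀ i ∈ T, y i = c i) :
    Bad.card ≤ Fintype.card F ^ (n - 1) := by
  classical
  letI : Fintype C := Fintype.ofFinite C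
  set q := Fintype.card F
  let A : Finset (T → F) := Finset.image (fun c : C => fun i : T => (c : Fin n → F) i) univ
  have hA : A.card ≤ q ^ k := by
    calc A.card ≤ (univ : Finset C).card := card_image_le
      _ = q ^ k := by rw [card_univ, ← Nat.card_eq_fintype_card, hcard]
  have hinj : Set.InjOn (fun y : Fin n → F =>
      ((fun i : T => y i, fun i : (Tᶜ : Finset (Fin n)) => y i) :
        (T → F) × ((Tᶜ : Finset (Fin n)) → F))) Bad := by
    intro y _ y' _ h
    simp only [Prod.mk.injEq] at h
    ext i
    by_cases hi : i ∈ T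
    · exact congrFun h.1 ⟨i, hi⟩
    · exact congrFun h.2 ⟨i, mem_compl.2 hi⟩
  have hmaps : ∀ y ∈ Bad, ((fun i : T => y i, fun i : (Tᶜ : Finset (Fin n)) => y i) :
      (T → F) × ((Tᶜ : Finset (Fin n)) → F)) ∈
        A ×ˢ (univ : Finset ((Tᶜ : Finset (Fin n)) → F)) := by
    intro y hy
    obtain ⟨c, hcC, hagree⟩ := (hBad y).1 hy
    refine mem_product.2 ⟨mem_image.2 ⟨⟨c, hcC⟩, mem_univ _, ?_⟩, mem_univ _⟩
    ext i
    exact (hagree i i.2).symm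
  calc Bad.card ≤ (A ×ˢ (univ : Finset ((Tᶜ : Finset (Fin n)) → F))).card :=
        card_le_card_of_injOn _ hmaps hinj
    _ = A.card * q ^ (n - (k + 1)) := by
        rw [card_product, card_univ, Fintype.card_fun, Fintype.card_coe, card_compl,
          Fintype.card_fin, hT]
    _ ≤ q ^ k * q ^ (n - (k + 1)) := Nat.mul_le_mul_right _ hA
    _ = q ^ (n - 1) := by rw [← pow_add]; congr 1; omega

private lemma aux_arith {q n k m : ℕ} (hq : 2 ≤ q) (hkn : k < n) (hm : m ≤ q) :
    q ^ k + m * (q ^ (n - 1) - q ^ k) < q ^ n := by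
  set a := q ^ k
  set b := q ^ (n - 1)
  have hab : a ≤ b := Nat.pow_le_pow_right (by omega) (by omega)
  have ha1 : 1 ≤ a := Nat.one_le_pow _ _ (by omega)
  have hqb : q * b = q ^ n := by
    rw [← pow_succ']; congr 1; omega
  have h1 : m * (b - a) ≤ q * (b - a) := Nat.mul_le_mul_right _ hm
  have h2 : q * (b - a) + q * a = q * b := by
    rw [← Nat.mul_add, Nat.sub_add_cancel hab]
  have h3 : 2 * a ≤ q * a := Nat.mul_le_mul_right _ hq
  omega

/-- Theorem `largeL`: a linear `[n,k]` MDS code over `GF(q)`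
with `k < n` and `L < C(n,k)` is not `(n-k, L)`-list decodable whenever
`q ≥ C(n, k+1)`. -/
theorem stmt3 {F : Type*} [Field F] [Fintype F] [DecidableEq F]
    {n k L : ℕ} (C : Submodule F (Fin n → F))
    (hk : Module.finrank F C = k) (hkn : k < n)
    (hMDS : IsMDSCode k C)
    (hL : 1 ≤ L) (hLub : L < n.choose k)
    (hq : n.choose (k + 1) ≤ Fintype.card F) :
    ¬ ListDecodable (C : Set (Fin n → F)) (n - k) L := by
  classical
  set q := Fintype.card F with hqdef
  have hq2 : 2 ≤ q := Fintype.one_lt_card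
  have hcardC : Nat.card C = q ^ k := aux_card C hk
  -- the bad sets
  let Bad : Finset (Fin n) → Finset (Fin n → F) :=
    fun T : Finset (Fin n) => univ.filter (fun y : Fin n → F => ∃ c ∈ C, ∀ i ∈ T, y i = c i)
  have hBadmem : ∀ (T : Finset (Fin n)) (y : Fin n → F), y ∈ Bad T ↔ ∃ c ∈ C, ∀ i ∈ T, y i = c i := by
    intro T y; simp [Bad]
  let Cfin : Finset (Fin n → F) := univ.filter (fun y => y ∈ C)
  have hCfin : Cfin.card = q ^ k := by
    rw [← hcardC, Nat.card_eq_fintype_card (α := C)]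
    rw [Fintype.card_subtype]
  have hCsubBad : ∀ T, Cfin ⊆ Bad T := by
    intro T y hy
    rw [mem_filter] at hy
    exact (hBadmem T y).2 ⟨y, hy.2, fun i _ => rfl⟩
  -- the family of (k+1)-subsets
  let 𝒯 : Finset (Finset (Fin n)) := powersetCard (k + 1) univ
  have h𝒯card : 𝒯.card = n.choose (k + 1) := by
    rw [card_powersetCard, card_univ, Fintype.card_fin]
  -- union bound
  let BadAll : Finset (Fin n → F) := 𝒯.biUnion Bad
  have hBadAllcard : BadAll.card < q ^ n := by
    have hsub : BadAll ⊆ Cfin ∪ 𝒯.biUnion (fun T => Bad T \ Cfin) := by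
      intro y hy
      obtain ⟨T, hT, hyT⟩ := mem_biUnion.1 hy
      by_cases hyC : y ∈ Cfin
      · exact mem_union_left _ hyC
      · exact mem_union_right _ (mem_biUnion.2 ⟨T, hT, mem_sdiff.2 ⟨hyT, hyC⟩⟩)
    have hpiece : ∀ T ∈ 𝒯, (Bad T \ Cfin).card ≤ q ^ (n - 1) - q ^ k := by
      intro T hT
      have hTcard : T.card = k + 1 := (mem_powersetCard.1 hT).2
      have hBadle : (Bad T).card ≤ q ^ (n - 1) :=
        aux_bad_card C hcardC T hTcard hkn (Bad T) (hBadmem T)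
      have := card_sdiff_of_subset (hCsubBad T)
      omega
    calc BadAll.card ≤ (Cfin ∪ 𝒯.biUnion (fun T => Bad T \ Cfin)).card := card_le_card hsub
      _ ≤ Cfin.card + (𝒯.biUnion (fun T => Bad T \ Cfin)).card := card_union_le _ _
      _ ≤ Cfin.card + ∑ T ∈ 𝒯, (Bad T \ Cfin).card :=
          Nat.add_le_add_left (card_biUnion_le) _
      _ ≤ q ^ k + 𝒯.card * (q ^ (n - 1) - q ^ k) := by
          rw [hCfin]
          exact Nat.add_le_add_left (by simpa using Finset.sum_le_card_nsmul 𝒯 _ _ hpiece) _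
      _ < q ^ n := by
          rw [h𝒯card]
          exact aux_arith hq2 hkn (le_trans (by rw [hqdef]; exact hq) le_rfl)
  -- pick a good y
  have hyex : ∃ y : Fin n → F, y ∉ BadAll := by
    by_contra hcon
    push_neg at hcon
    have : (univ : Finset (Fin n → F)).card ≤ BadAll.card :=
      card_le_card (fun y _ => hcon y)
    rw [card_univ, Fintype.card_fun, Fintype.card_fin, ← hqdef] at this
    omega
  obtain ⟨y, hy⟩ := hyex
  have hgood : ∀ T : Finset (Fin n), T.card = k + 1 → ∀ c ∈ C, ∃ i ∈ T, y i ≠ c i := by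
    intro T hT c hc
    by_contra hcon
    push_neg at hcon
    have hyBadT : y ∈ Bad T := (hBadmem T y).2 ⟨c, hc, hcon⟩
    exact hy (mem_biUnion.2 ⟨T, mem_powersetCard.2 ⟨subset_univ T, hT⟩, hyBadT⟩)
  -- the map from k-subsets to codewords
  let f : Finset (Fin n) → (Fin n → F) :=
    fun S => if h : ∃ c, c ∈ C ∧ ∀ i ∈ S, c i = y i then h.choose else 0
  have hf : ∀ S : Finset (Fin n), S.card = k → f S ∈ C ∧ ∀ i ∈ S, f S i = y i := by
    intro S hS
    have hex : ∃ c, c ∈ C ∧ ∀ i ∈ S, c i = y i := by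
      obtain ⟨c, hc1, hc2⟩ := aux_surj C hk hkn hMDS S hS y
      exact ⟨c, hc1, hc2⟩
    rw [show f S = hex.choose from dif_pos hex]
    exact hex.choose_spec
  let 𝒮 : Finset (Finset (Fin n)) := powersetCard k univ
  let Dset : Finset (Fin n → F) :=
    univ.filter (fun c => c ∈ C ∧ hammingDist y c ≤ n - k)
  have hmaps : ∀ S ∈ 𝒮, f S ∈ Dset := by
    intro S hS
    have hScard : S.card = k := (mem_powersetCard.1 hS).2
    obtain ⟨hfC, hfag⟩ := hf S hScard
    refine mem_filter.2 ⟨mem_univ _, hfC, ?_⟩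
    have := aux_dist_le S y (f S) (fun i hi => (hfag i hi).symm)
    rw [hScard] at this
    exact this
  have hinj : Set.InjOn f 𝒮 := by
    intro S₁ hS₁ S₂ hS₂ hf12
    by_contra hne
    have hS₁c : S₁.card = k := (mem_powersetCard.1 hS₁).2
    have hS₂c : S₂.card = k := (mem_powersetCard.1 hS₂).2
    obtain ⟨h1C, h1ag⟩ := hf S₁ hS₁c
    obtain ⟨h2C, h2ag⟩ := hf S₂ hS₂c
    -- the union has size ≥ k+1
    have hssub : S₁ ⊂ S₁ ∪ S₂ := by
      refine Finset.ssubset_iff_subset_ne.2 ⟨subset_union_left, fun heq => ?_⟩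
      have hsub2 : S₂ ⊆ S₁ := heq ▸ subset_union_right
      exact hne ((eq_of_subset_of_card_le hsub2 (by omega)).symm)
    have hcardU : k + 1 ≤ (S₁ ∪ S₂).card := by
      have := card_lt_card hssub
      omega
    obtain ⟨T, hTsub, hTcard⟩ := exists_subset_card_eq hcardU
    obtain ⟨i, hiT, hineq⟩ := hgood T hTcard (f S₁) h1C
    have hiU : i ∈ S₁ ∪ S₂ := hTsub hiT
    rcases mem_union.1 hiU with hi1 | hi2
    · exact hineq (h1ag i hi1).symm
    · exact hineq (by rw [hf12]; exact (h2ag i hi2).symm)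
  have hDcard : n.choose k ≤ Dset.card := by
    have h𝒮card : 𝒮.card = n.choose k := by
      rw [card_powersetCard, card_univ, Fintype.card_fin]
    rw [← h𝒮card]
    exact card_le_card_of_injOn f hmaps hinj
  -- conclude
  intro hLD
  have := hLD y
  have hset : {c | c ∈ (C : Set (Fin n → F)) ∧ hammingDist y c ≤ n - k} = ↑Dset := by
    ext c
    simp [Dset]
  rw [hset, Set.ncard_coe_finset] at this
  omega
end

section
/- Let F = GF(q) be a finite field, let C be a linear [n,k] MDS code over F, and let L be a positive integer such that L < max{ binom(n-1, k-1) / binom(⌈(n+k)/2⌉ - 2, k-1), k } + 1 (the first quantity in the maximum being a rational number). If C is L-MDS, then C is ℓ-MDS for every ℓ ∈ {1, 2, ..., L}. -/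
/-- A linear code `C ⊆ F^ι` of dimension `k` is `L`-MDS if there are no `L+1`
distinct vectors in the same coset of `C` whose Hamming weights sum to at most
`L(n-k)`, where `n = |ι|`. -/
def IsLMDS {F : Type*} [Field F] [DecidableEq F]
    {ι : Type*} [Fintype ι] (k L : ℕ) (C : Submodule F (ι → F)) : Prop :=
  ¬∃ e : Fin (L + 1) → (ι → F), Function.Injective e ∧
      (∀ m m', e m - e m' ∈ C) ∧
      (∑ m, hammingNorm (e m)) ≤ L * (Fintype.card ι - k)

private lemma hn_le_of_zero_on {F : Type*} [DecidableEq F] [Zero F] {n : ℕ}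
    {v : Fin n → F} {T : Finset (Fin n)}
    (h : ∀ i ∈ T, v i = 0) : hammingNorm v ≤ n - T.card := by
  classical
  have hsub : (Finset.univ.filter fun i => v i ≠ 0) ⊆ Tᶜ := by
    intro i hi
    simp only [Finset.mem_filter, Finset.mem_univ, true_and] at hi
    simp only [Finset.mem_compl]
    exact fun hiT => hi (h i hiT)
  have hle := Finset.card_le_card hsub
  rw [Finset.card_compl, Fintype.card_fin] at hle
  simpa [hammingNorm] using hle

private lemma stmt6_count {F : Type*} [Field F] [Fintype F] [DecidableEq F]
    {n k L : ℕ} (C : Submodule F (Fin n → F))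
    (hk : Module.finrank F C = k) (hk1 : 1 ≤ k) (hkn : k + 1 ≤ n)
    (hmin : ∀ c ∈ C, hammingNorm c ≤ n - k → c = 0)
    (x : Fin n → F) (hx : x ∉ C)
    (hLub : (L : ℚ) <
      max ((((n - 1).choose (k - 1) : ℕ) : ℚ) /
            ((((n + k + 1) / 2 - 2).choose (k - 1) : ℕ) : ℚ))
          ((k : ℕ) : ℚ) + 1) :
    ∃ S : Finset (Fin n → F), L + 1 ≤ S.card ∧
      ∀ v ∈ S, v - x ∈ C ∧ hammingNorm v ≤ n - k := by
  classical
  set S : Finset (Fin n → F) :=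
    Finset.univ.filter (fun v => v - x ∈ C ∧ hammingNorm v ≤ n - k) with hS
  have hmemS : ∀ v, v ∈ S ↔ v - x ∈ C ∧ hammingNorm v ≤ n - k := by
    intro v; simp [hS]
  refine ⟨S, ?_, fun v hv => (hmemS v).mp hv⟩
  -- zero sets
  set Z : (Fin n → F) → Finset (Fin n) :=
    fun v => Finset.univ.filter (fun i => v i = 0) with hZ
  have hZmem : ∀ v i, i ∈ Z v ↔ v i = 0 := by intro v i; simp [hZ]
  have hZcard : ∀ v : Fin n → F, (Z v).card + hammingNorm v = n := by
    intro v
    have := Finset.card_filter_add_card_filter_not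
      (s := (Finset.univ : Finset (Fin n))) (p := fun i => v i = 0)
    simpa [hZ, hammingNorm] using this
  -- uniqueness of coset vector vanishing on a k-set
  have huniq : ∀ v v' : Fin n → F, v - x ∈ C → v' - x ∈ C →
      ∀ T : Finset (Fin n), T.card = k → T ⊆ Z v → T ⊆ Z v' → v = v' := by
    intro v v' hv hv' T hT hTv hTv'
    have hc : v - v' ∈ C := by
      have := sub_mem hv hv'
      simpa using this
    have hz : ∀ i ∈ T, (v - v') i = 0 := by
      intro i hi
      have h1 := (hZmem v i).mp (hTv hi)
      have h2 := (hZmem v' i).mp (hTv' hi)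
      simp [h1, h2]
    have := hmin _ hc (by
      have := hn_le_of_zero_on hz
      rwa [hT] at this)
    have := sub_eq_zero.mp this
    exact this
  -- existence of coset vector vanishing on a k-set
  have hex : ∀ T : Finset (Fin n), T.card = k →
      ∃ v : Fin n → F, v - x ∈ C ∧ T ⊆ Z v := by
    intro T hT
    let φ : C →ₗ[F] (↥T → F) :=
      (LinearMap.funLeft F F (Subtype.val : ↥T → Fin n)).comp C.subtype
    have hφ : ∀ c : C, ∀ i : ↥T, φ c i = (c : Fin n → F) i.1 := by
      intro c i; rfl
    have hinj : Function.Injective φ := by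
      rw [injective_iff_map_eq_zero]
      intro c hc
      have hz : ∀ i ∈ T, (c : Fin n → F) i = 0 := by
        intro i hi
        have := congrFun hc ⟨i, hi⟩
        simpa [hφ] using this
      have hnorm : hammingNorm (c : Fin n → F) ≤ n - k := by
        have := hn_le_of_zero_on hz
        rwa [hT] at this
      exact Subtype.ext (hmin _ c.2 hnorm)
    have hfr : Module.finrank F C = Module.finrank F (↥T → F) := by
      rw [hk, Module.finrank_pi, Fintype.card_coe, hT]
    have hsurj := (LinearMap.injective_iff_surjective_of_finrank_eq_finrank hfr).mp hinj
    obtain ⟨c, hc⟩ := hsurj (fun i => - x i.1)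
    refine ⟨x + (c : Fin n → F), by simpa using c.2, ?_⟩
    intro i hi
    rw [hZmem]
    have := congrFun hc ⟨i, hi⟩
    simp only [hφ] at this
    simp [this]
  -- choice function
  set W : Finset (Fin n) → (Fin n → F) :=
    fun T => if h : T.card = k then (hex T h).choose else 0 with hW
  have hWS : ∀ T : Finset (Fin n), T.card = k → W T ∈ S ∧ T ⊆ Z (W T) := by
    intro T hT
    have hspec := (hex T hT).choose_spec
    have hWT : W T = (hex T hT).choose := by simp [hW, hT]
    rw [hWT]
    refine ⟨(hmemS _).mpr ⟨hspec.1, ?_⟩, hspec.2⟩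
    have hz : ∀ i ∈ T, (hex T hT).choose i = 0 := fun i hi => (hZmem _ i).mp (hspec.2 hi)
    have := hn_le_of_zero_on hz
    rwa [hT] at this
  -- all members of S are nonzero
  have hSne0 : ∀ v ∈ S, v ≠ 0 := by
    intro v hv hv0
    apply hx
    have := ((hmemS v).mp hv).1
    rw [hv0] at this
    simpa using neg_mem this
  -- S is nonempty
  have hSne : S.Nonempty := by
    obtain ⟨T, _, hT⟩ := Finset.exists_subset_card_eq
      (s := (Finset.univ : Finset (Fin n))) (n := k) (by simp; omega)
    exact ⟨W T, (hWS T hT).1⟩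
  -- intersection bound
  have hinter : ∀ v ∈ S, ∀ v' ∈ S, v ≠ v' → (Z v ∩ Z v').card < k := by
    intro v hv v' hv' hne
    by_contra hge
    push_neg at hge
    obtain ⟨T, hTsub, hT⟩ := Finset.exists_subset_card_eq hge
    exact hne (huniq v v' ((hmemS v).mp hv).1 ((hmemS v').mp hv').1 T hT
      (hTsub.trans Finset.inter_subset_left) (hTsub.trans Finset.inter_subset_right))
  set t : ℕ := (n + k + 1) / 2 with ht
  -- at most one "big" member
  have hbig : ∀ v ∈ S, ∀ v' ∈ S, t ≤ (Z v).card → t ≤ (Z v').card → v = v' := by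
    intro v hv v' hv' h1 h2
    by_contra hne
    have h3 := hinter v hv v' hv' hne
    have h4 : (Z v ∪ Z v').card ≤ n := by
      have := Finset.card_le_card (Finset.subset_univ (Z v ∪ Z v'))
      simpa using this
    have h5 := Finset.card_union_add_card_inter (Z v) (Z v')
    omega
  -- pick v0
  have hv0 : ∃ v0 ∈ S, ∀ v ∈ S, v ≠ v0 → (Z v).card < t := by
    by_cases hbe : ∃ v ∈ S, t ≤ (Z v).card
    · obtain ⟨v0, hv0S, hv0big⟩ := hbe
      refine ⟨v0, hv0S, fun v hvS hne => ?_⟩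
      by_contra hge
      push_neg at hge
      exact hne (hbig v hvS v0 hv0S hge hv0big)
    · push_neg at hbe
      obtain ⟨v0, hv0S⟩ := hSne
      exact ⟨v0, hv0S, fun v hvS _ => hbe v hvS⟩
  obtain ⟨v0, hv0S, hsmall⟩ := hv0
  obtain ⟨j, hj⟩ : ∃ j, v0 j ≠ 0 := Function.ne_iff.mp (hSne0 v0 hv0S)
  have hjZ : ∀ v : Fin n → F, j ∈ Z v → v ≠ v0 := by
    intro v hjv heq
    rw [heq] at hjv
    exact hj ((hZmem v0 j).mp hjv)
  have hcard_erase : (S.erase v0).card + 1 = S.card := by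
    rw [Finset.card_erase_of_mem hv0S]
    have : 1 ≤ S.card := Finset.card_pos.mpr ⟨v0, hv0S⟩
    omega
  -- split on which branch of max
  rcases max_choice ((((n - 1).choose (k - 1) : ℕ) : ℚ) /
      ((((n + k + 1) / 2 - 2).choose (k - 1) : ℕ) : ℚ)) ((k : ℕ) : ℚ) with hmax | hmax
  · -- ratio branch
    rw [hmax] at hLub
    set D : ℕ := ((n + k + 1) / 2 - 2).choose (k - 1) with hD
    have htk : k + 1 ≤ t := by omega
    have hDpos : 0 < D := Nat.choose_pos (by omega)
    -- the family of k-sets containing j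
    set 𝒯 : Finset (Finset (Fin n)) :=
      Finset.univ.filter (fun T => T.card = k ∧ j ∈ T) with h𝒯
    have h𝒯mem : ∀ T, T ∈ 𝒯 ↔ T.card = k ∧ j ∈ T := by intro T; simp [h𝒯]
    have h𝒯card : 𝒯.card = (n - 1).choose (k - 1) := by
      have hec : (Finset.univ.erase j).card = n - 1 := by
        rw [Finset.card_erase_of_mem (Finset.mem_univ j), Finset.card_univ, Fintype.card_fin]
      rw [← hec, ← Finset.card_powersetCard (k-1) (Finset.univ.erase j)]
      · apply Finset.card_bij (fun T _ => T.erase j)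
        · intro T hT
          rw [h𝒯mem] at hT
          rw [Finset.mem_powersetCard]
          exact ⟨Finset.erase_subset_erase j (Finset.subset_univ T),
            by rw [Finset.card_erase_of_mem hT.2, hT.1]⟩
        · intro T hT T' hT' h
          rw [h𝒯mem] at hT hT'
          rw [← Finset.insert_erase hT.2, ← Finset.insert_erase hT'.2, h]
        · intro U hU
          rw [Finset.mem_powersetCard] at hU
          have hjU : j ∉ U := fun h => (Finset.mem_erase.mp (hU.1 h)).1 rfl
          refine ⟨insert j U, ?_, by rw [Finset.erase_insert hjU]⟩
          rw [h𝒯mem]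
          exact ⟨by rw [Finset.card_insert_of_notMem hjU, hU.2]; omega,
            Finset.mem_insert_self j U⟩
    -- key counting
    have hkey : (n - 1).choose (k - 1) ≤ D * (S.erase v0).card := by
      rw [← h𝒯card]
      apply Finset.card_le_mul_card_image_of_maps_to (f := fun T => W T)
      · intro T hT
        rw [h𝒯mem] at hT
        have hWT := hWS T hT.1
        refine Finset.mem_erase.mpr ⟨hjZ _ (hWT.2 hT.2), hWT.1⟩
      · intro v hv
        rcases Finset.eq_empty_or_nonempty (𝒯.filter fun T => W T = v) with he | he
        · rw [he]; simpa using Nat.zero_le D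
        · obtain ⟨T₁, hT₁⟩ := he
          rw [Finset.mem_filter] at hT₁
          have hT₁' := (h𝒯mem T₁).mp hT₁.1
          have hjZv : j ∈ Z v := by
            rw [← hT₁.2]
            exact (hWS T₁ hT₁'.1).2 hT₁'.2
          have hvS := Finset.mem_of_mem_erase hv
          have hvne : v ≠ v0 := (Finset.mem_erase.mp hv).1
          have hZvlt : (Z v).card < t := hsmall v hvS hvne
          calc (𝒯.filter fun T => W T = v).card
              ≤ (Finset.powersetCard (k-1) ((Z v).erase j)).card := by
                apply Finset.card_le_card_of_injOn (fun T => T.erase j)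
                · intro T hT
                  rw [Finset.mem_coe, Finset.mem_filter] at hT
                  have hT' := (h𝒯mem T).mp hT.1
                  have hTZ : T ⊆ Z v := by
                    rw [← hT.2]
                    exact (hWS T hT'.1).2
                  rw [Finset.mem_coe, Finset.mem_powersetCard]
                  exact ⟨Finset.erase_subset_erase j hTZ,
                    by rw [Finset.card_erase_of_mem hT'.2, hT'.1]⟩
                · intro T hT T' hT' h
                  beta_reduce at h
                  rw [Finset.mem_coe, Finset.mem_filter] at hT hT'
                  have h1 := (h𝒯mem T).mp hT.1
                  have h2 := (h𝒯mem T').mp hT'.1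
                  rw [← Finset.insert_erase h1.2, ← Finset.insert_erase h2.2, h]
            _ ≤ D := by
                rw [Finset.card_powersetCard, Finset.card_erase_of_mem hjZv]
                exact Nat.choose_le_choose (k-1) (by omega)
    -- transfer to ℚ
    have hQ : ((((n - 1).choose (k - 1) : ℕ) : ℚ) /
        ((((n + k + 1) / 2 - 2).choose (k - 1) : ℕ) : ℚ)) ≤ ((S.erase v0).card : ℚ) := by
      rw [div_le_iff₀ (by exact_mod_cast hDpos)]
      calc ((((n - 1).choose (k - 1) : ℕ) : ℚ)) ≤ ((D * (S.erase v0).card : ℕ) : ℚ) := by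
            exact_mod_cast hkey
        _ = ((S.erase v0).card : ℚ) * (D : ℚ) := by push_cast; ring
    have : (L : ℚ) < ((S.erase v0).card : ℚ) + 1 := lt_of_lt_of_le hLub (by linarith)
    have hLlt : (L : ℚ) < (S.card : ℚ) := by
      rw [← hcard_erase]; push_cast; linarith
    have : L < S.card := by exact_mod_cast hLlt
    omega
  · -- k branch
    rw [hmax] at hLub
    have hLk : L ≤ k := by exact_mod_cast Nat.lt_succ_iff.mp (by exact_mod_cast hLub)
    -- construct k distinct members ≠ v0
    have hZv0 : k ≤ (Z v0).card := by
      have h1 := hZcard v0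
      have h2 := ((hmemS v0).mp hv0S).2
      omega
    obtain ⟨T0, hT0sub, hT0⟩ := Finset.exists_subset_card_eq hZv0
    have hjT0 : j ∉ T0 := fun h => hj ((hZmem v0 j).mp (hT0sub h))
    set ψ : Fin n → (Fin n → F) := fun i => W (insert j (T0.erase i)) with hψ
    have hTi : ∀ i ∈ T0, (insert j (T0.erase i)).card = k := by
      intro i hi
      rw [Finset.card_insert_of_notMem (fun h => hjT0 (Finset.mem_of_mem_erase h)),
        Finset.card_erase_of_mem hi, hT0]
      omega
    have hmaps : ∀ i ∈ T0, ψ i ∈ S.erase v0 := by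
      intro i hi
      have hW := hWS _ (hTi i hi)
      exact Finset.mem_erase.mpr
        ⟨hjZ _ (hW.2 (Finset.mem_insert_self _ _)), hW.1⟩
    have hinjψ : Set.InjOn ψ T0 := by
      intro i hi i' hi' h
      by_contra hne
      have hW := hWS _ (hTi i hi)
      have hW' := hWS _ (hTi i' hi')
      have hT0Z : T0 ⊆ Z (ψ i) := by
        intro m hm
        by_cases hmi : m = i
        · subst hmi
          rw [h]
          exact hW'.2 (Finset.mem_insert_of_mem (Finset.mem_erase.mpr ⟨hne, hm⟩))
        · exact hW.2 (Finset.mem_insert_of_mem (Finset.mem_erase.mpr ⟨hmi, hm⟩))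
      have heq := huniq (ψ i) v0 ((hmemS _).mp hW.1).1 ((hmemS v0).mp hv0S).1 T0 hT0
        hT0Z hT0sub
      exact (Finset.mem_erase.mp (hmaps i hi)).1 heq
    have := Finset.card_le_card_of_injOn ψ hmaps hinjψ
    rw [hT0] at this
    omega

/-- Theorem `nesting`: let `C` be a linear `[n,k]` MDS code
over `GF(q)` and let `L` be a positive integer with
`L < max { C(n-1,k-1) / C(⌈(n+k)/2⌉ - 2, k-1), k } + 1` (the first quantity in
the maximum taken as a rational number).  If `C` is `L`-MDS, then it is
`ℓ`-MDS for every `ℓ ∈ {1, …, L}`. -/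
theorem stmt6 {F : Type*} [Field F] [Fintype F] [DecidableEq F]
    {n k L : ℕ} (C : Submodule F (Fin n → F))
    (hk : Module.finrank F C = k) (hkn : k ≤ n)
    (hMDS : IsMDSCode k C)
    (hL : 1 ≤ L)
    (hLub : (L : ℚ) <
      max ((((n - 1).choose (k - 1) : ℕ) : ℚ) /
            ((((n + k + 1) / 2 - 2).choose (k - 1) : ℕ) : ℚ))
          ((k : ℕ) : ℚ) + 1)
    (hLMDS : IsLMDS k L C) :
    ∀ ℓ : ℕ, 1 ≤ ℓ → ℓ ≤ L → IsLMDS k ℓ C := by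
  classical
  intro ℓ hℓ1 hℓL
  rintro ⟨e, hinj, hcos, hsum⟩
  rw [Fintype.card_fin] at hsum
  unfold IsMDSCode at hMDS
  rw [Fintype.card_fin] at hMDS
  have hmin : ∀ c ∈ C, hammingNorm c ≤ n - k → c = 0 := by
    intro c hc hle
    by_contra hne
    have h1 : minHammingDist C ≤ hammingNorm c := Nat.sInf_le ⟨c, hc, hne, rfl⟩
    omega
  set i0 : Fin (ℓ + 1) := ⟨0, by omega⟩ with hi0
  set i1 : Fin (ℓ + 1) := ⟨1, by omega⟩ with hi1
  have hi01 : i0 ≠ i1 := by simp [hi0, hi1, Fin.ext_iff]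
  by_cases hnk : n = k
  · have hzero : ℓ * (n - k) = 0 := by
      rw [show n - k = 0 by omega, Nat.mul_zero]
    have h0 : (∑ m, hammingNorm (e m)) = 0 := by omega
    have hz := Finset.sum_eq_zero_iff.mp h0
    have he0 : e i0 = 0 := hammingNorm_eq_zero.mp (hz i0 (Finset.mem_univ _))
    have he1 : e i1 = 0 := hammingNorm_eq_zero.mp (hz i1 (Finset.mem_univ _))
    exact hi01 (hinj (he0.trans he1.symm))
  by_cases hk0 : k = 0
  · have hle : hammingNorm (e i1 - e i0) ≤ n - k := by
      have := hammingNorm_le_card_fintype (x := e i1 - e i0)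
      rw [Fintype.card_fin] at this
      omega
    have h0 : e i1 - e i0 = 0 := hmin _ (hcos i1 i0) hle
    exact hi01 (hinj (sub_eq_zero.mp h0).symm)
  set x : Fin n → F := e i0 with hxdef
  by_cases hxC : x ∈ C
  · -- the coset is the code itself: all weights are too big
    have hall : ∀ m, e m ∈ C := by
      intro m
      have := add_mem (hcos m i0) hxC
      rw [hxdef] at this
      simpa using this
    set B : Finset (Fin (ℓ + 1)) := Finset.univ.filter (fun m => e m ≠ 0) with hB
    have hBcard : ℓ ≤ B.card := by
      have hpart := Finset.card_filter_add_card_filter_not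
        (s := (Finset.univ : Finset (Fin (ℓ + 1)))) (p := fun m => e m ≠ 0)
      have hone : (Finset.univ.filter fun m : Fin (ℓ + 1) => ¬ e m ≠ 0).card ≤ 1 := by
        apply Finset.card_le_one.mpr
        intro a ha b hb
        simp only [Finset.mem_filter, Finset.mem_univ, true_and, not_not] at ha hb
        exact hinj (ha.trans hb.symm)
      rw [Finset.card_univ, Fintype.card_fin] at hpart
      rw [hB]
      omega
    have hlow : ∀ m ∈ B, n - k + 1 ≤ hammingNorm (e m) := by
      intro m hm
      rw [hB, Finset.mem_filter] at hm
      by_contra hlt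
      push_neg at hlt
      exact hm.2 (hmin _ (hall m) (by omega))
    have hge : B.card * (n - k + 1) ≤ ∑ m, hammingNorm (e m) := by
      calc B.card * (n - k + 1) ≤ ∑ m ∈ B, hammingNorm (e m) := by
            simpa [smul_eq_mul] using Finset.card_nsmul_le_sum B _ _ hlow
        _ ≤ ∑ m, hammingNorm (e m) :=
            Finset.sum_le_sum_of_subset (Finset.subset_univ B)
    have h1 : ℓ * (n - k + 1) ≤ ℓ * (n - k) :=
      le_trans (Nat.mul_le_mul_right _ hBcard) (le_trans hge hsum)
    rw [Nat.mul_add, Nat.mul_one] at h1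
    omega
  · obtain ⟨S, hScard, hSmem⟩ :=
      stmt6_count C hk (by omega) (by omega) hmin x hxC hLub
    set E : Finset (Fin n → F) := Finset.image e Finset.univ with hE
    have hEcard : E.card ≤ ℓ + 1 := le_trans Finset.card_image_le (by simp)
    have hsd : L - ℓ ≤ (S \ E).card := by
      have := Finset.le_card_sdiff E S
      omega
    obtain ⟨G, hGsub, hGcard⟩ := Finset.exists_subset_card_eq hsd
    set gg : Fin (L - ℓ) → (Fin n → F) :=
      fun i => ((G.equivFin.symm (finCongr hGcard.symm i)) : Fin n → F) with hgg
    have hgmem : ∀ i, gg i ∈ G := fun i => (G.equivFin.symm (finCongr hGcard.symm i)).2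
    have hgS : ∀ i, gg i ∈ S := fun i => (Finset.mem_sdiff.mp (hGsub (hgmem i))).1
    have hgE : ∀ i, gg i ∉ E := fun i => (Finset.mem_sdiff.mp (hGsub (hgmem i))).2
    have hginj : Function.Injective gg := by
      intro a b hab
      have h1 : G.equivFin.symm (finCongr hGcard.symm a)
          = G.equivFin.symm (finCongr hGcard.symm b) := Subtype.ext hab
      exact (finCongr hGcard.symm).injective (G.equivFin.symm.injective h1)
    have hEE : Function.Injective (Sum.elim e gg) := by
      rintro (a | a) (b | b) h <;>
        simp only [Sum.elim_inl, Sum.elim_inr] at h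
      · exact congrArg Sum.inl (hinj h)
      · exact absurd (h ▸ Finset.mem_image_of_mem e (Finset.mem_univ a)) (hgE b)
      · exact absurd (h.symm ▸ Finset.mem_image_of_mem e (Finset.mem_univ b)) (hgE a)
      · exact congrArg Sum.inr (hginj h)
    have hq : ℓ + 1 + (L - ℓ) = L + 1 := by omega
    set q : Fin (L + 1) ≃ (Fin (ℓ + 1) ⊕ Fin (L - ℓ)) :=
      (finCongr hq.symm).trans finSumFinEquiv.symm with hqdef
    have hxm : ∀ s, Sum.elim e gg s - x ∈ C := by
      rintro (a | a)
      · rw [hxdef]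
        simpa using hcos a i0
      · exact (hSmem _ (hgS a)).1
    refine hLMDS ⟨fun m => Sum.elim e gg (q m), hEE.comp q.injective, ?_, ?_⟩
    · intro m m'
      have hmem := sub_mem (hxm (q m)) (hxm (q m'))
      rwa [sub_sub_sub_cancel_right] at hmem
    · rw [Fintype.card_fin]
      have hsum2 : ∑ m : Fin (L + 1), hammingNorm (Sum.elim e gg (q m))
          = ∑ s : Fin (ℓ + 1) ⊕ Fin (L - ℓ), hammingNorm (Sum.elim e gg s) :=
        Fintype.sum_equiv q _ _ (fun m => rfl)
      rw [hsum2, Fintype.sum_sum_type]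
      simp only [Sum.elim_inl, Sum.elim_inr]
      have hg_le : ∑ a : Fin (L - ℓ), hammingNorm (gg a) ≤ (L - ℓ) * (n - k) := by
        calc ∑ a : Fin (L - ℓ), hammingNorm (gg a)
            ≤ (Finset.univ : Finset (Fin (L - ℓ))).card • (n - k) :=
              Finset.sum_le_card_nsmul _ _ _ (fun a _ => (hSmem _ (hgS a)).2)
          _ = (L - ℓ) * (n - k) := by
              rw [Finset.card_univ, Fintype.card_fin, smul_eq_mul]
      have hmul : ℓ * (n - k) + (L - ℓ) * (n - k) = L * (n - k) := by
        rw [← Nat.add_mul]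
        congr 1
        omega
      omega
end

section
/- Let F = GF(q) be a finite field and let C be a linear [n,k] MDS code over F. Then C is L-MDS for every positive integer L satisfying L ≥ binom(n,k) - k(n-k). -/
lemma choose_lb (k : ℕ) (hk : 1 ≤ k) : ∀ b, k ≤ b → 1 + k * (b - k) ≤ b.choose k := by
  intro b hb
  induction b, hb using Nat.le_induction with
  | base => simp
  | succ b hb ih =>
    have h1 : k ≤ Nat.choose b (k-1) := by
      have h0 : Nat.choose k (k-1) = Nat.choose k 1 :=
        Nat.choose_symm_of_eq_add (show k = (k-1)+1 by omega)
      have := Nat.choose_le_choose (k-1) hb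
      simp [Nat.choose_one_right] at h0
      omega
    have h2 : (b+1).choose k = b.choose k + b.choose (k-1) := by
      rw [Nat.choose_eq_choose_pred_add (by omega) hk, show b+1-1 = b by omega]; ring
    have : k * (b + 1 - k) = k * (b - k) + k := by
      rw [Nat.sub_add_comm hb, Nat.mul_add, Nat.mul_one]
    omega

lemma card_supersets {ι : Type*} [Fintype ι] [DecidableEq ι] (s : Finset ι) (r : ℕ) (hs : s.card ≤ r) :
    ((Finset.univ.powersetCard r).filter (fun T => s ⊆ T)).card
      = (Fintype.card ι - s.card).choose (r - s.card) := by
  have : ((Finset.univ.powersetCard r).filter (fun T => s ⊆ T)).card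
      = (sᶜ.powersetCard (r - s.card)).card := by
    apply Finset.card_bij' (fun T _ => T \ s) (fun U _ => U ∪ s)
    · intro T hT
      simp only [Finset.mem_filter, Finset.mem_powersetCard] at hT
      rw [Finset.mem_powersetCard]
      constructor
      · intro x hx; simp only [Finset.mem_sdiff] at hx; simp [hx.2]
      · rw [Finset.card_sdiff_of_subset hT.2, hT.1.2]
    · intro U hU
      rw [Finset.mem_powersetCard] at hU
      have hdisj : Disjoint U s := by
        refine Finset.disjoint_left.2 fun x hx hxs => ?_
        have := hU.1 hx; simp at this; exact this hxs
      simp only [Finset.mem_filter, Finset.mem_powersetCard]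
      refine ⟨⟨Finset.subset_univ _, ?_⟩, Finset.subset_union_right⟩
      rw [Finset.card_union_of_disjoint hdisj, hU.2]
      omega
    · intro T hT
      simp only [Finset.mem_filter] at hT
      exact Finset.sdiff_union_of_subset hT.2
    · intro U hU
      rw [Finset.mem_powersetCard] at hU
      have hdisj : Disjoint U s := by
        refine Finset.disjoint_left.2 fun x hx hxs => ?_
        have := hU.1 hx; simp at this; exact this hxs
      exact Finset.union_sdiff_cancel_right hdisj
  rw [this, Finset.card_powersetCard, Finset.card_compl]

/-- Theorem `stronglyhighL`: every linear `[n,k]` MDS code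
over `GF(q)` is `L`-MDS for every positive integer `L ≥ C(n,k) - k(n-k)`. -/
theorem stmt7 {F : Type*} [Field F] [Fintype F] [DecidableEq F]
    {n k : ℕ} (C : Submodule F (Fin n → F))
    (hk : Module.finrank F C = k) (hkn : k ≤ n)
    (hMDS : IsMDSCode k C) :
    ∀ L : ℕ, 1 ≤ L → n.choose k - k * (n - k) ≤ L → IsLMDS k L C := by
  intro L hL1 hL2
  rintro ⟨e, hinj, hcoset, hsum⟩
  simp only [Fintype.card_fin] at hsum
  by_cases hk0 : k = 0
  · subst hk0
    have hC : C = ⊥ := Submodule.finrank_eq_zero.mp hk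
    have h01 : (0 : Fin (L+1)) ≠ 1 := by
      intro h
      have : ((0 : Fin (L+1)) : ℕ) = ((1 : Fin (L+1)) : ℕ) := by rw [h]
      rw [Fin.val_one'] at this
      simp at this
      omega
    have h2 := hcoset 0 1
    rw [hC, Submodule.mem_bot, sub_eq_zero] at h2
    exact h01 (hinj h2)
  have hk1 : 1 ≤ k := by omega
  -- minimum distance bound
  have hdist : ∀ c ∈ C, c ≠ 0 → n - k + 1 ≤ hammingNorm c := by
    intro c hc hc0
    have hmem : hammingNorm c ∈ {w : ℕ | ∃ c ∈ C, c ≠ 0 ∧ hammingNorm c = w} :=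
      ⟨c, hc, hc0, rfl⟩
    have := Nat.sInf_le hmem
    unfold IsMDSCode minHammingDist at hMDS
    rw [hMDS, Fintype.card_fin] at this
    exact this
  classical
  set a := n - k with ha
  set w : Fin (L+1) → ℕ := fun m => hammingNorm (e m) with hw
  set supp : Fin (L+1) → Finset (Fin n) := fun m => Finset.univ.filter (fun i => e m i ≠ 0) with hsupp
  have hwsupp : ∀ m, (supp m).card = w m := by
    intro m; simp [hsupp, hw, hammingNorm]
  set S : Finset (Fin (L+1)) := Finset.univ.filter (fun m => w m ≤ a) with hS
  set A : Fin (L+1) → Finset (Finset (Fin n)) :=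
    fun m => (Finset.univ.powersetCard a).filter (fun T => supp m ⊆ T) with hA
  -- disjointness
  have hdisj : ∀ m ∈ S, ∀ m' ∈ S, m ≠ m' → Disjoint (A m) (A m') := by
    intro m _ m' _ hmm'
    refine Finset.disjoint_left.2 fun T hTm hTm' => ?_
    simp only [hA, Finset.mem_filter, Finset.mem_powersetCard] at hTm hTm'
    have hcne : e m - e m' ≠ 0 := sub_ne_zero.mpr (fun h => hmm' (hinj h))
    have hle : hammingNorm (e m - e m') ≤ a := by
      have hsub : (Finset.univ.filter (fun i => (e m - e m') i ≠ 0)) ⊆ T := by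
        intro i hi
        simp only [Finset.mem_filter, Finset.mem_univ, true_and, Pi.sub_apply] at hi
        by_cases h1 : e m i = 0
        · have : e m' i ≠ 0 := by intro h2; apply hi; rw [h1, h2, sub_zero]
          exact hTm'.2 (by simp [hsupp, this])
        · exact hTm.2 (by simp [hsupp, h1])
      calc hammingNorm (e m - e m')
          = (Finset.univ.filter (fun i => (e m - e m') i ≠ 0)).card := by
            simp [hammingNorm]
        _ ≤ T.card := Finset.card_le_card hsub
        _ = a := hTm.1.2
    have := hdist _ (hcoset m m') hcne
    omega
  -- sum of card bound
  have hsum2 : ∑ m ∈ S, (A m).card ≤ n.choose k := by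
    rw [← Finset.card_biUnion hdisj]
    calc (S.biUnion A).card ≤ (Finset.univ.powersetCard a : Finset (Finset (Fin n))).card := by
          apply Finset.card_le_card
          exact Finset.biUnion_subset.2 fun m _ => Finset.filter_subset _ _
      _ = n.choose k := by
          rw [Finset.card_powersetCard, Finset.card_univ, Fintype.card_fin, ha,
            Nat.choose_symm hkn]
  -- per-element lower bound
  have hAcard : ∀ m ∈ S, 1 + k * (a - w m) ≤ (A m).card := by
    intro m hm
    have hwm : w m ≤ a := by simpa [hS] using hm
    have h1 : (A m).card = (n - w m).choose (a - w m) := by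
      rw [hA]
      rw [card_supersets (supp m) a (by rw [hwsupp]; exact hwm)]
      rw [hwsupp, Fintype.card_fin]
    have h2 : (n - w m).choose (a - w m) = (n - w m).choose k :=
      Nat.choose_symm_of_eq_add (by omega)
    have h3 : 1 + k * ((n - w m) - k) ≤ (n - w m).choose k :=
      choose_lb k hk1 _ (by omega)
    have h4 : (n - w m) - k = a - w m := by omega
    rw [h1, h2, ← h4]
    exact h3
  -- arithmetic setup
  set s := S.card with hscard
  set t := (L + 1) - s with ht
  have hsle : s ≤ L + 1 := by
    calc s ≤ Fintype.card (Fin (L+1)) := Finset.card_le_univ S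
      _ = L + 1 := Fintype.card_fin _
  have hst : s + t = L + 1 := by omega
  set W := ∑ m ∈ S, w m with hW
  set D := ∑ m ∈ S, (a - w m) with hD
  have hDW : D + W = s * a := by
    have h : ∑ m ∈ S, ((a - w m) + w m) = ∑ m ∈ S, a :=
      Finset.sum_congr rfl (fun m hm => by
        have hwm : w m ≤ a := by simpa [hS] using hm
        omega)
    rw [hD, hW, ← Finset.sum_add_distrib, h]
    simp [Finset.sum_const, hscard, Nat.mul_comm]
  have hN1 : s + k * D ≤ n.choose k := by
    calc s + k * D = ∑ m ∈ S, (1 + k * (a - w m)) := by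
          rw [Finset.sum_add_distrib, Finset.sum_const, ← Finset.mul_sum]
          simp [hscard, hD]
      _ ≤ ∑ m ∈ S, (A m).card := Finset.sum_le_sum hAcard
      _ ≤ n.choose k := hsum2
  have hN3 : W + t * (a + 1) ≤ L * a := by
    have hcompl : Sᶜ.card = t := by
      rw [Finset.card_compl, Fintype.card_fin]
    have hlow : Sᶜ.card * (a + 1) ≤ ∑ m ∈ Sᶜ, w m := by
      have := Finset.card_nsmul_le_sum Sᶜ w (a+1) (fun m hm => by
        simp only [hS, Finset.mem_compl, Finset.mem_filter, Finset.mem_univ, true_and] at hm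
        omega)
      simpa using this
    have htot : W + ∑ m ∈ Sᶜ, w m = ∑ m, w m := Finset.sum_add_sum_compl S w
    rw [hcompl] at hlow
    have hts : (∑ m, w m) ≤ L * a := hsum
    linarith
  -- final arithmetic
  have q2 : k * W + k * (t * (a+1)) ≤ k * (L * a) := by
    rw [← Nat.mul_add]; exact Nat.mul_le_mul_left k hN3
  have q1 : k * D + k * W = k * (s * a) := by rw [← Nat.mul_add, hDW]
  have q3 : k * (s * a) + k * (t * a) = k * (L * a) + k * a := by
    rw [← Nat.mul_add, ← Nat.add_mul, hst]; ring
  have q4 : t ≤ k * t := Nat.le_mul_of_pos_left t (by omega)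
  have hfin : L + 1 + k * a ≤ n.choose k := by nlinarith [hN1, q1, q2, q3, q4, hst]
  have hfin2 : L + 1 ≤ n.choose k - k * a := Nat.le_sub_of_add_le hfin
  have := le_trans hfin2 hL2
  omega
end

section
/- Let w, ℓ, s, t be positive integers and let J_1, J_2, ..., J_ℓ be subsets of {1, ..., w}, each of size at least s. If ℓ < max{ binom(w,t) / binom(w-s,t), t+1 } (the first quantity in the maximum taken as a rational number), then there exists a subset X ⊆ {1, ..., w} with |X| ≤ t such that X ∩ J_m ≠ ∅ for every m ∈ {1, ..., ℓ}. -/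
/-- Lemma `nesting`: given positive integers `w, ℓ, s, t`
and subsets `J_1, …, J_ℓ` of `{1, …, w}`, each of size at least `s`, if
`ℓ < max { C(w,t)/C(w-s,t), t+1 }` (the first quantity in the maximum taken as
a rational number), then there is a subset `X` of `{1, …, w}` of size at most
`t` intersecting every `J_m`. -/
theorem stmt13 (w ℓ s t : ℕ) (hw : 0 < w) (hℓ : 0 < ℓ) (hs : 0 < s)
    (ht : 0 < t)
    (J : Fin ℓ → Finset (Fin w)) (hJ : ∀ m, s ≤ (J m).card)
    (hmax : (ℓ : ℚ) <
      max (((w.choose t : ℕ) : ℚ) / (((w - s).choose t : ℕ) : ℚ))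
        (((t : ℕ) : ℚ) + 1)) :
    ∃ X : Finset (Fin w), X.card ≤ t ∧ ∀ m, (X ∩ J m).Nonempty := by
  classical
  by_cases hcase : ℓ ≤ t
  · have hne : ∀ m, (J m).Nonempty := fun m => Finset.card_pos.mp (lt_of_lt_of_le hs (hJ m))
    choose f hf using hne
    refine ⟨Finset.image f Finset.univ, ?_, ?_⟩
    · calc (Finset.image f Finset.univ).card ≤ (Finset.univ : Finset (Fin ℓ)).card :=
            Finset.card_image_le
        _ = ℓ := by simp
        _ ≤ t := hcase
    · intro m
      exact ⟨f m, Finset.mem_inter.mpr ⟨Finset.mem_image_of_mem f (Finset.mem_univ m), hf m⟩⟩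
  · push_neg at hcase
    have h2 : (ℓ : ℚ) < ((w.choose t : ℕ) : ℚ) / (((w - s).choose t : ℕ) : ℚ) := by
      rcases le_or_gt (((t : ℕ) : ℚ) + 1)
          (((w.choose t : ℕ) : ℚ) / (((w - s).choose t : ℕ) : ℚ)) with h | h
      · rwa [max_eq_left h] at hmax
      · have : (t : ℚ) + 1 ≤ (ℓ : ℚ) := by exact_mod_cast hcase
        rw [max_eq_right h.le] at hmax
        linarith
    have hpos : 0 < (((w - s).choose t : ℕ) : ℚ) := by
      rcases eq_or_lt_of_le (by positivity : (0:ℚ) ≤ (((w - s).choose t : ℕ) : ℚ)) with h | h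
      · exfalso
        rw [← h, div_zero] at h2
        have : (0:ℚ) < (ℓ:ℚ) := by exact_mod_cast hℓ
        linarith
      · exact h
    have hkey : ℓ * (w - s).choose t < w.choose t := by
      have := (lt_div_iff₀ hpos).mp h2
      exact_mod_cast this
    set S := Finset.powersetCard t (Finset.univ : Finset (Fin w)) with hS
    have hScard : S.card = w.choose t := by
      rw [hS, Finset.card_powersetCard, Finset.card_univ, Fintype.card_fin]
    set Bad := S.filter (fun X => ∃ m, X ∩ J m = ∅) with hBad
    have hBadcard : Bad.card ≤ ℓ * (w - s).choose t := by
      have hsub : Bad ⊆ Finset.univ.biUnion (fun m => S.filter (fun X => X ∩ J m = ∅)) := by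
        intro X hX
        simp only [hBad, Finset.mem_filter] at hX
        obtain ⟨hXS, m, hm⟩ := hX
        exact Finset.mem_biUnion.mpr ⟨m, Finset.mem_univ m, Finset.mem_filter.mpr ⟨hXS, hm⟩⟩
      calc Bad.card ≤ _ := Finset.card_le_card hsub
        _ ≤ ∑ m, (S.filter (fun X => X ∩ J m = ∅)).card := Finset.card_biUnion_le
        _ ≤ ∑ _m : Fin ℓ, (w - s).choose t := by
            apply Finset.sum_le_sum
            intro m _
            have h1 : S.filter (fun X => X ∩ J m = ∅) ⊆ Finset.powersetCard t (J m)ᶜ := by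
              intro X hX
              simp only [Finset.mem_filter, hS, Finset.mem_powersetCard] at hX ⊢
              obtain ⟨⟨_, hcard⟩, hdis⟩ := hX
              refine ⟨?_, hcard⟩
              intro x hx
              simp only [Finset.mem_compl]
              intro hxJ
              have hx2 : x ∈ X ∩ J m := Finset.mem_inter.mpr ⟨hx, hxJ⟩
              rw [hdis] at hx2
              exact absurd hx2 (Finset.notMem_empty x)
            calc (S.filter (fun X => X ∩ J m = ∅)).card
                ≤ (Finset.powersetCard t (J m)ᶜ).card := Finset.card_le_card h1
              _ = ((J m)ᶜ.card).choose t := Finset.card_powersetCard _ _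
              _ ≤ (w - s).choose t := by
                  apply Nat.choose_le_choose
                  rw [Finset.card_compl, Fintype.card_fin]
                  have := hJ m
                  omega
        _ = ℓ * (w - s).choose t := by simp [Finset.sum_const, mul_comm]
    have hex : ∃ X ∈ S, X ∉ Bad := by
      by_contra h
      push_neg at h
      have := Finset.card_le_card h
      omega
    obtain ⟨X, hXS, hXB⟩ := hex
    refine ⟨X, ?_, ?_⟩
    · have := (Finset.mem_powersetCard.mp hXS).2
      omega
    · intro m
      rw [Finset.nonempty_iff_ne_empty]
      intro hemp
      exact hXB (Finset.mem_filter.mpr ⟨hXS, m, hemp⟩)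
end

section
/- Let k < n be positive integers and define the rational sequence (θ_w) for w ∈ {0, 1, ..., n-k-1} by θ_w = (1/(n-k-w)) · ( binom(n-w, k) - (n-k-w+1) ). If k = 1 then θ_w = 0 for every w ∈ {0, ..., n-k-1}, and if k > 1 then the sequence is strictly decreasing, i.e., θ_{w+1} < θ_w for every w ∈ {0, ..., n-k-2}. -/
/-- The rational sequence `θ_w = (1/(n-k-w)) (C(n-w,k) - (n-k-w+1))` of
Lemma `vartheta`. -/
noncomputable def theta (n k : ℕ) (w : ℕ) : ℚ :=
  (1 / ((n : ℚ) - (k : ℚ) - (w : ℚ))) *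
    ((((n - w).choose k : ℕ) : ℚ) - ((n : ℚ) - (k : ℚ) - (w : ℚ) + 1))

/-- Lemma `vartheta`: for positive integers `k < n`, the
sequence `(θ_w)_{w ∈ {0,…,n-k-1}}` is identically zero when `k = 1` and is
strictly decreasing when `k > 1`. -/
theorem stmt14 (n k : ℕ) (hk : 0 < k) (hkn : k < n) :
    (k = 1 → ∀ w : ℕ, w + 1 ≤ n - k → theta n k w = 0) ∧
    (1 < k → ∀ w : ℕ, w + 2 ≤ n - k → theta n k (w + 1) < theta n k w) := by
  constructor
  · rintro rfl w hw
    have hwn : w ≤ n := by omega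
    unfold theta
    rw [Nat.choose_one_right]
    have h1 : ((n - w : ℕ) : ℚ) = (n : ℚ) - w := by
      rw [Nat.cast_sub hwn]
    rw [h1]
    push_cast
    ring
  · intro hk2 w hw
    set m := n - w with hm
    have hm2 : k + 2 ≤ m := by omega
    have hwn : w ≤ n := by omega
    have hmw : n - (w + 1) = m - 1 := by omega
    -- key choose identity
    have hchoose : (m - 1).choose k * m = m.choose k * (m - k) := by
      have := Nat.choose_mul_succ_eq (m - 1) k
      have h1 : m - 1 + 1 = m := by omega
      rwa [h1] at this
    have hC1 : k + 1 ≤ (m - 1).choose k := by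
      calc k + 1 = (k + 1).choose k := (Nat.choose_succ_self_right k).symm
        _ ≤ (m - 1).choose k := Nat.choose_le_choose k (by omega)
    -- rational abbreviations
    set c0 : ℚ := (m.choose k : ℚ) with hc0
    set c1 : ℚ := ((m - 1).choose k : ℚ) with hc1
    set dq : ℚ := (m : ℚ) - (k : ℚ) with hdq
    have hmq : ((m : ℕ) : ℚ) = (n : ℚ) - w := by
      rw [hm, Nat.cast_sub hwn]
    have hm1q : (((m - 1 : ℕ)) : ℚ) = (n : ℚ) - w - 1 := by
      rw [Nat.cast_sub (by omega : 1 ≤ m), hmq]; push_cast; ring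
    have hdq2 : 2 ≤ dq := by
      rw [hdq]
      have : ((k + 2 : ℕ) : ℚ) ≤ (m : ℚ) := by exact_mod_cast hm2
      push_cast at this; linarith
    have hkq2 : (2 : ℚ) ≤ (k : ℚ) := by exact_mod_cast hk2
    have hc1k : (k : ℚ) + 1 ≤ c1 := by
      rw [hc1]; exact_mod_cast hC1
    have hkey : c1 * ((m : ℕ) : ℚ) = c0 * dq := by
      have h := congrArg (fun x : ℕ => (x : ℚ)) hchoose
      push_cast [Nat.cast_sub (by omega : k ≤ m)] at h
      rw [hc0, hc1, hdq]
      linarith [h]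
    have hmdk : ((m : ℕ) : ℚ) = dq + (k : ℚ) := by rw [hdq]; ring
    -- express the two theta values
    have hθw : theta n k w = (1 / dq) * (c0 - (dq + 1)) := by
      unfold theta
      have e1 : (n : ℚ) - k - w = dq := by rw [hdq, hmq]; ring
      rw [e1, ← hm, ← hc0]
    have hθw1 : theta n k (w + 1) = (1 / (dq - 1)) * (c1 - dq) := by
      unfold theta
      rw [hmw]
      have e2 : (n : ℚ) - k - ((w + 1 : ℕ) : ℚ) = dq - 1 := by
        push_cast; rw [hdq, hmq]; ring
      rw [e2, ← hc1]
      ring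
    rw [hθw, hθw1]
    rw [one_div_mul_eq_div, one_div_mul_eq_div]
    rw [div_lt_div_iff₀ (by linarith) (by linarith)]
    -- polynomial inequality
    have hkey' : c1 * (dq + (k : ℚ)) = c0 * dq := by rw [← hmdk]; exact hkey
    have hkey'' : c0 * dq * (dq - 1) = c1 * (dq + (k : ℚ)) * (dq - 1) := by
      rw [hkey']
    have hpos : 0 ≤ dq * ((k : ℚ) - 1) - (k : ℚ) := by nlinarith
    have hc1pos : (0 : ℚ) ≤ c1 := by linarith
    have key : (c1 - dq) * dq * dq < (c0 - (dq + 1)) * (dq - 1) * dq := by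
      nlinarith [hkey'', mul_nonneg hpos hc1pos]
    have hdqpos : (0 : ℚ) < dq := by linarith
    exact lt_of_mul_lt_mul_right key (le_of_lt hdqpos)
end

section
/- Let F = GF(q) be a finite field, let L be a positive integer, let C be a linear [n,k] MDS code over F with k/n ≥ 1 - 1/L, and let H be an (n-k) × n parity-check matrix of C. Then C is lightly-L-MDS if and only if for every choice of L+1 pairwise disjoint subsets J_0, J_1, ..., J_L ⊆ {1,...,n} satisfying (S1) |J_m| ≤ n-k for every m ∈ {0,...,L} and (S2) Σ_{m=0}^{L} |J_m| = L(n-k), the square L(n-k) × L(n-k) matrix M_{J_0,...,J_L}(H)—whose rows are partitioned into L blocks of n-k rows, where for m ∈ {1,...,L} the m-th block row equals (−H_{J_0} | 0 | ... | 0 | H_{J_m} | 0 | ... | 0), with −H_{J_0} occupying the first |J_0| columns and H_{J_m} occupying the block of |J_m| columns corresponding to J_m, and H_{J} denoting the submatrix of H formed by the columns indexed by J—has nonzero determinant. -/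
/-- A linear code `C ⊆ F^ι` of dimension `k` and minimum distance `d` is
lightly `L`-MDS if there are no `L+1` nonzero vectors, each of Hamming weight
at most `d - 1`, lying in the same coset of `C`, having pairwise disjoint
supports, and whose Hamming weights sum to at most `L(n-k)`. -/
noncomputable def IsLightlyLMDS {F : Type*} [Field F] [DecidableEq F]
    {ι : Type*} [Fintype ι] (k L : ℕ) (C : Submodule F (ι → F)) : Prop :=
  ¬∃ e : Fin (L + 1) → (ι → F),
      (∀ m, e m ≠ 0) ∧
      (∀ m, hammingNorm (e m) ≤ minHammingDist C - 1) ∧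
      (∀ m m', e m - e m' ∈ C) ∧
      (Pairwise fun m m' =>
        Disjoint (Function.support (e m)) (Function.support (e m'))) ∧
      (∑ m, hammingNorm (e m)) ≤ L * (Fintype.card ι - k)

/-- The block matrix `M_{J_0, J_1, …, J_L}(H)`: its rows are partitioned into
`L` blocks of `r` rows (indexed by `Fin L × Fin r`), its columns are indexed
by the disjoint union of `J_0, J_1, …, J_L`, the `m`-th block row being
`(-H_{J_0} | 0 | ⋯ | 0 | H_{J_m} | 0 | ⋯ | 0)`. -/
def blockMat {F : Type*} [Field F] {n r L : ℕ}
    (H : Matrix (Fin r) (Fin n) F) (J : Fin (L + 1) → Finset (Fin n)) :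
    Matrix (Fin L × Fin r) ((m : Fin (L + 1)) × {x : Fin n // x ∈ J m}) F :=
  fun li c =>
    if (c.1 : ℕ) = 0 then -H li.2 c.2.val
    else if (c.1 : ℕ) = (li.1 : ℕ) + 1 then H li.2 c.2.val
    else 0

open Finset Matrix

theorem mul_tsub_le_of_one_sub_div_le_div {n k L : ℕ}
    (hrate : 1 - 1 / (L : ℚ) ≤ (k : ℚ) / (n : ℚ)) : L * (n - k) ≤ n := by
  rcases Nat.eq_zero_or_pos L with rfl | hL
  · simp
  rcases le_or_gt n k with hnk | hkn
  · simp [Nat.sub_eq_zero_of_le hnk]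
  have hL' : (0 : ℚ) < L := by exact_mod_cast hL
  have hn' : (0 : ℚ) < n := by exact_mod_cast hkn.trans_le' k.zero_le
  rw [one_sub_div hL'.ne', div_le_div_iff₀ hL' hn'] at hrate
  rw [← Nat.cast_le (α := ℚ)]
  push_cast [hkn.le]
  nlinarith

theorem minHammingDist_le_hammingNorm {F ι : Type*} [Field F] [DecidableEq F] [Fintype ι]
    {C : Submodule F (ι → F)} {c : ι → F} (hc : c ∈ C) (h0 : c ≠ 0) :
    minHammingDist C ≤ hammingNorm c :=
  Nat.sInf_le ⟨c, hc, h0, rfl⟩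

theorem eq_zero_of_mem_of_hammingNorm_lt {F ι : Type*} [Field F] [DecidableEq F] [Fintype ι]
    {C : Submodule F (ι → F)} {c : ι → F} (hc : c ∈ C) (hlt : hammingNorm c < minHammingDist C) :
    c = 0 := by
  by_contra h0
  exact (minHammingDist_le_hammingNorm hc h0).not_gt hlt

theorem hammingNorm_le_card_of_support_subset {ι β : Type*} [Fintype ι] [Zero β]
    [DecidableEq β] {x : ι → β} {s : Finset ι} (h : Function.support x ⊆ s) :
    hammingNorm x ≤ #s :=
  card_le_card fun _ hi => h (mem_filter.1 hi).2

theorem Matrix.det_submatrix_id_equiv_eq_zero_iff {m n R : Type*} [Fintype m] [DecidableEq m]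
    [Fintype n] [CommRing R] [IsDomain R] (A : Matrix m n R) (e : m ≃ n) :
    (A.submatrix id e).det = 0 ↔ ∃ v ≠ 0, A *ᵥ v = 0 := by
  rw [← exists_mulVec_eq_zero_iff]
  refine ⟨fun ⟨w, hw0, hw⟩ => ⟨w ∘ e.symm, ?_, ?_⟩, fun ⟨v, hv0, hv⟩ => ⟨v ∘ e, ?_, ?_⟩⟩
  · simpa [Function.comp_def, funext_iff, e.symm.surjective.forall] using hw0
  · simpa [submatrix_mulVec_equiv] using hw
  · simpa [Function.comp_def, funext_iff, e.surjective.forall] using hv0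
  · simp [submatrix_mulVec_equiv, Function.comp_def, hv]

namespace Finset

variable {ι α : Type*} [Fintype ι] [Fintype α] [DecidableEq α]

theorem exists_pairwise_disjoint_superset_card_sum_eq_succ {c : ℕ} (S : ι → Finset α)
    (hdisj : Pairwise fun i j => Disjoint (S i) (S j)) (hle : ∀ i, #(S i) ≤ c)
    (hc : ∑ i, #(S i) < Fintype.card ι * c) (hα : ∑ i, #(S i) < Fintype.card α) :
    ∃ J : ι → Finset α, (∀ i, S i ⊆ J i) ∧ (Pairwise fun i j => Disjoint (J i) (J j)) ∧
      (∀ i, #(J i) ≤ c) ∧ ∑ i, #(J i) = ∑ i, #(S i) + 1 := by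
  classical
  obtain ⟨i₀, hi₀⟩ : ∃ i, #(S i) < c := by
    by_contra! h
    have := card_nsmul_le_sum univ (fun i => #(S i)) c fun i _ => h i
    simp only [card_univ, smul_eq_mul] at this
    omega
  have hU : #(univ.biUnion S) < #(univ : Finset α) := by
    rwa [card_biUnion fun i _ j _ hij => hdisj hij, card_univ]
  obtain ⟨x, -, hx⟩ := exists_mem_notMem_of_card_lt_card hU
  have hxS : ∀ i, x ∉ S i := fun i hi => hx (mem_biUnion.2 ⟨i, mem_univ i, hi⟩)
  set J : ι → Finset α := fun i => if i = i₀ then insert x (S i) else S i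
  have hJcard : ∀ i, #(J i) = #(S i) + if i = i₀ then 1 else 0 := fun i => by
    by_cases h : i = i₀ <;> simp [J, h, card_insert_of_notMem (hxS _)]
  refine ⟨J, fun i => ?_, fun i j hij => ?_, fun i => ?_, ?_⟩
  · by_cases h : i = i₀ <;> simp [J, h, subset_insert]
  · by_cases hi : i = i₀ <;> by_cases hj : j = i₀
    · exact absurd (hi.trans hj.symm) hij
    · simpa [J, hi, hj, hxS j] using hdisj (hi ▸ hij)
    · simpa [J, hi, hj, hxS i] using hdisj (hj ▸ hij)
    · simpa [J, hi, hj] using hdisj hij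
  · rw [hJcard]; split_ifs with h <;> [exact h ▸ hi₀; simpa using hle i]
  · simp [hJcard, sum_add_distrib]

theorem exists_pairwise_disjoint_superset_card_sum_eq {c N : ℕ} (S : ι → Finset α)
    (hdisj : Pairwise fun i j => Disjoint (S i) (S j)) (hle : ∀ i, #(S i) ≤ c)
    (hSN : ∑ i, #(S i) ≤ N) (hc : N ≤ Fintype.card ι * c) (hα : N ≤ Fintype.card α) :
    ∃ J : ι → Finset α, (∀ i, S i ⊆ J i) ∧ (Pairwise fun i j => Disjoint (J i) (J j)) ∧
      (∀ i, #(J i) ≤ c) ∧ ∑ i, #(J i) = N := by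
  obtain ⟨D, rfl⟩ := Nat.exists_eq_add_of_le hSN
  induction D with
  | zero => exact ⟨S, fun i => subset_rfl, hdisj, hle, rfl⟩
  | succ D ih =>
    obtain ⟨J, hSJ, hJdisj, hJle, hJsum⟩ := ih (by omega) (by omega) (by omega)
    obtain ⟨J', hJJ', hJ'disj, hJ'le, hJ'sum⟩ :=
      exists_pairwise_disjoint_superset_card_sum_eq_succ J hJdisj hJle (by omega) (by omega)
    exact ⟨J', fun i => (hSJ i).trans (hJJ' i), hJ'disj, hJ'le, by omega⟩

end Finset

section BlockVec

variable {ι α M : Type*} [DecidableEq α] [Zero M] (J : ι → Finset α)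

def blockVec (v : ((i : ι) × {x : α // x ∈ J i}) → M) (i : ι) : α → M :=
  fun x => if h : x ∈ J i then v ⟨i, x, h⟩ else 0

variable {J}

theorem support_blockVec_subset (v : ((i : ι) × {x : α // x ∈ J i}) → M) (i : ι) :
    Function.support (blockVec J v i) ⊆ J i := fun x hx => by
  by_contra h
  exact hx (dif_neg h)

theorem blockVec_eq_zero_iff {v : ((i : ι) × {x : α // x ∈ J i}) → M} :
    (∀ i, blockVec J v i = 0) ↔ v = 0 := by
  refine ⟨fun h => funext fun ⟨i, x, hx⟩ => ?_, fun h i => funext fun x => ?_⟩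
  · simpa [blockVec, hx] using congrFun (h i) x
  · simp [blockVec, h]

theorem blockVec_restrict {e : ι → α → M} (he : ∀ i, Function.support (e i) ⊆ J i) :
    blockVec J (fun c => e c.1 c.2) = e := by
  ext i x
  by_cases hx : x ∈ J i
  · simp [blockVec, hx]
  · simpa [blockVec, hx, eq_comm] using fun h => hx (he i h)

theorem mulVec_blockVec {R β : Type*} [NonUnitalNonAssocSemiring R] [Fintype α]
    (A : Matrix β α R) (v : ((i : ι) × {x : α // x ∈ J i}) → R) (i : ι) (b : β) :
    (A *ᵥ blockVec J v i) b = ∑ x : {x // x ∈ J i}, A b x * v ⟨i, x⟩ := by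
  rw [mulVec, dotProduct, ← sum_subset (subset_univ (J i)) fun x _ hx => by simp [blockVec, hx],
    ← sum_attach]
  exact sum_congr rfl fun x _ => by simp [blockVec, x.2]

end BlockVec

section BlockMat

variable {F : Type*} [Field F] {n r L : ℕ} (H : Matrix (Fin r) (Fin n) F)
  (J : Fin (L + 1) → Finset (Fin n))

theorem blockMat_apply (l : Fin L) (i : Fin r) (m : Fin (L + 1)) (x : {x // x ∈ J m}) :
    blockMat H J (l, i) ⟨m, x⟩ =
      (if m = l.succ then H i x else 0) - if m = 0 then H i x else 0 := by
  rcases Fin.eq_zero_or_eq_succ m with rfl | ⟨j, rfl⟩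
  · simp [blockMat, (Fin.succ_ne_zero l).symm]
  · simp [blockMat, Fin.succ_ne_zero, Fin.val_succ, Fin.val_inj]

theorem blockMat_mulVec_apply (v : ((m : Fin (L + 1)) × {x : Fin n // x ∈ J m}) → F)
    (l : Fin L) (i : Fin r) :
    (blockMat H J *ᵥ v) (l, i) = (H *ᵥ blockVec J v l.succ) i - (H *ᵥ blockVec J v 0) i := by
  rw [mulVec_blockVec, mulVec_blockVec, mulVec, dotProduct]
  simp only [Fintype.sum_sigma, blockMat_apply, sub_mul, ite_mul, zero_mul, sum_sub_distrib,
    sum_ite_irrel, sum_const_zero, Fintype.sum_ite_eq']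

theorem blockMat_mulVec_eq_zero_iff (v : ((m : Fin (L + 1)) × {x : Fin n // x ∈ J m}) → F) :
    blockMat H J *ᵥ v = 0 ↔ ∀ m, H *ᵥ blockVec J v m = H *ᵥ blockVec J v 0 := by
  simp only [funext_iff, Prod.forall, Fin.forall_fin_succ (P := fun m => ∀ i, _ = _),
    blockMat_mulVec_apply, Pi.zero_apply, sub_eq_zero, implies_true, true_and]

end BlockMat

section LightlyMDS

variable {F : Type*} [Field F] [DecidableEq F] {n k L : ℕ} {C : Submodule F (Fin n → F)}
  {H : Matrix (Fin (n - k)) (Fin n) F}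

theorem not_isLightlyLMDS_of_blockMat_mulVec_eq_zero (hHC : ∀ c, c ∈ C ↔ H *ᵥ c = 0)
    (hd : minHammingDist C = n - k + 1) {J : Fin (L + 1) → Finset (Fin n)}
    (hJdisj : Pairwise fun m m' => Disjoint (J m) (J m')) (hJle : ∀ m, #(J m) ≤ n - k)
    (hJsum : ∑ m, #(J m) ≤ L * (n - k)) {v : ((m : Fin (L + 1)) × {x // x ∈ J m}) → F}
    (hv0 : v ≠ 0) (hv : blockMat H J *ᵥ v = 0) : ¬IsLightlyLMDS k L C := by
  have hsupp := support_blockVec_subset v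
  have hwt m : hammingNorm (blockVec J v m) ≤ n - k :=
    (hammingNorm_le_card_of_support_subset (hsupp m)).trans (hJle m)
  have hsyn := (blockMat_mulVec_eq_zero_iff H J v).1 hv
  have hne m : blockVec J v m ≠ 0 := by
    intro hm
    refine hv0 (blockVec_eq_zero_iff.1 fun m' => eq_zero_of_mem_of_hammingNorm_lt (C := C) ?_ ?_)
    · rw [hHC, hsyn m', ← hsyn m, hm, mulVec_zero]
    · exact hd ▸ Nat.lt_succ_of_le (hwt m')
  refine not_not.2 ⟨blockVec J v, hne, fun m => hd ▸ hwt m, fun m m' => ?_, fun m m' h => ?_, ?_⟩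
  · rw [hHC, mulVec_sub, hsyn m, hsyn m', sub_self]
  · exact (disjoint_coe.2 (hJdisj h)).mono (hsupp m) (hsupp m')
  · rw [Fintype.card_fin]
    exact (sum_le_sum fun m _ => hammingNorm_le_card_of_support_subset (hsupp m)).trans hJsum

theorem exists_blockMat_mulVec_eq_zero_of_not_isLightlyLMDS (hHC : ∀ c, c ∈ C ↔ H *ᵥ c = 0)
    (hd : minHammingDist C = n - k + 1) (hLn : L * (n - k) ≤ n) (h : ¬IsLightlyLMDS k L C) :
    ∃ J : Fin (L + 1) → Finset (Fin n), (Pairwise fun m m' => Disjoint (J m) (J m')) ∧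
      (∀ m, #(J m) ≤ n - k) ∧ ∑ m, #(J m) = L * (n - k) ∧
      ∃ v ≠ 0, blockMat H J *ᵥ v = 0 := by
  obtain ⟨e, hne, hwt, hdiff, hdisj, hsum⟩ := not_not.1 h
  rw [hd, Nat.add_sub_cancel] at hwt
  rw [Fintype.card_fin] at hsum
  set S : Fin (L + 1) → Finset (Fin n) := fun m => {x | e m x ≠ 0}
  have hS m : Function.support (e m) = S m := by ext; simp [S]
  obtain ⟨J, hSJ, hJdisj, hJle, hJsum⟩ := exists_pairwise_disjoint_superset_card_sum_eq S
    (fun m m' hmm' => by simpa [← disjoint_coe, ← hS] using hdisj hmm') hwt hsum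
    (by rw [Fintype.card_fin]; exact Nat.mul_le_mul_right _ L.le_succ) (by simpa using hLn)
  have hsupp m : Function.support (e m) ⊆ J m := hS m ▸ coe_subset.2 (hSJ m)
  refine ⟨J, hJdisj, hJle, hJsum, fun c => e c.1 c.2, fun h => hne 0 ?_, ?_⟩
  · rw [← blockVec_restrict hsupp]
    exact blockVec_eq_zero_iff.2 h 0
  · rw [blockMat_mulVec_eq_zero_iff, blockVec_restrict hsupp]
    intro m
    rw [← sub_eq_zero, ← mulVec_sub, ← hHC]
    exact hdiff m 0

end LightlyMDS

theorem stmt15_general {F : Type*} [Field F] [DecidableEq F]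
    {n k L : ℕ}
    (C : Submodule F (Fin n → F))
    (hMDS : IsMDSCode k C)
    (hrate : 1 - 1 / (L : ℚ) ≤ (k : ℚ) / (n : ℚ))
    (H : Matrix (Fin (n - k)) (Fin n) F)
    (hHC : ∀ c : Fin n → F, c ∈ C ↔ H.mulVec c = 0) :
    IsLightlyLMDS k L C ↔
      ∀ J : Fin (L + 1) → Finset (Fin n),
        (Pairwise fun m m' => Disjoint (J m) (J m')) →
        (∀ m, (J m).card ≤ n - k) →
        (∑ m, (J m).card) = L * (n - k) →
        ∀ e : (Fin L × Fin (n - k)) ≃ ((m : Fin (L + 1)) × {x : Fin n // x ∈ J m}),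
          ((blockMat H J).submatrix id e).det ≠ 0 := by
  have hd : minHammingDist C = n - k + 1 := by simpa [IsMDSCode] using hMDS
  constructor
  · intro hlight J hJdisj hJle hJsum e hdet
    obtain ⟨v, hv0, hv⟩ := (det_submatrix_id_equiv_eq_zero_iff _ e).1 hdet
    exact not_isLightlyLMDS_of_blockMat_mulVec_eq_zero hHC hd hJdisj hJle hJsum.le hv0 hv hlight
  · intro hdet
    by_contra hlight
    obtain ⟨J, hJdisj, hJle, hJsum, v, hv0, hv⟩ :=
      exists_blockMat_mulVec_eq_zero_of_not_isLightlyLMDS hHC hd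
        (mul_tsub_le_of_one_sub_div_le_div hrate) hlight
    have hcard : Fintype.card (Fin L × Fin (n - k)) =
        Fintype.card ((m : Fin (L + 1)) × {x : Fin n // x ∈ J m}) := by
      simp [hJsum]
    exact hdet J hJdisj hJle hJsum (Fintype.equivOfCardEq hcard)
      ((det_submatrix_id_equiv_eq_zero_iff _ _).2 ⟨v, hv0, hv⟩)

/-- Lemma `lightly`: let `C` be a linear `[n,k]` MDS code
with `k/n ≥ 1 - 1/L`, and let `H` be an `(n-k) × n` parity-check matrix of
`C`.  Then `C` is lightly `L`-MDS if and only if for all pairwise disjoint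
subsets `J_0, …, J_L` of the coordinates with `|J_m| ≤ n-k` for all `m` and
`∑_m |J_m| = L(n-k)`, the square matrix `M_{J_0,…,J_L}(H)` has nonzero
determinant. -/
theorem stmt15 {F : Type*} [Field F] [Fintype F] [DecidableEq F]
    {n k L : ℕ} (hL : 1 ≤ L)
    (C : Submodule F (Fin n → F))
    (hk : Module.finrank F C = k)
    (hMDS : IsMDSCode k C)
    (hrate : 1 - 1 / (L : ℚ) ≤ (k : ℚ) / (n : ℚ))
    (H : Matrix (Fin (n - k)) (Fin n) F)
    (hHrank : H.rank = n - k)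
    (hHC : ∀ c : Fin n → F, c ∈ C ↔ H.mulVec c = 0) :
    IsLightlyLMDS k L C ↔
      ∀ J : Fin (L + 1) → Finset (Fin n),
        (Pairwise fun m m' => Disjoint (J m) (J m')) →
        (∀ m, (J m).card ≤ n - k) →
        (∑ m, (J m).card) = L * (n - k) →
        ∀ e : (Fin L × Fin (n - k)) ≃ ((m : Fin (L + 1)) × {x : Fin n // x ∈ J m}),
          ((blockMat H J).submatrix id e).det ≠ 0 :=
  stmt15_general C hMDS hrate H hHC
end

section
/- Let ρ ≥ 3 be an integer, let (ρ_0, ρ_1, ρ_2) be a partition of 2ρ with 2 ≤ ρ_0 ≤ ρ_1 ≤ ρ_2 < ρ, and let Υ_0 = {1,...,ρ_0}, Υ_1 = {ρ_0+1,...,ρ_0+ρ_1}, Υ_2 = {ρ_0+ρ_1+1,...,2ρ}. Let Φ be a field and let α = (α_1, ..., α_{2ρ}) ∈ Φ^{2ρ}. Define the 2ρ × 2ρ matrix M_ρ(α) with two block rows of ρ rows each: the first block row is (−V_0 | V_1 | 0) and the second is (−V_0 | 0 | V_2), where V_m = (α_ℓ^i) with i ranging over {0,...,ρ-1} (rows)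 and ℓ over Υ_m (columns). For m ∈ {0,1,2}, let σ_m(z) = Π_{ℓ ∈ Υ_m} (z − α_ℓ) = Σ_{j=0}^{ρ_m} σ_{m,j} z^{ρ_m − j}, and let E_ρ(α_{Υ_m}) be the (ρ − ρ_m) × ρ matrix whose i-th row (i ∈ {1,...,ρ−ρ_m}) has entries σ_{m,0}, σ_{m,1}, ..., σ_{m,ρ_m} in columns i, i+1, ..., i+ρ_m and zeros elsewhere; define the ρ × ρ matrix S_ρ(α) by stacking E_ρ(α_{Υ_0}), E_ρ(α_{Υ_1}), E_ρ(α_{Υ_2}). Then det(M_ρ(α)) ≠ 0 if and only if det(S_ρ(α)) ≠ 0 and, for every m ∈ {0,1,2}, the entries α_ℓ for ℓ ∈ Υ_m are pairwise distinct. -/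
/-!
Write `w_ℓ = (α_ℓ ^ (ρ-1), …, α_ℓ, 1)`. A vector `x` lies in the kernel of `M_ρ(α)` exactly
when the three block sums `∑_{ℓ ∈ Υ_m} x_ℓ w_ℓ` coincide. Row `i` of `E_ρ(α_{Υ_m})` pairs a
vector with the coefficients of `z ^ (ρ-1-i-ρ_m) σ_m(z)`, so it kills every `w_ℓ` with
`ℓ ∈ Υ_m`; since `E_ρ(α_{Υ_m})` has an upper unitriangular maximal minor, its kernel has
dimension `ρ_m`, so when the `α_ℓ`, `ℓ ∈ Υ_m`, are distinct the Vandermonde vectors `w_ℓ`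
span exactly that kernel. Hence `ker S_ρ(α) = ⋂_m ker E_ρ(α_{Υ_m})` consists of the common
values of the three block sums, and `M_ρ(α)` is singular iff two `α_ℓ` in one block coincide
(two equal columns) or this intersection is nonzero.
-/

open Polynomial

/-- The index sets `Υ₀, Υ₁, Υ₂` partitioning `{1, …, 2ρ}` (realized here as
`Fin (2ρ)`, 0-indexed): `Υ₀` consists of the first `ρ₀` indices, `Υ₁` of the
next `ρ₁` indices, and `Υ₂` of the remaining indices. -/
def Upsilon (ρ ρ₀ ρ₁ : ℕ) (m : Fin 3) : Finset (Fin (2 * ρ)) :=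
  Finset.univ.filter fun ℓ =>
    ((m : ℕ) = 0 ∧ (ℓ : ℕ) < ρ₀) ∨
    ((m : ℕ) = 1 ∧ ρ₀ ≤ (ℓ : ℕ) ∧ (ℓ : ℕ) < ρ₀ + ρ₁) ∨
    ((m : ℕ) = 2 ∧ ρ₀ + ρ₁ ≤ (ℓ : ℕ))

/-- `ρ_m` for `m ∈ {0,1,2}`. -/
def rhoPart (ρ₀ ρ₁ ρ₂ : ℕ) (m : Fin 3) : ℕ :=
  if (m : ℕ) = 0 then ρ₀ else if (m : ℕ) = 1 then ρ₁ else ρ₂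

/-- `σ_{m,j}`: the coefficient of `z^{ρ_m - j}` in the monic polynomial
`σ_m(z) = ∏_{ℓ ∈ Υ_m} (z - α_ℓ)`. -/
noncomputable def sigmaCoeff {R : Type*} [CommRing R] (ρ ρ₀ ρ₁ ρ₂ : ℕ)
    (α : Fin (2 * ρ) → R) (m : Fin 3) (j : ℕ) : R :=
  (∏ ℓ ∈ Upsilon ρ ρ₀ ρ₁ m, (Polynomial.X - Polynomial.C (α ℓ))).coeff
    (rhoPart ρ₀ ρ₁ ρ₂ m - j)

/-- The `2ρ × 2ρ` matrix `M_ρ(α)` with block rows `(-V₀ | V₁ | 0)` and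
`(-V₀ | 0 | V₂)`, where `V_m = (α_ℓ^i)` with `i ∈ {0,…,ρ-1}` (rows, the
exponent of row `r` being `r % ρ`) and `ℓ ∈ Υ_m` (columns). -/
def Mmat {R : Type*} [CommRing R] (ρ ρ₀ ρ₁ : ℕ) (α : Fin (2 * ρ) → R) :
    Matrix (Fin (2 * ρ)) (Fin (2 * ρ)) R :=
  fun r c =>
    if (c : ℕ) < ρ₀ then -(α c ^ ((r : ℕ) % ρ))
    else if (c : ℕ) < ρ₀ + ρ₁ then
      (if (r : ℕ) < ρ then α c ^ ((r : ℕ) % ρ) else 0)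
    else
      (if ρ ≤ (r : ℕ) then α c ^ ((r : ℕ) % ρ) else 0)

/-- The `ρ × ρ` matrix `S_ρ(α)` obtained by stacking the matrices
`E_ρ(α_{Υ₀})`, `E_ρ(α_{Υ₁})`, `E_ρ(α_{Υ₂})`, where the `i`-th row
(`0`-indexed) of `E_ρ(α_{Υ_m})` carries `σ_{m,0}, …, σ_{m,ρ_m}` in columns
`i, i+1, …, i+ρ_m` and zeros elsewhere. -/
noncomputable def Smat {R : Type*} [CommRing R] (ρ ρ₀ ρ₁ ρ₂ : ℕ)
    (α : Fin (2 * ρ) → R) : Matrix (Fin ρ) (Fin ρ) R :=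
  fun r c =>
    if (r : ℕ) < ρ - ρ₀ then
      (if (r : ℕ) ≤ (c : ℕ) ∧ (c : ℕ) ≤ (r : ℕ) + ρ₀ then
        sigmaCoeff ρ ρ₀ ρ₁ ρ₂ α 0 ((c : ℕ) - (r : ℕ)) else 0)
    else if (r : ℕ) < (ρ - ρ₀) + (ρ - ρ₁) then
      (if (r : ℕ) - (ρ - ρ₀) ≤ (c : ℕ) ∧
          (c : ℕ) ≤ ((r : ℕ) - (ρ - ρ₀)) + ρ₁ then
        sigmaCoeff ρ ρ₀ ρ₁ ρ₂ α 1 ((c : ℕ) - ((r : ℕ) - (ρ - ρ₀))) else 0)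
    else
      (if (r : ℕ) - ((ρ - ρ₀) + (ρ - ρ₁)) ≤ (c : ℕ) ∧
          (c : ℕ) ≤ ((r : ℕ) - ((ρ - ρ₀) + (ρ - ρ₁))) + ρ₂ then
        sigmaCoeff ρ ρ₀ ρ₁ ρ₂ α 2
          ((c : ℕ) - ((r : ℕ) - ((ρ - ρ₀) + (ρ - ρ₁)))) else 0)

open Matrix

section BandMatrix

variable {R : Type*} [CommRing R]

def revPowers (n : ℕ) (a : R) : Fin n → R := fun c => a ^ (c.rev : ℕ)

def bandMatrix (p : R[X]) (n : ℕ) : Matrix (Fin (n - p.natDegree)) (Fin n) R :=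
  Matrix.of fun i c =>
    if (i : ℕ) ≤ c ∧ (c : ℕ) ≤ i + p.natDegree then p.coeff (p.natDegree - (c - i)) else 0

theorem bandMatrix_apply (p : R[X]) (n : ℕ) (i : Fin (n - p.natDegree)) (c : Fin n) :
    bandMatrix p n i c =
      if (i : ℕ) ≤ c ∧ (c : ℕ) ≤ i + p.natDegree then p.coeff (p.natDegree - (c - i)) else 0 :=
  rfl

theorem bandMatrix_mulVec_revPowers (p : R[X]) (n : ℕ) (a : R) (i : Fin (n - p.natDegree)) :
    (bandMatrix p n *ᵥ revPowers n a) i = a ^ (n - 1 - i - p.natDegree) * p.eval a := by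
  have hi := i.isLt
  let q : R[X] := X ^ (n - 1 - i - p.natDegree) * p
  have hdeg : q.natDegree < n :=
    natDegree_mul_le.trans_lt <| by
      have := natDegree_X_pow_le (R := R) (n - 1 - i - p.natDegree); omega
  have hrow : ∀ c : Fin n, bandMatrix p n i c.rev = q.coeff c := by
    intro c
    simp only [q, bandMatrix, of_apply, Fin.val_rev, coeff_X_pow_mul']
    split_ifs with h1 h2 h2
    · congr 1; omega
    · omega
    · exact (coeff_eq_zero_of_natDegree_lt (by omega)).symm
    · rfl
  have heval : a ^ (n - 1 - i - p.natDegree) * p.eval a = q.eval a := by simp [q]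
  rw [heval, eval_eq_sum_range' hdeg, mulVec, dotProduct, ← Equiv.sum_comp Fin.revPerm]
  simp only [Fin.revPerm_apply, revPowers, Fin.rev_rev, hrow]
  exact Fin.sum_univ_eq_sum_range (fun k => q.coeff k * a ^ k) n

theorem bandMatrix_prod_X_sub_C_mulVec_revPowers {ι : Type*} {s : Finset ι} (a : ι → R)
    (n : ℕ) {i : ι} (hi : i ∈ s) :
    bandMatrix (∏ j ∈ s, (X - C (a j))) n *ᵥ revPowers n (a i) = 0 := by
  ext k
  rw [bandMatrix_mulVec_revPowers, eval_prod, Pi.zero_apply]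
  exact mul_eq_zero_of_right _ (Finset.prod_eq_zero hi (by simp))

variable {K : Type*} [Field K]

theorem rank_bandMatrix {p : K[X]} (hp : p ≠ 0) (n : ℕ) :
    (bandMatrix p n).rank = n - p.natDegree := by
  refine le_antisymm (rank_le_height _) ?_
  let A := (bandMatrix p n).submatrix id (Fin.castLE (Nat.sub_le n p.natDegree))
  have hA : A.IsUpperTriangular := fun i j hij => by
    simp only [id, Fin.lt_def] at hij
    simp only [A, bandMatrix, submatrix_apply, of_apply, id, Fin.val_castLE]
    rw [if_neg (by omega)]
  have hdet : A.det ≠ 0 := by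
    rw [det_of_isUpperTriangular hA, Finset.prod_ne_zero_iff]
    intro i _
    simpa [A, bandMatrix] using hp
  calc n - p.natDegree = A.rank := by
        rw [rank_of_isUnit A ((isUnit_iff_isUnit_det A).mpr hdet.isUnit), Fintype.card_fin]
    _ ≤ _ := rank_submatrix_le _ _ _

theorem finrank_ker_bandMatrix {p : K[X]} (hp : p ≠ 0) {n : ℕ} (hn : p.natDegree ≤ n) :
    Module.finrank K (LinearMap.ker (bandMatrix p n).mulVecLin) = p.natDegree := by
  have := LinearMap.finrank_range_add_finrank_ker (bandMatrix p n).mulVecLin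
  rw [← rank, rank_bandMatrix hp, Module.finrank_fin_fun] at this
  omega

theorem linearIndepOn_revPowers {ι : Type*} [DecidableEq ι] {s : Finset ι} {a : ι → K}
    (ha : Set.InjOn a s) {n : ℕ} (hs : s.card ≤ n) :
    LinearIndepOn K (fun i => revPowers n (a i)) (s : Set ι) := by
  rw [linearIndepOn_finset_iff]
  intro g hg k hk
  have hmoment : ∀ j < n, ∑ i ∈ s, g i * a i ^ j = 0 := fun j hj => by
    simpa [Finset.sum_apply, revPowers] using congrFun hg (Fin.rev ⟨j, hj⟩)
  let L := Lagrange.basis s a k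
  have hL : L.natDegree < n := by
    have := Finset.card_pos.mpr ⟨k, hk⟩
    rw [Lagrange.natDegree_basis ha hk]; omega
  calc g k = ∑ i ∈ s, g i * L.eval (a i) := by
        rw [Finset.sum_eq_single_of_mem k hk fun i hi hik =>
          by rw [Lagrange.eval_basis_of_ne hik.symm hi, mul_zero],
          Lagrange.eval_basis_self ha hk, mul_one]
    _ = ∑ j ∈ Finset.range n, L.coeff j * ∑ i ∈ s, g i * a i ^ j := by
        simp only [eval_eq_sum_range' hL, Finset.mul_sum]
        rw [Finset.sum_comm]
        exact Finset.sum_congr rfl fun j _ => Finset.sum_congr rfl fun i _ => by ring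
    _ = 0 := Finset.sum_eq_zero fun j hj => by
        rw [hmoment j (Finset.mem_range.mp hj), mul_zero]

theorem span_revPowers_eq_ker_bandMatrix {ι : Type*} [DecidableEq ι] {s : Finset ι} {a : ι → K}
    (ha : Set.InjOn a s) {n : ℕ} (hs : s.card ≤ n) :
    Submodule.span K ((fun i => revPowers n (a i)) '' s) =
      LinearMap.ker (bandMatrix (∏ i ∈ s, (X - C (a i))) n).mulVecLin := by
  have hdeg : (∏ i ∈ s, (X - C (a i))).natDegree = s.card :=
    natDegree_finsetProd_X_sub_C_eq_card s a
  have hne : ∏ i ∈ s, (X - C (a i)) ≠ 0 :=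
    (monic_prod_of_monic _ _ fun i _ => monic_X_sub_C (a i)).ne_zero
  refine Submodule.eq_of_le_of_finrank_le ?_ ?_
  · rw [Submodule.span_le]
    rintro _ ⟨i, hi, rfl⟩
    exact bandMatrix_prod_X_sub_C_mulVec_revPowers a n hi
  · rw [finrank_ker_bandMatrix hne (hdeg ▸ hs), hdeg, Set.image_eq_range,
      finrank_span_eq_card (linearIndepOn_revPowers ha hs)]
    simp

end BandMatrix

section Blocks

variable {ρ ρ₀ ρ₁ ρ₂ : ℕ}

theorem Fin.card_filter_le_val_lt {n a b : ℕ} (hb : b ≤ n) :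
    Finset.card {i : Fin n | a ≤ (i : ℕ) ∧ (i : ℕ) < b} = b - a := by
  rw [← Nat.card_Ico, ← Finset.card_map Fin.valEmbedding]
  congr 1
  ext k
  simp only [Finset.mem_map, Finset.mem_filter, Finset.mem_univ, true_and,
    Fin.valEmbedding_apply, Finset.mem_Ico]
  exact ⟨fun ⟨i, hi, hik⟩ => hik ▸ hi, fun hk => ⟨⟨k, by omega⟩, hk, rfl⟩⟩

@[simp]
theorem mem_Upsilon_zero {ℓ : Fin (2 * ρ)} : ℓ ∈ Upsilon ρ ρ₀ ρ₁ 0 ↔ (ℓ : ℕ) < ρ₀ := by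
  simp [Upsilon]

@[simp]
theorem mem_Upsilon_one {ℓ : Fin (2 * ρ)} :
    ℓ ∈ Upsilon ρ ρ₀ ρ₁ 1 ↔ ρ₀ ≤ (ℓ : ℕ) ∧ (ℓ : ℕ) < ρ₀ + ρ₁ := by
  simp [Upsilon]

@[simp]
theorem mem_Upsilon_two {ℓ : Fin (2 * ρ)} : ℓ ∈ Upsilon ρ ρ₀ ρ₁ 2 ↔ ρ₀ + ρ₁ ≤ (ℓ : ℕ) := by
  simp [Upsilon]

theorem card_Upsilon (hsum : ρ₀ + ρ₁ + ρ₂ = 2 * ρ) (m : Fin 3) :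
    (Upsilon ρ ρ₀ ρ₁ m).card = rhoPart ρ₀ ρ₁ ρ₂ m := by
  have key : ∀ a b, b ≤ 2 * ρ →
      Upsilon ρ ρ₀ ρ₁ m = ({ℓ | a ≤ (ℓ : ℕ) ∧ (ℓ : ℕ) < b} : Finset (Fin (2 * ρ))) →
      (Upsilon ρ ρ₀ ρ₁ m).card = b - a := fun a b hb h => h ▸ Fin.card_filter_le_val_lt hb
  fin_cases m
  · exact key 0 ρ₀ (by omega) (by ext ℓ; simp [Upsilon])
  · exact key ρ₀ (ρ₀ + ρ₁) (by omega) (by ext ℓ; simp [Upsilon]) |>.trans (by simp [rhoPart])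
  · refine key (ρ₀ + ρ₁) (2 * ρ) le_rfl (by ext ℓ; simp [Upsilon]) |>.trans ?_
    simp [rhoPart]; omega

theorem existsUnique_mem_Upsilon (ℓ : Fin (2 * ρ)) : ∃! m, ℓ ∈ Upsilon ρ ρ₀ ρ₁ m := by
  simp only [Upsilon, Finset.mem_filter, Finset.mem_univ, true_and]
  refine ⟨if (ℓ : ℕ) < ρ₀ then 0 else if (ℓ : ℕ) < ρ₀ + ρ₁ then 1 else 2, ?_, fun m hm => ?_⟩
  · split_ifs <;> simp <;> omega
  · fin_cases m <;> simp at hm ⊢ <;> split_ifs <;> simp <;> omega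

theorem sum_univ_eq_sum_Upsilon {M : Type*} [AddCommMonoid M] (f : Fin (2 * ρ) → M) :
    ∑ ℓ, f ℓ = ∑ m, ∑ ℓ ∈ Upsilon ρ ρ₀ ρ₁ m, f ℓ := by
  rw [Finset.sum_comm' (t' := Finset.univ) (s' := fun ℓ => {m | ℓ ∈ Upsilon ρ ρ₀ ρ₁ m})
    (by simp)]
  refine Finset.sum_congr rfl fun ℓ _ => ?_
  obtain ⟨m, hm, huniq⟩ := existsUnique_mem_Upsilon (ρ₀ := ρ₀) (ρ₁ := ρ₁) ℓ
  have hfiber : ({m' | ℓ ∈ Upsilon ρ ρ₀ ρ₁ m'} : Finset (Fin 3)) = {m} := by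
    ext m'
    simpa using ⟨huniq m', fun h => h ▸ hm⟩
  rw [hfiber, Finset.sum_singleton]

variable {R : Type*} [CommRing R]

def blockMoment (ρ₀ ρ₁ : ℕ) (α x : Fin (2 * ρ) → R) (m : Fin 3) : Fin ρ → R :=
  ∑ ℓ ∈ Upsilon ρ ρ₀ ρ₁ m, x ℓ • revPowers ρ (α ℓ)

variable (α : Fin (2 * ρ) → R)

theorem blockMoment_apply (x : Fin (2 * ρ) → R) (m : Fin 3) (c : Fin ρ) :
    blockMoment ρ₀ ρ₁ α x m c = ∑ ℓ ∈ Upsilon ρ ρ₀ ρ₁ m, x ℓ * α ℓ ^ (c.rev : ℕ) := by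
  simp [blockMoment, revPowers]

theorem Mmat_mulVec_apply (x : Fin (2 * ρ) → R) (r : Fin (2 * ρ)) :
    (Mmat ρ ρ₀ ρ₁ α *ᵥ x) r =
      ∑ ℓ ∈ Upsilon ρ ρ₀ ρ₁ (if (r : ℕ) < ρ then 1 else 2), x ℓ * α ℓ ^ ((r : ℕ) % ρ) -
        ∑ ℓ ∈ Upsilon ρ ρ₀ ρ₁ 0, x ℓ * α ℓ ^ ((r : ℕ) % ρ) := by
  have e0 : ∀ ℓ ∈ Upsilon ρ ρ₀ ρ₁ 0,
      Mmat ρ ρ₀ ρ₁ α r ℓ * x ℓ = -(x ℓ * α ℓ ^ ((r : ℕ) % ρ)) := fun ℓ hℓ => by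
    simp [Mmat, mem_Upsilon_zero.mp hℓ, mul_comm]
  have e1 : ∀ ℓ ∈ Upsilon ρ ρ₀ ρ₁ 1, Mmat ρ ρ₀ ρ₁ α r ℓ * x ℓ =
      if (r : ℕ) < ρ then x ℓ * α ℓ ^ ((r : ℕ) % ρ) else 0 := fun ℓ hℓ => by
    rw [mem_Upsilon_one] at hℓ
    simp [Mmat, hℓ.2, not_lt.mpr hℓ.1, mul_comm]
  have e2 : ∀ ℓ ∈ Upsilon ρ ρ₀ ρ₁ 2, Mmat ρ ρ₀ ρ₁ α r ℓ * x ℓ =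
      if (r : ℕ) < ρ then 0 else x ℓ * α ℓ ^ ((r : ℕ) % ρ) := fun ℓ hℓ => by
    rw [mem_Upsilon_two] at hℓ
    simp only [Mmat, not_lt.mpr hℓ, not_lt.mpr ((Nat.le_add_right ρ₀ ρ₁).trans hℓ), if_false]
    split_ifs <;> first | omega | ring
  rw [mulVec, dotProduct, sum_univ_eq_sum_Upsilon, Fin.sum_univ_three, Finset.sum_congr rfl e0,
    Finset.sum_congr rfl e1, Finset.sum_congr rfl e2, Finset.sum_neg_distrib]
  by_cases hr : (r : ℕ) < ρ <;> simp [hr] <;> ring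

theorem Mmat_mulVec_eq_zero_iff (x : Fin (2 * ρ) → R) :
    Mmat ρ ρ₀ ρ₁ α *ᵥ x = 0 ↔ ∀ m, blockMoment ρ₀ ρ₁ α x m = blockMoment ρ₀ ρ₁ α x 0 := by
  constructor
  · intro h m
    ext c
    have hc : (c.rev : ℕ) < ρ := c.rev.isLt
    simp only [blockMoment_apply]
    fin_cases m
    · rfl
    · have := congrFun h ⟨c.rev, by omega⟩
      rw [Mmat_mulVec_apply, Pi.zero_apply, sub_eq_zero] at this
      simpa [c.pos, Nat.mod_eq_of_lt hc] using this
    · have := congrFun h ⟨ρ + c.rev, by omega⟩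
      rw [Mmat_mulVec_apply, Pi.zero_apply, sub_eq_zero] at this
      simpa [Nat.mod_eq_of_lt hc] using this
  · intro h
    ext r
    have hρ : 0 < ρ := by have := r.isLt; omega
    have := congrFun (h (if (r : ℕ) < ρ then 1 else 2)) (Fin.rev ⟨r % ρ, Nat.mod_lt _ hρ⟩)
    rw [blockMoment_apply, blockMoment_apply, Fin.rev_rev] at this
    rw [Mmat_mulVec_apply, Pi.zero_apply, sub_eq_zero]
    exact this

-- `bandMatrix (sigmaPoly ρ₀ ρ₁ α m) ρ` is the paper's `E_ρ(α_{Υ_m})`.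
noncomputable def sigmaPoly (ρ₀ ρ₁ : ℕ) (α : Fin (2 * ρ) → R) (m : Fin 3) : R[X] :=
  ∏ ℓ ∈ Upsilon ρ ρ₀ ρ₁ m, (X - C (α ℓ))

theorem natDegree_sigmaPoly [Nontrivial R] (hsum : ρ₀ + ρ₁ + ρ₂ = 2 * ρ) (m : Fin 3) :
    (sigmaPoly ρ₀ ρ₁ α m).natDegree = rhoPart ρ₀ ρ₁ ρ₂ m := by
  rw [sigmaPoly, natDegree_finsetProd_X_sub_C_eq_card, card_Upsilon hsum]

theorem range_Smat [Nontrivial R] (h01 : ρ₀ ≤ ρ₁) (h12 : ρ₁ ≤ ρ₂) (h2 : ρ₂ < ρ)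
    (hsum : ρ₀ + ρ₁ + ρ₂ = 2 * ρ) :
    Set.range (Smat ρ ρ₀ ρ₁ ρ₂ α) = ⋃ m, Set.range (bandMatrix (sigmaPoly ρ₀ ρ₁ α m) ρ) := by
  have hdeg := natDegree_sigmaPoly α hsum
  ext v
  simp only [Set.mem_iUnion]
  constructor
  · rintro ⟨r, rfl⟩
    by_cases h0 : (r : ℕ) < ρ - ρ₀
    · refine ⟨0, ⟨r, by rw [hdeg]; exact h0⟩, ?_⟩
      ext c
      rw [bandMatrix_apply]
      simp [Smat, sigmaCoeff, sigmaPoly, card_Upsilon hsum, rhoPart, h0]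
    by_cases h1 : (r : ℕ) < (ρ - ρ₀) + (ρ - ρ₁)
    · refine ⟨1, ⟨r - (ρ - ρ₀), by rw [hdeg, rhoPart]; simp; omega⟩, ?_⟩
      ext c
      rw [bandMatrix_apply]
      simp [Smat, sigmaCoeff, sigmaPoly, card_Upsilon hsum, rhoPart, h0, h1]
    · refine ⟨2, ⟨r - ((ρ - ρ₀) + (ρ - ρ₁)), by rw [hdeg, rhoPart]; simp; omega⟩, ?_⟩
      ext c
      rw [bandMatrix_apply]
      simp [Smat, sigmaCoeff, sigmaPoly, card_Upsilon hsum, rhoPart, h0, h1]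
  · rintro ⟨m, i, rfl⟩
    have hi : (i : ℕ) < ρ - rhoPart ρ₀ ρ₁ ρ₂ m := i.isLt.trans_eq (by rw [hdeg])
    fin_cases m <;> simp only [rhoPart] at hi <;> norm_num at hi
    · refine ⟨⟨i, by omega⟩, ?_⟩
      ext c
      rw [bandMatrix_apply]
      simp [Smat, sigmaCoeff, sigmaPoly, card_Upsilon hsum, rhoPart, hi]
    · refine ⟨⟨(ρ - ρ₀) + i, by omega⟩, ?_⟩
      have h1 : (ρ - ρ₀) + (i : ℕ) < (ρ - ρ₀) + (ρ - ρ₁) := by omega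
      ext c
      rw [bandMatrix_apply]
      simp [Smat, sigmaCoeff, sigmaPoly, card_Upsilon hsum, rhoPart, h1]
    · refine ⟨⟨(ρ - ρ₀) + (ρ - ρ₁) + i, by omega⟩, ?_⟩
      have h0 : ¬ (ρ - ρ₀) + (ρ - ρ₁) + (i : ℕ) < ρ - ρ₀ := by omega
      ext c
      rw [bandMatrix_apply]
      simp [Smat, sigmaCoeff, sigmaPoly, card_Upsilon hsum, rhoPart, h0]

theorem Smat_mulVec_eq_zero_iff [Nontrivial R] (h01 : ρ₀ ≤ ρ₁) (h12 : ρ₁ ≤ ρ₂) (h2 : ρ₂ < ρ)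
    (hsum : ρ₀ + ρ₁ + ρ₂ = 2 * ρ) (t : Fin ρ → R) :
    Smat ρ ρ₀ ρ₁ ρ₂ α *ᵥ t = 0 ↔ ∀ m, bandMatrix (sigmaPoly ρ₀ ρ₁ α m) ρ *ᵥ t = 0 := by
  have rows : ∀ {ι : Type} [Fintype ι] (A : Matrix ι (Fin ρ) R),
      A *ᵥ t = 0 ↔ ∀ v ∈ Set.range A, v ⬝ᵥ t = 0 := fun A =>
    ⟨fun h _ ⟨i, hi⟩ => hi ▸ congrFun h i, fun h => funext fun i => h _ ⟨i, rfl⟩⟩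
  simp only [rows, range_Smat α h01 h12 h2 hsum, Set.mem_iUnion, forall_exists_index]
  exact forall_comm

theorem bandMatrix_mulVec_blockMoment (x : Fin (2 * ρ) → R) (m : Fin 3) :
    bandMatrix (sigmaPoly ρ₀ ρ₁ α m) ρ *ᵥ blockMoment ρ₀ ρ₁ α x m = 0 := by
  simp only [blockMoment, mulVec_sum, mulVec_smul]
  exact Finset.sum_eq_zero fun ℓ hℓ => by
    rw [sigmaPoly, bandMatrix_prod_X_sub_C_mulVec_revPowers α ρ hℓ, smul_zero]

theorem exists_blockMoment_eq_blockMoment (g : Fin 3 → Fin (2 * ρ) → R) :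
    ∃ x, ∀ m, blockMoment ρ₀ ρ₁ α x m = blockMoment ρ₀ ρ₁ α (g m) m := by
  choose b hb using fun ℓ => (existsUnique_mem_Upsilon (ρ₀ := ρ₀) (ρ₁ := ρ₁) ℓ).exists
  refine ⟨fun ℓ => g (b ℓ) ℓ, fun m => Finset.sum_congr rfl fun ℓ hℓ => ?_⟩
  dsimp only
  rw [(existsUnique_mem_Upsilon ℓ).unique (hb ℓ) hℓ]

theorem Mmat_apply_eq_of_mem {m : Fin 3} {k l : Fin (2 * ρ)} (hk : k ∈ Upsilon ρ ρ₀ ρ₁ m)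
    (hl : l ∈ Upsilon ρ ρ₀ ρ₁ m) (h : α k = α l) (r : Fin (2 * ρ)) :
    Mmat ρ ρ₀ ρ₁ α r k = Mmat ρ ρ₀ ρ₁ α r l := by
  have h0 : (k : ℕ) < ρ₀ ↔ (l : ℕ) < ρ₀ := by fin_cases m <;> simp at hk hl <;> omega
  have h1 : (k : ℕ) < ρ₀ + ρ₁ ↔ (l : ℕ) < ρ₀ + ρ₁ := by fin_cases m <;> simp at hk hl <;> omega
  simp only [Mmat, h, h0, h1]

end Blocks

section Field

variable {Φ : Type*} [Field Φ] {ρ ρ₀ ρ₁ ρ₂ : ℕ} (α : Fin (2 * ρ) → Φ)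

theorem card_Upsilon_le (h01 : ρ₀ ≤ ρ₁) (h12 : ρ₁ ≤ ρ₂) (h2 : ρ₂ < ρ)
    (hsum : ρ₀ + ρ₁ + ρ₂ = 2 * ρ) (m : Fin 3) : (Upsilon ρ ρ₀ ρ₁ m).card ≤ ρ := by
  rw [card_Upsilon hsum]
  fin_cases m <;> simp [rhoPart] <;> omega

theorem injOn_of_det_Mmat_ne_zero (hM : (Mmat ρ ρ₀ ρ₁ α).det ≠ 0) (m : Fin 3) :
    Set.InjOn α (Upsilon ρ ρ₀ ρ₁ m : Set (Fin (2 * ρ))) := fun k hk l hl hkl => by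
  by_contra hne
  exact hM (det_zero_of_column_eq hne (Mmat_apply_eq_of_mem α hk hl hkl))

theorem exists_blockMoment_eq {m : Fin 3} (hcard : (Upsilon ρ ρ₀ ρ₁ m).card ≤ ρ)
    (hinj : Set.InjOn α (Upsilon ρ ρ₀ ρ₁ m : Set (Fin (2 * ρ)))) {t : Fin ρ → Φ}
    (ht : bandMatrix (sigmaPoly ρ₀ ρ₁ α m) ρ *ᵥ t = 0) : ∃ x, blockMoment ρ₀ ρ₁ α x m = t := by
  have : t ∈ LinearMap.ker (bandMatrix (sigmaPoly ρ₀ ρ₁ α m) ρ).mulVecLin := ht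
  rw [sigmaPoly, ← span_revPowers_eq_ker_bandMatrix hinj hcard,
    Submodule.mem_span_image_finset_iff_exists_fun'] at this
  exact this

theorem eq_zero_of_blockMoment_eq_zero {m : Fin 3} (hcard : (Upsilon ρ ρ₀ ρ₁ m).card ≤ ρ)
    (hinj : Set.InjOn α (Upsilon ρ ρ₀ ρ₁ m : Set (Fin (2 * ρ)))) {x : Fin (2 * ρ) → Φ}
    (hx : blockMoment ρ₀ ρ₁ α x m = 0) : ∀ ℓ ∈ Upsilon ρ ρ₀ ρ₁ m, x ℓ = 0 :=
  linearIndepOn_finset_iff.mp (linearIndepOn_revPowers hinj hcard) x hx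

theorem det_Smat_ne_zero_of_det_Mmat_ne_zero (h01 : ρ₀ ≤ ρ₁) (h12 : ρ₁ ≤ ρ₂) (h2 : ρ₂ < ρ)
    (hsum : ρ₀ + ρ₁ + ρ₂ = 2 * ρ) (hM : (Mmat ρ ρ₀ ρ₁ α).det ≠ 0) :
    (Smat ρ ρ₀ ρ₁ ρ₂ α).det ≠ 0 := by
  rw [Ne, ← exists_mulVec_eq_zero_iff]
  rintro ⟨t, ht, hSt⟩
  rw [Smat_mulVec_eq_zero_iff α h01 h12 h2 hsum] at hSt
  choose g hg using fun m => exists_blockMoment_eq α (card_Upsilon_le h01 h12 h2 hsum m)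
    (injOn_of_det_Mmat_ne_zero α hM m) (hSt m)
  obtain ⟨x, hx⟩ := exists_blockMoment_eq_blockMoment α g
  have hMx : Mmat ρ ρ₀ ρ₁ α *ᵥ x = 0 :=
    (Mmat_mulVec_eq_zero_iff α x).mpr fun m => by rw [hx, hx, hg, hg]
  refine ht ?_
  rw [← hg 0, ← hx 0, eq_zero_of_mulVec_eq_zero hM hMx]
  simp [blockMoment]

theorem det_Mmat_ne_zero_of_det_Smat_ne_zero (h01 : ρ₀ ≤ ρ₁) (h12 : ρ₁ ≤ ρ₂) (h2 : ρ₂ < ρ)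
    (hsum : ρ₀ + ρ₁ + ρ₂ = 2 * ρ) (hS : (Smat ρ ρ₀ ρ₁ ρ₂ α).det ≠ 0)
    (hinj : ∀ m, Set.InjOn α (Upsilon ρ ρ₀ ρ₁ m : Set (Fin (2 * ρ)))) :
    (Mmat ρ ρ₀ ρ₁ α).det ≠ 0 := by
  rw [Ne, ← exists_mulVec_eq_zero_iff]
  rintro ⟨x, hx, hMx⟩
  rw [Mmat_mulVec_eq_zero_iff] at hMx
  have ht : blockMoment ρ₀ ρ₁ α x 0 = 0 := eq_zero_of_mulVec_eq_zero hS <|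
    (Smat_mulVec_eq_zero_iff α h01 h12 h2 hsum _).mpr fun m =>
      hMx m ▸ bandMatrix_mulVec_blockMoment α x m
  refine hx (funext fun ℓ => ?_)
  obtain ⟨m, hm, -⟩ := existsUnique_mem_Upsilon (ρ₀ := ρ₀) (ρ₁ := ρ₁) ℓ
  exact eq_zero_of_blockMoment_eq_zero α (card_Upsilon_le h01 h12 h2 hsum m) (hinj m)
    ((hMx m).trans ht) ℓ hm

end Field

theorem stmt17_general {Φ : Type*} [Field Φ] (ρ ρ₀ ρ₁ ρ₂ : ℕ)
    (h01 : ρ₀ ≤ ρ₁) (h12 : ρ₁ ≤ ρ₂)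
    (h2 : ρ₂ < ρ) (hsum : ρ₀ + ρ₁ + ρ₂ = 2 * ρ)
    (α : Fin (2 * ρ) → Φ) :
    (Mmat ρ ρ₀ ρ₁ α).det ≠ 0 ↔
      ((Smat ρ ρ₀ ρ₁ ρ₂ α).det ≠ 0 ∧
        ∀ m : Fin 3, Set.InjOn α (Upsilon ρ ρ₀ ρ₁ m : Set (Fin (2 * ρ)))) :=
  ⟨fun hM => ⟨det_Smat_ne_zero_of_det_Mmat_ne_zero α h01 h12 h2 hsum hM,
      injOn_of_det_Mmat_ne_zero α hM⟩,
    fun ⟨hS, hinj⟩ => det_Mmat_ne_zero_of_det_Smat_ne_zero α h01 h12 h2 hsum hS hinj⟩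

/-- Theorem `Sylvester`: for a field `Φ` and
`α ∈ Φ^{2ρ}`, `det(M_ρ(α)) ≠ 0` if and only if `det(S_ρ(α)) ≠ 0` and, for
each `m ∈ {0,1,2}`, the entries `α_ℓ`, `ℓ ∈ Υ_m`, are pairwise distinct. -/
theorem stmt17 {Φ : Type*} [Field Φ] (ρ ρ₀ ρ₁ ρ₂ : ℕ)
    (hρ : 3 ≤ ρ) (h0 : 2 ≤ ρ₀) (h01 : ρ₀ ≤ ρ₁) (h12 : ρ₁ ≤ ρ₂)
    (h2 : ρ₂ < ρ) (hsum : ρ₀ + ρ₁ + ρ₂ = 2 * ρ)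
    (α : Fin (2 * ρ) → Φ) :
    (Mmat ρ ρ₀ ρ₁ α).det ≠ 0 ↔
      ((Smat ρ ρ₀ ρ₁ ρ₂ α).det ≠ 0 ∧
        ∀ m : Fin 3, Set.InjOn α (Upsilon ρ ρ₀ ρ₁ m : Set (Fin (2 * ρ)))) :=
  stmt17_general ρ ρ₀ ρ₁ ρ₂ h01 h12 h2 hsum α
end

section
/- Let ρ ≥ 3 be an integer, let (ρ_0, ρ_1, ρ_2) be a partition of 2ρ with 2 ≤ ρ_0 ≤ ρ_1 ≤ ρ_2 < ρ, and let Υ_0 = {1,...,ρ_0}, Υ_1 = {ρ_0+1,...,ρ_0+ρ_1}, Υ_2 = {ρ_0+ρ_1+1,...,2ρ}. Let F be a field and let x = (x_1, ..., x_{2ρ}) be indeterminates. For m ∈ {0,1,2}, let σ_m(z) = Π_{ℓ ∈ Υ_m} (z − x_ℓ) = Σ_{j=0}^{ρ_m} σ_{m,j} z^{ρ_m − j} in F[x][z], and let E_ρ(x_{Υ_m}) be the (ρ − ρ_m) × ρ matrix over F[x] whose i-th row (i ∈ {1,...,ρ−ρ_m}) has entries σ_{m,0}, σ_{m,1}, ...,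 σ_{m,ρ_m} in columns i, i+1, ..., i+ρ_m and zeros elsewhere; let S_ρ(x) be the ρ × ρ matrix obtained by stacking E_ρ(x_{Υ_0}), E_ρ(x_{Υ_1}), E_ρ(x_{Υ_2}). Then det(S_ρ(x)) is a homogeneous multivariate polynomial in x_1, ..., x_{2ρ} over F of total degree ρ² − (ρ_0² + ρ_1² + ρ_2²)/2 (equivalently, ρ(ρ−1) − binom(ρ_0,2) − binom(ρ_1,2) − binom(ρ_2,2)). -/
open Polynomial

section Helpers

lemma msum_hom {σ R : Type*} [CommSemiring R] (n : ℕ)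
    (m : Multiset (MvPolynomial σ R)) (h : ∀ p ∈ m, p.IsHomogeneous n) :
    m.sum.IsHomogeneous n := by
  induction m using Multiset.induction with
  | empty => simpa using MvPolynomial.isHomogeneous_zero _ _ n
  | cons a s ih =>
    rw [Multiset.sum_cons]
    exact (h a (Multiset.mem_cons_self a s)).add
      (ih fun p hp => h p (Multiset.mem_cons_of_mem hp))

lemma mprod_hom1 {σ R : Type*} [CommSemiring R]
    (m : Multiset (MvPolynomial σ R)) (h : ∀ p ∈ m, p.IsHomogeneous 1) :
    m.prod.IsHomogeneous (Multiset.card m) := by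
  induction m using Multiset.induction with
  | empty => simpa using MvPolynomial.isHomogeneous_one σ R
  | cons a s ih =>
    rw [Multiset.prod_cons, Multiset.card_cons, add_comm]
    exact ((h a (Multiset.mem_cons_self a s)).mul
      (ih fun p hp => h p (Multiset.mem_cons_of_mem hp)))

lemma coeff_prod_hom {σ' F : Type*} [CommRing F] (s : Finset σ') (j : ℕ)
    (hj : j ≤ s.card) :
    ((∏ ℓ ∈ s, (Polynomial.X - Polynomial.C (MvPolynomial.X ℓ : MvPolynomial σ' F))).coeff
      (s.card - j)).IsHomogeneous j := by
  have hprod : (∏ ℓ ∈ s, (Polynomial.X - Polynomial.C (MvPolynomial.X ℓ : MvPolynomial σ' F)))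
      = ((s.val.map (fun ℓ => (MvPolynomial.X ℓ : MvPolynomial σ' F))).map
          (fun t => Polynomial.X - Polynomial.C t)).prod := by
    rw [Multiset.map_map]; rfl
  have hcard : Multiset.card (s.val.map (fun ℓ => (MvPolynomial.X ℓ : MvPolynomial σ' F)))
      = s.card := by simp
  rw [hprod, Multiset.prod_X_sub_C_coeff _ (by rw [hcard]; omega), hcard]
  have hjj : s.card - (s.card - j) = j := by omega
  rw [hjj]
  have h1 : ((-1 : MvPolynomial σ' F) ^ j).IsHomogeneous 0 := by
    have := MvPolynomial.isHomogeneous_C σ' ((-1 : F) ^ j)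
    rwa [map_pow, map_neg, map_one] at this
  have h2 : ((s.val.map (fun ℓ => (MvPolynomial.X ℓ : MvPolynomial σ' F))).esymm j).IsHomogeneous j := by
    unfold Multiset.esymm
    apply msum_hom
    intro p hp
    rw [Multiset.mem_map] at hp
    obtain ⟨t, ht, rfl⟩ := hp
    rw [Multiset.mem_powersetCard] at ht
    have hall : ∀ q ∈ t, MvPolynomial.IsHomogeneous q 1 := by
      intro q hq
      have := Multiset.mem_of_le ht.1 hq
      rw [Multiset.mem_map] at this
      obtain ⟨i, _, rfl⟩ := this
      exact MvPolynomial.isHomogeneous_X _ _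
    have := mprod_hom1 t hall
    rwa [ht.2] at this
  simpa using h1.mul h2

lemma card0 (ρ ρ₀ ρ₁ : ℕ) (h : ρ₀ < 2 * ρ) : (Upsilon ρ ρ₀ ρ₁ 0).card = ρ₀ := by
  have : Upsilon ρ ρ₀ ρ₁ 0 = Finset.Iio (⟨ρ₀, h⟩ : Fin (2 * ρ)) := by
    ext ℓ; simp [Upsilon, Fin.lt_def]
  rw [this, Fin.card_Iio]

lemma card1 (ρ ρ₀ ρ₁ : ℕ) (h : ρ₀ + ρ₁ < 2 * ρ) : (Upsilon ρ ρ₀ ρ₁ 1).card = ρ₁ := by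
  have : Upsilon ρ ρ₀ ρ₁ 1 = Finset.Ico (⟨ρ₀, by omega⟩ : Fin (2 * ρ)) ⟨ρ₀ + ρ₁, h⟩ := by
    ext ℓ; simp [Upsilon, Fin.lt_def, Fin.le_def]
  rw [this, Fin.card_Ico]; simp

lemma card2 (ρ ρ₀ ρ₁ : ℕ) (h : ρ₀ + ρ₁ < 2 * ρ) :
    (Upsilon ρ ρ₀ ρ₁ 2).card = 2 * ρ - (ρ₀ + ρ₁) := by
  have : Upsilon ρ ρ₀ ρ₁ 2 = Finset.Ici (⟨ρ₀ + ρ₁, h⟩ : Fin (2 * ρ)) := by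
    ext ℓ; simp [Upsilon, Fin.le_def]
  rw [this, Fin.card_Ici]

lemma sigma_hom {F : Type*} [Field F] (ρ ρ₀ ρ₁ ρ₂ : ℕ) (m : Fin 3) (j : ℕ)
    (hcard : (Upsilon ρ ρ₀ ρ₁ m).card = rhoPart ρ₀ ρ₁ ρ₂ m)
    (hj : j ≤ rhoPart ρ₀ ρ₁ ρ₂ m) :
    (sigmaCoeff ρ ρ₀ ρ₁ ρ₂
      (fun ℓ => (MvPolynomial.X ℓ : MvPolynomial (Fin (2 * ρ)) F)) m j).IsHomogeneous j := by
  unfold sigmaCoeff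
  rw [← hcard] at hj ⊢
  exact coeff_prod_hom _ j hj

def oFun (A B : ℕ) (r : ℕ) : ℕ :=
  if r < A then r else if r < A + B then r - A else r - (A + B)

lemma choose_two_mul_two (n : ℕ) : n.choose 2 * 2 = n * (n - 1) := by
  rw [Nat.choose_two_right]
  refine Nat.div_mul_cancel ?_
  rcases n with _ | m
  · simp
  · simpa [Nat.succ_sub_one, mul_comm] using (Nat.even_mul_succ_self m).two_dvd

end Helpers

/-- Lemma `degSylvester`: over the ring of multivariate
polynomials `F[x_1, …, x_{2ρ}]`, `det(S_ρ(x))` is a homogeneous polynomial of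
total degree `ρ(ρ-1) - C(ρ₀,2) - C(ρ₁,2) - C(ρ₂,2)`
(`= ρ² - (ρ₀² + ρ₁² + ρ₂²)/2`). -/
theorem stmt18 {F : Type*} [Field F] (ρ ρ₀ ρ₁ ρ₂ : ℕ)
    (hρ : 3 ≤ ρ) (h0 : 2 ≤ ρ₀) (h01 : ρ₀ ≤ ρ₁) (h12 : ρ₁ ≤ ρ₂)
    (h2 : ρ₂ < ρ) (hsum : ρ₀ + ρ₁ + ρ₂ = 2 * ρ) :
    ((Smat ρ ρ₀ ρ₁ ρ₂
        (fun ℓ => (MvPolynomial.X ℓ : MvPolynomial (Fin (2 * ρ)) F))).det).IsHomogeneous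
      (ρ * (ρ - 1) - (ρ₀.choose 2 + ρ₁.choose 2 + ρ₂.choose 2)) := by
  have h0ρ : ρ₀ < ρ := by omega
  have h1ρ : ρ₁ < ρ := by omega
  -- rho parts
  have hr0 : rhoPart ρ₀ ρ₁ ρ₂ 0 = ρ₀ := rfl
  have hr1 : rhoPart ρ₀ ρ₁ ρ₂ 1 = ρ₁ := rfl
  have hr2 : rhoPart ρ₀ ρ₁ ρ₂ 2 = ρ₂ := rfl
  have hc0 : (Upsilon ρ ρ₀ ρ₁ 0).card = rhoPart ρ₀ ρ₁ ρ₂ 0 := by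
    rw [hr0]; exact card0 ρ ρ₀ ρ₁ (by omega)
  have hc1 : (Upsilon ρ ρ₀ ρ₁ 1).card = rhoPart ρ₀ ρ₁ ρ₂ 1 := by
    rw [hr1]; exact card1 ρ ρ₀ ρ₁ (by omega)
  have hc2 : (Upsilon ρ ρ₀ ρ₁ 2).card = rhoPart ρ₀ ρ₁ ρ₂ 2 := by
    rw [hr2, card2 ρ ρ₀ ρ₁ (by omega)]; omega
  set M := Smat ρ ρ₀ ρ₁ ρ₂
      (fun ℓ => (MvPolynomial.X ℓ : MvPolynomial (Fin (2 * ρ)) F)) with hM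
  -- entry lemmas
  have entry_hom : ∀ r c : Fin ρ,
      (M r c).IsHomogeneous ((c : ℕ) - oFun (ρ - ρ₀) (ρ - ρ₁) (r : ℕ)) := by
    intro r c
    rw [hM]
    unfold Smat oFun
    split_ifs with hb1 hcnd hb2 hcnd2 hcnd3
    · exact sigma_hom ρ ρ₀ ρ₁ ρ₂ 0 _ hc0 (by rw [hr0]; omega)
    · exact MvPolynomial.isHomogeneous_zero _ _ _
    · exact sigma_hom ρ ρ₀ ρ₁ ρ₂ 1 _ hc1 (by rw [hr1]; omega)
    · exact MvPolynomial.isHomogeneous_zero _ _ _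
    · exact sigma_hom ρ ρ₀ ρ₁ ρ₂ 2 _ hc2 (by rw [hr2]; omega)
    · exact MvPolynomial.isHomogeneous_zero _ _ _
  have entry_zero : ∀ r c : Fin ρ, (c : ℕ) < oFun (ρ - ρ₀) (ρ - ρ₁) (r : ℕ) → M r c = 0 := by
    intro r c hlt
    rw [hM]
    unfold Smat
    unfold oFun at hlt
    split_ifs with hb1 hcnd hb2 hcnd2 hcnd3 <;>
      first
        | rfl
        | (exfalso; rw [if_pos hb1] at hlt; omega)
        | (exfalso; rw [if_neg hb1, if_pos hb2] at hlt; omega)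
        | (exfalso; rw [if_neg hb1, if_neg hb2] at hlt; omega)
  -- sum of offsets
  have hOsum : (∑ r : Fin ρ, oFun (ρ - ρ₀) (ρ - ρ₁) (r : ℕ)) * 2
      = (ρ - ρ₀) * ((ρ - ρ₀) - 1) + (ρ - ρ₁) * ((ρ - ρ₁) - 1) + (ρ - ((ρ - ρ₀) + (ρ - ρ₁))) * (ρ - ((ρ - ρ₀) + (ρ - ρ₁)) - 1) := by
    have hAB : (ρ - ρ₀) + (ρ - ρ₁) ≤ ρ := by omega
    have hsplit : (∑ r : Fin ρ, oFun (ρ - ρ₀) (ρ - ρ₁) (r : ℕ)) = ∑ i ∈ Finset.range ρ, oFun (ρ - ρ₀) (ρ - ρ₁) i :=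
      Fin.sum_univ_eq_sum_range (fun i => oFun (ρ - ρ₀) (ρ - ρ₁) i) ρ
    rw [hsplit, Finset.range_eq_Ico,
      ← Finset.sum_Ico_consecutive (fun i => oFun (ρ - ρ₀) (ρ - ρ₁) i) (Nat.zero_le ((ρ - ρ₀) + (ρ - ρ₁))) hAB,
      ← Finset.sum_Ico_consecutive (fun i => oFun (ρ - ρ₀) (ρ - ρ₁) i) (Nat.zero_le (ρ - ρ₀))
        (by omega : (ρ - ρ₀) ≤ (ρ - ρ₀) + (ρ - ρ₁))]
    have p1 : ∑ i ∈ Finset.Ico 0 (ρ - ρ₀), oFun (ρ - ρ₀) (ρ - ρ₁) i = ∑ i ∈ Finset.range (ρ - ρ₀), i := by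
      rw [← Finset.range_eq_Ico]
      refine Finset.sum_congr rfl fun i hi => ?_
      have := Finset.mem_range.mp hi
      unfold oFun; split_ifs <;> omega
    have p2 : ∑ i ∈ Finset.Ico (ρ - ρ₀) ((ρ - ρ₀) + (ρ - ρ₁)), oFun (ρ - ρ₀) (ρ - ρ₁) i = ∑ i ∈ Finset.range (ρ - ρ₁), i := by
      rw [Finset.sum_Ico_eq_sum_range]
      simp only [Nat.add_sub_cancel_left]
      refine Finset.sum_congr rfl fun i hi => ?_
      have := Finset.mem_range.mp hi
      unfold oFun; split_ifs <;> omega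
    have p3 : ∑ i ∈ Finset.Ico ((ρ - ρ₀) + (ρ - ρ₁)) ρ, oFun (ρ - ρ₀) (ρ - ρ₁) i
        = ∑ i ∈ Finset.range (ρ - ((ρ - ρ₀) + (ρ - ρ₁))), i := by
      rw [Finset.sum_Ico_eq_sum_range]
      refine Finset.sum_congr rfl fun i hi => ?_
      have := Finset.mem_range.mp hi
      unfold oFun; split_ifs <;> omega
    rw [p1, p2, p3, add_mul, add_mul, Finset.sum_range_id_mul_two,
      Finset.sum_range_id_mul_two, Finset.sum_range_id_mul_two]
  have hTsum : (∑ i : Fin ρ, (i : ℕ)) * 2 = ρ * (ρ - 1) := by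
    have h' : (∑ i : Fin ρ, (i : ℕ)) = ∑ i ∈ Finset.range ρ, i :=
      Fin.sum_univ_eq_sum_range (fun i => i) ρ
    rw [h']
    exact Finset.sum_range_id_mul_two ρ
  -- key nonlinear identity
  have key : ρ₀ * (ρ₀ - 1) + ρ₁ * (ρ₁ - 1) + ρ₂ * (ρ₂ - 1)
      = ρ * (ρ - 1) + ((ρ - ρ₀) * ((ρ - ρ₀) - 1) + (ρ - ρ₁) * ((ρ - ρ₁) - 1) + (ρ - ((ρ - ρ₀) + (ρ - ρ₁))) * (ρ - ((ρ - ρ₀) + (ρ - ρ₁)) - 1)) := by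
    have hsumZ : (ρ₀ : ℤ) + ρ₁ + ρ₂ = 2 * ρ := by exact_mod_cast hsum
    have e1 : (ρ - ρ₀) + (ρ - ρ₁) = ρ₂ := by omega
    rw [e1]
    zify [show 1 ≤ ρ₀ by omega, show 1 ≤ ρ₁ by omega, show 1 ≤ ρ₂ by omega,
      show 1 ≤ ρ by omega, show ρ₀ ≤ ρ by omega, show ρ₁ ≤ ρ by omega,
      show ρ₂ ≤ ρ by omega, show 1 ≤ ρ - ρ₀ by omega, show 1 ≤ ρ - ρ₁ by omega,
      show 1 ≤ ρ - ρ₂ by omega]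
    linear_combination (2 * (ρ : ℤ) - 2) * hsumZ
  -- determinant expansion
  rw [Matrix.det_apply]
  apply MvPolynomial.IsHomogeneous.sum
  intro σ _
  have hterm : ((∏ i, M (σ i) i) : MvPolynomial (Fin (2 * ρ)) F).IsHomogeneous
      (ρ * (ρ - 1) - (ρ₀.choose 2 + ρ₁.choose 2 + ρ₂.choose 2)) := by
    by_cases hz : ∀ i : Fin ρ, oFun (ρ - ρ₀) (ρ - ρ₁) ((σ i : Fin ρ) : ℕ) ≤ (i : ℕ)
    · have hdeg : (∑ i : Fin ρ, ((i : ℕ) - oFun (ρ - ρ₀) (ρ - ρ₁) ((σ i : Fin ρ) : ℕ))) = ρ * (ρ - 1) - (ρ₀.choose 2 + ρ₁.choose 2 + ρ₂.choose 2) := by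
        have hadd : (∑ i : Fin ρ, ((i : ℕ) - oFun (ρ - ρ₀) (ρ - ρ₁) ((σ i : Fin ρ) : ℕ)))
            + ∑ i : Fin ρ, oFun (ρ - ρ₀) (ρ - ρ₁) ((σ i : Fin ρ) : ℕ) = ∑ i : Fin ρ, (i : ℕ) := by
          rw [← Finset.sum_add_distrib]
          exact Finset.sum_congr rfl fun i _ => Nat.sub_add_cancel (hz i)
        have hperm : (∑ i : Fin ρ, oFun (ρ - ρ₀) (ρ - ρ₁) ((σ i : Fin ρ) : ℕ))
            = ∑ r : Fin ρ, oFun (ρ - ρ₀) (ρ - ρ₁) (r : ℕ) :=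
          Equiv.sum_comp σ (fun r : Fin ρ => oFun (ρ - ρ₀) (ρ - ρ₁) (r : ℕ))
        rw [hperm] at hadd
        -- arithmetic
        have g0 := choose_two_mul_two ρ₀
        have g1 := choose_two_mul_two ρ₁
        have g2 := choose_two_mul_two ρ₂
        omega
      rw [← hdeg]
      exact MvPolynomial.IsHomogeneous.prod _ _ _ fun i _ => entry_hom (σ i) i
    · push_neg at hz
      obtain ⟨i, hi⟩ := hz
      rw [show (∏ i, M (σ i) i) = 0 from
        Finset.prod_eq_zero (Finset.mem_univ i) (entry_zero (σ i) i hi)]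
      exact MvPolynomial.isHomogeneous_zero _ _ _
  rcases Int.units_eq_one_or (Equiv.Perm.sign σ) with hs | hs <;> rw [hs]
  · simpa using hterm
  · simpa [Units.neg_smul, one_smul] using hterm.neg
end
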